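/- arXiv:2004.03861 — 8 statements merged into one kernel-verified Lean document; each statement's English description precedes it below -/
import Mathlib

section
/- For an irreducible symmetric random walk on a countable group G generated by a symmetric probability measure, the limit of P_0(X_{2n} = 0)^{1/(2n)} as n → ∞ exists and equals the spectral radius of the transition operator on ℓ²(G). -/
/-!
Symmetry of `μ` makes `M` self-adjoint, and `(M ^ n) δₖ = ν n (k⁻¹ * ·)`, so that
`ν (2 * n) 1 = ‖(M ^ n) δₖ‖ ^ 2` for every `k`. The limit in question is therefore the growth
rate of `‖(M ^ n) δ₁‖ ^ (1 / n)`, which is at most `‖M‖`. Conversely, for a self-adjoint `T`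
the sequence `n ↦ ‖(T ^ n) x‖` is log-convex, whence `‖T x‖ ^ n * ‖x‖ ≤ ‖(T ^ n) x‖ * ‖x‖ ^ n`.
For finitely supported `x` the triangle inequality and translation invariance bound
`‖(M ^ n) x‖` by a constant times `‖(M ^ n) δ₁‖`, so the growth rate is at least
`‖M x‖ / ‖x‖`, and such quotients come arbitrarily close to `‖M‖`.
-/

open Filter Topology

theorem pow_mul_le_mul_pow_of_sq_le_mul {a : ℕ → ℝ} (ha : ∀ n, 0 ≤ a n)
    (h : ∀ n, a (n + 1) ^ 2 ≤ a n * a (n + 2)) (n : ℕ) :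
    a 1 ^ n * a 0 ≤ a n * a 0 ^ n := by
  have ratio : ∀ n, a n * a 1 ≤ a (n + 1) * a 0 := by
    intro n
    induction n with
    | zero => rw [mul_comm]
    | succ n ih =>
      rcases (ha (n + 1)).eq_or_lt with hzero | hpos
      · rw [← hzero, zero_mul]
        exact mul_nonneg (ha _) (ha 0)
      · refine le_of_mul_le_mul_left ?_ hpos
        calc a (n + 1) * (a (n + 1) * a 1) = a (n + 1) ^ 2 * a 1 := by ring
          _ ≤ a n * a (n + 2) * a 1 := by gcongr; exacts [ha 1, h n]
          _ = a n * a 1 * a (n + 2) := by ring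
          _ ≤ a (n + 1) * a 0 * a (n + 2) := by gcongr; exact ha _
          _ = a (n + 1) * (a (n + 1 + 1) * a 0) := by ring
  induction n with
  | zero => simp
  | succ n ih =>
    calc a 1 ^ (n + 1) * a 0 = a 1 * (a 1 ^ n * a 0) := by ring
      _ ≤ a 1 * (a n * a 0 ^ n) := by gcongr; exact ha 1
      _ = a n * a 1 * a 0 ^ n := by ring
      _ ≤ a (n + 1) * a 0 * a 0 ^ n := mul_le_mul_of_nonneg_right (ratio n) (pow_nonneg (ha 0) n)
      _ = a (n + 1) * a 0 ^ (n + 1) := by ring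

theorem tendsto_mul_pow_rpow_one_div {c q : ℝ} (hc : 0 < c) (hq : 0 ≤ q) :
    Tendsto (fun n : ℕ => (c * q ^ n) ^ (1 / (n : ℝ))) atTop (𝓝 q) := by
  have hroot : Tendsto (fun n : ℕ => c ^ (1 / (n : ℝ)) * q) atTop (𝓝 q) := by
    simpa using (tendsto_const_nhds.rpow tendsto_one_div_atTop_nhds_zero_nat
      (Or.inl hc.ne')).mul_const q
  refine hroot.congr' ?_
  filter_upwards [eventually_ne_atTop 0] with n hn
  rw [Real.mul_rpow hc.le (pow_nonneg hq n), one_div, Real.pow_rpow_inv_natCast hq hn]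

section Density

variable {𝕜 E F : Type*} [RCLike 𝕜] [NormedAddCommGroup E] [NormedSpace 𝕜 E]
  [NormedAddCommGroup F] [NormedSpace 𝕜 F]

theorem ContinuousLinearMap.exists_mem_mul_norm_lt_norm_apply {S : Set E} (hS : Dense S)
    (T : E →L[𝕜] F) {y : ℝ} (hy0 : 0 ≤ y) (hy : y < ‖T‖) : ∃ x ∈ S, y * ‖x‖ < ‖T x‖ := by
  obtain ⟨z, hz1, hzy⟩ := T.exists_lt_apply_of_lt_opNorm hy
  have hopen : IsOpen {x : E | y * ‖x‖ < ‖T x‖} :=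
    isOpen_lt (continuous_const.mul continuous_norm) (T.continuous.norm)
  exact hS.exists_mem_open hopen ⟨z, show y * ‖z‖ < ‖T z‖ by nlinarith [norm_nonneg z]⟩

theorem ContinuousLinearMap.exists_norm_pow_apply_le_of_mem_span {ι : Type*} {T : E →L[𝕜] E}
    {w : ι → E} {v : E} (hw : ∀ i n, ‖(T ^ n) (w i)‖ ≤ ‖(T ^ n) v‖) {x : E}
    (hx : x ∈ Submodule.span 𝕜 (Set.range w)) : ∃ K, ∀ n, ‖(T ^ n) x‖ ≤ K * ‖(T ^ n) v‖ := by
  induction hx using Submodule.span_induction with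
  | mem x hx =>
    obtain ⟨i, rfl⟩ := hx
    exact ⟨1, fun n => (one_mul (‖(T ^ n) v‖)).symm ▸ hw i n⟩
  | zero => exact ⟨0, fun n => by simp⟩
  | add x y _ _ hx hy =>
    obtain ⟨K, hK⟩ := hx
    obtain ⟨L, hL⟩ := hy
    refine ⟨K + L, fun n => ?_⟩
    calc ‖(T ^ n) (x + y)‖ ≤ ‖(T ^ n) x‖ + ‖(T ^ n) y‖ := by
          rw [map_add]; exact norm_add_le _ _
      _ ≤ (K + L) * ‖(T ^ n) v‖ := by linarith [hK n, hL n]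
  | smul a x _ hx =>
    obtain ⟨K, hK⟩ := hx
    refine ⟨‖a‖ * K, fun n => ?_⟩
    rw [map_smul, norm_smul, mul_assoc]
    exact mul_le_mul_of_nonneg_left (hK n) (norm_nonneg a)

end Density

section SymmetricOperator

variable {𝕜 E : Type*} [RCLike 𝕜] [NormedAddCommGroup E] [InnerProductSpace 𝕜 E]
  {T : E →L[𝕜] E}

open scoped InnerProductSpace

theorem LinearMap.IsSymmetric.norm_pow_succ_apply_sq_le (hT : (T : E →ₗ[𝕜] E).IsSymmetric)
    (x : E) (n : ℕ) : ‖(T ^ (n + 1)) x‖ ^ 2 ≤ ‖(T ^ n) x‖ * ‖(T ^ (n + 2)) x‖ := by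
  have hinner : ⟪(T ^ (n + 1)) x, (T ^ (n + 1)) x⟫_𝕜 = ⟪(T ^ n) x, (T ^ (n + 2)) x⟫_𝕜 := by
    simp only [pow_succ', mul_apply_eq_comp]
    exact hT _ _
  calc ‖(T ^ (n + 1)) x‖ ^ 2 = ‖⟪(T ^ (n + 1)) x, (T ^ (n + 1)) x⟫_𝕜‖ := by
        rw [inner_self_eq_norm_sq_to_K, norm_pow, RCLike.norm_ofReal, abs_norm]
    _ ≤ ‖(T ^ n) x‖ * ‖(T ^ (n + 2)) x‖ := hinner ▸ norm_inner_le_norm _ _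

theorem LinearMap.IsSymmetric.norm_apply_pow_mul_le (hT : (T : E →ₗ[𝕜] E).IsSymmetric)
    (x : E) (n : ℕ) : ‖T x‖ ^ n * ‖x‖ ≤ ‖(T ^ n) x‖ * ‖x‖ ^ n := by
  simpa using pow_mul_le_mul_pow_of_sq_le_mul (a := fun n => ‖(T ^ n) x‖)
    (fun _ => norm_nonneg _) (hT.norm_pow_succ_apply_sq_le x) n

theorem LinearMap.IsSymmetric.tendsto_norm_pow_apply_rpow (hT : (T : E →ₗ[𝕜] E).IsSymmetric)
    {S : Submodule 𝕜 E} (hS : Dense (S : Set E)) {v : E} (hv : v ≠ 0)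
    (hdom : ∀ x ∈ S, ∃ K, ∀ n, ‖(T ^ n) x‖ ≤ K * ‖(T ^ n) v‖) :
    Tendsto (fun n : ℕ => ‖(T ^ n) v‖ ^ (1 / (n : ℝ))) atTop (𝓝 ‖T‖) := by
  refine tendsto_order.2 ⟨fun y hy => ?_, fun y hy => ?_⟩
  · rcases lt_or_ge y 0 with hy0 | hy0
    · exact Eventually.of_forall fun n => hy0.trans_le (by positivity)
    obtain ⟨x, hxS, hxy⟩ := T.exists_mem_mul_norm_lt_norm_apply hS hy0 hy
    obtain ⟨K, hK⟩ := hdom x hxS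
    have hx : 0 < ‖x‖ := norm_pos_iff.2 fun h => by simp [h] at hxy
    have hK0 : 0 < K := by
      have := hK 0
      simp only [pow_zero, one_apply_eq_self] at this
      exact pos_of_mul_pos_left (hx.trans_le this) (norm_nonneg v)
    set q := ‖T x‖ / ‖x‖
    have hyq : y < q := (lt_div_iff₀ hx).2 hxy
    have hlower : ∀ n, ‖x‖ / K * q ^ n ≤ ‖(T ^ n) v‖ := fun n => by
      rw [div_pow, div_mul_div_comm, div_le_iff₀ (by positivity)]
      calc ‖x‖ * ‖T x‖ ^ n ≤ ‖(T ^ n) x‖ * ‖x‖ ^ n := by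
            rw [mul_comm]; exact hT.norm_apply_pow_mul_le x n
        _ ≤ K * ‖(T ^ n) v‖ * ‖x‖ ^ n := by gcongr; exact hK n
        _ = ‖(T ^ n) v‖ * (K * ‖x‖ ^ n) := by ring
    filter_upwards [(tendsto_mul_pow_rpow_one_div (div_pos hx hK0)
      (div_nonneg (norm_nonneg _) hx.le)).eventually (lt_mem_nhds hyq)] with n hn
    exact hn.trans_le (Real.rpow_le_rpow (by positivity) (hlower n) (by positivity))
  · filter_upwards [(tendsto_mul_pow_rpow_one_div (norm_pos_iff.2 hv) (norm_nonneg T)).eventually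
      (gt_mem_nhds hy), eventually_ge_atTop 1] with n hn hn1
    refine lt_of_le_of_lt (Real.rpow_le_rpow (norm_nonneg _) ?_ (by positivity)) hn
    calc ‖(T ^ n) v‖ ≤ ‖T ^ n‖ * ‖v‖ := (T ^ n).le_opNorm v
      _ ≤ ‖v‖ * ‖T‖ ^ n := by rw [mul_comm]; gcongr; exact norm_pow_le' T hn1

end SymmetricOperator

open scoped lp

theorem lp.dense_span_single {ι 𝕜 : Type*} [RCLike 𝕜] [DecidableEq ι] :
    Dense (Submodule.span 𝕜 (Set.range fun i : ι => lp.single 2 i (1 : 𝕜)) : Set ℓ²(ι, 𝕜)) := by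
  let b : HilbertBasis ι 𝕜 ℓ²(ι, 𝕜) := default
  have hb : ⇑b = fun i => lp.single 2 i 1 := funext fun i => (b.repr_symm_single i).symm
  rw [Submodule.dense_iff_topologicalClosure_eq_top, ← hb, b.dense_span]

namespace GroupConvolution

variable {G : Type*} [Group G] [DecidableEq G] {μ : G → ℝ} {ν : ℕ → G → ℝ}
  {M : ℓ²(G, ℝ) →L[ℝ] ℓ²(G, ℝ)}

theorem apply_single_apply
    (hM : ∀ f : ℓ²(G, ℝ), ∀ g : G, (M f : G → ℝ) g = ∑' h : G, f h * μ (h⁻¹ * g)) (k g : G) :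
    (M (lp.single 2 k 1) : G → ℝ) g = μ (k⁻¹ * g) := by
  rw [hM, tsum_eq_single k fun h hh => by simp [lp.single_apply, hh]]
  simp [lp.single_apply]

theorem isSelfAdjoint
    (hM : ∀ f : ℓ²(G, ℝ), ∀ g : G, (M f : G → ℝ) g = ∑' h : G, f h * μ (h⁻¹ * g))
    (hsym : ∀ g, μ g⁻¹ = μ g) : IsSelfAdjoint M := by
  rw [ContinuousLinearMap.isSelfAdjoint_iff']
  refine lp.ext_continuousLinearMap ENNReal.ofNat_ne_top fun k =>
    ContinuousLinearMap.ext_ring (lp.ext (funext fun g => ?_))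
  have h := lp.inner_single_left (𝕜 := ℝ) g (1 : ℝ) (M.adjoint (lp.single 2 k 1))
  rw [ContinuousLinearMap.adjoint_inner_right, lp.inner_single_right] at h
  simp only [RCLike.inner_apply, Real.ringHom_apply, one_mul, mul_one] at h
  simp only [ContinuousLinearMap.comp_apply, lp.singleContinuousLinearMap_apply]
  rw [← h, apply_single_apply hM, apply_single_apply hM, ← hsym, mul_inv_rev, inv_inv]

theorem pow_single_apply
    (hM : ∀ f : ℓ²(G, ℝ), ∀ g : G, (M f : G → ℝ) g = ∑' h : G, f h * μ (h⁻¹ * g))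
    (hν0 : ∀ g : G, ν 0 g = if g = 1 then 1 else 0)
    (hν : ∀ n (g : G), ν (n + 1) g = ∑' h : G, ν n h * μ (h⁻¹ * g)) (k : G) (n : ℕ) (g : G) :
    ((M ^ n) (lp.single 2 k 1) : G → ℝ) g = ν n (k⁻¹ * g) := by
  induction n generalizing g with
  | zero =>
    rw [pow_zero, one_apply_eq_self, lp.single_apply, hν0, Pi.single_apply]
    exact if_congr (by rw [inv_mul_eq_one, eq_comm]) rfl rfl
  | succ n ih =>
    rw [pow_succ', mul_apply_eq_comp, hM, hν, ← (Equiv.mulLeft k).tsum_eq]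
    refine tsum_congr fun h => ?_
    simp only [Equiv.coe_mulLeft, ih, inv_mul_cancel_left, mul_inv_rev, mul_assoc]

theorem norm_pow_single_sq
    (hM : ∀ f : ℓ²(G, ℝ), ∀ g : G, (M f : G → ℝ) g = ∑' h : G, f h * μ (h⁻¹ * g))
    (hν0 : ∀ g : G, ν 0 g = if g = 1 then 1 else 0)
    (hν : ∀ n (g : G), ν (n + 1) g = ∑' h : G, ν n h * μ (h⁻¹ * g))
    (hMsa : IsSelfAdjoint M) (k : G) (n : ℕ) :
    ‖(M ^ n) (lp.single 2 k 1)‖ ^ 2 = ν (2 * n) 1 := by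
  have hsymm := (hMsa.pow n).isSymmetric (lp.single 2 k 1) ((M ^ n) (lp.single 2 k 1))
  simp only [ContinuousLinearMap.coe_coe] at hsymm
  rw [← real_inner_self_eq_norm_sq, hsymm, ← mul_apply_eq_comp, ← pow_add,
    lp.inner_single_left, pow_single_apply hM hν0 hν, inv_mul_cancel, two_mul]
  simp

end GroupConvolution

theorem kesten_spectral_radius_general
    {G : Type*} [Group G] [DecidableEq G]
    (μ : G → ℝ)
    (hsym : ∀ g, μ g⁻¹ = μ g)
    (M : lp (fun _ : G => ℝ) 2 →L[ℝ] lp (fun _ : G => ℝ) 2)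
    (hM : ∀ f : lp (fun _ : G => ℝ) 2, ∀ g : G,
      (M f : ∀ _ : G, ℝ) g = ∑' h : G, f h * μ (h⁻¹ * g))
    (ν : ℕ → G → ℝ)
    (hν0 : ∀ g : G, ν 0 g = if g = 1 then 1 else 0)
    (hν : ∀ n (g : G), ν (n + 1) g = ∑' h : G, ν n h * μ (h⁻¹ * g)) :
    Tendsto (fun n : ℕ => (ν (2 * n) 1) ^ (1 / (2 * n : ℝ))) atTop (𝓝 ‖M‖) := by
  have hMsa : IsSelfAdjoint M := GroupConvolution.isSelfAdjoint hM hsym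
  have hnorm := GroupConvolution.norm_pow_single_sq hM hν0 hν hMsa
  have hδ : (lp.single 2 (1 : G) (1 : ℝ) : ℓ²(G, ℝ)) ≠ 0 := by
    simp [← norm_ne_zero_iff, lp.norm_single]
  refine (hMsa.isSymmetric.tendsto_norm_pow_apply_rpow lp.dense_span_single hδ
    fun x hx => M.exists_norm_pow_apply_le_of_mem_span (fun k n => ?_) hx).congr fun n => ?_
  · rw [← pow_le_pow_iff_left₀ (norm_nonneg _) (norm_nonneg _) two_ne_zero, hnorm, hnorm]
  · rw [← hnorm 1 n, ← Real.rpow_natCast, ← Real.rpow_mul (norm_nonneg _)]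
    congr 1
    push_cast
    ring

/-- **Kesten's spectral radius theorem for random walks on groups.** Let `G`
be a countable group and `μ` a symmetric probability measure on `G` whose
support generates `G`. Let `ν n` be the `n`-step distribution of the random
walk started at the identity (so `ν n 1 = P_0(X_n = 0)`), and let `M` be the
convolution (transition) operator on `ℓ²(G)`, whose operator norm `‖M‖` is its
spectral radius (it is self-adjoint). Then
`P_0(X_{2n} = 0)^{1/(2n)} → ‖M‖` as `n → ∞`. -/
theorem kesten_spectral_radius
    {G : Type*} [Group G] [Countable G] [DecidableEq G]
    (μ : G → ℝ)
    (hnonneg : ∀ g, 0 ≤ μ g)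
    (hsum : ∑' g, μ g = 1)
    (hsym : ∀ g, μ g⁻¹ = μ g)
    (hgen : Subgroup.closure {g | μ g ≠ 0} = ⊤)
    (M : lp (fun _ : G => ℝ) 2 →L[ℝ] lp (fun _ : G => ℝ) 2)
    (hM : ∀ f : lp (fun _ : G => ℝ) 2, ∀ g : G,
      (M f : ∀ _ : G, ℝ) g = ∑' h : G, f h * μ (h⁻¹ * g))
    (ν : ℕ → G → ℝ)
    (hν0 : ∀ g : G, ν 0 g = if g = 1 then 1 else 0)
    (hν : ∀ n (g : G), ν (n + 1) g = ∑' h : G, ν n h * μ (h⁻¹ * g)) :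
    Tendsto (fun n : ℕ => (ν (2 * n) 1) ^ (1 / (2 * n : ℝ))) atTop (𝓝 ‖M‖) :=
  kesten_spectral_radius_general μ hsym M hM ν hν0 hν
end

section
/- (Kesten–Stigum, one direction) Let (Zₙ) be a supercritical Galton–Watson process with Z₀ = 1, μ = E(Z₁) ∈ (1, ∞), and E(Z₁ log⁺ Z₁) < ∞. Then the martingale limit W = lim Zₙ/μⁿ satisfies E(W) = 1. -/
/-!
Let `ξ` be distributed as an offspring count and truncate the offspring counts of generation `n` at
`rⁿ`, with `1 < r < μ`. Given `Zₙ`, the increment `Zₙ₊₁ - μ Zₙ` splits into the centred sum of the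
large counts, whose `L¹` norm is at most `2 μⁿ E[ξ; ξ > rⁿ]` by Wald's identity, and the centred sum
of `Zₙ` independent counts bounded by `rⁿ`, whose `L²` norm is at most `√(μⁿ · rⁿ μ)`. Hence
`‖Wₙ₊₁ - Wₙ‖₁ ≤ 2 E[ξ; ξ > rⁿ] / μ + √(r / μ)ⁿ / √μ`, which is summable because
`∑ₙ E[ξ; ξ > rⁿ] ≤ E[ξ log⁺ ξ] / log r + E ξ`. So `(Wₙ)` is Cauchy in `L¹`; by Fatou its `L¹` limit
is the almost sure limit `W`, and `E W = lim E Wₙ = 1`.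
-/

open MeasureTheory ProbabilityTheory Filter Topology
open scoped ENNReal

section L1

variable {α E : Type*} [MeasurableSpace α] {μ : Measure α} [NormedAddCommGroup E]

theorem eLpNorm_sub_le_tsum_of_tendsto_ae {p : ℝ≥0∞} (hp : 1 ≤ p) {F : ℕ → α → E} {f : α → E}
    (hF : ∀ n, AEStronglyMeasurable (F n) μ)
    (hlim : ∀ᵐ x ∂μ, Tendsto (fun n => F n x) atTop (𝓝 (f x)))
    {b : ℕ → ℝ≥0∞} (hb : ∀ n, eLpNorm (F (n + 1) - F n) p μ ≤ b n) (n : ℕ) :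
    eLpNorm (f - F n) p μ ≤ ∑' k, b (k + n) := by
  have hpartial : ∀ m, eLpNorm (F (m + n) - F n) p μ ≤ ∑ k ∈ Finset.range m, b (k + n) := by
    intro m
    induction m with
    | zero => simp
    | succ m ih =>
      calc eLpNorm (F (m + 1 + n) - F n) p μ
          = eLpNorm ((F (m + n + 1) - F (m + n)) + (F (m + n) - F n)) p μ := by
            rw [sub_add_sub_cancel, add_right_comm]
        _ ≤ b (m + n) + ∑ k ∈ Finset.range m, b (k + n) :=
            (eLpNorm_add_le ((hF _).sub (hF _)) ((hF _).sub (hF _)) hp).trans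
              (add_le_add (hb _) ih)
        _ = ∑ k ∈ Finset.range (m + 1), b (k + n) := by rw [Finset.sum_range_succ, add_comm]
  have hlim' : ∀ᵐ x ∂μ, Tendsto (fun m => (F (m + n) - F n) x) atTop (𝓝 ((f - F n) x)) := by
    filter_upwards [hlim] with x hx
    exact (hx.comp (tendsto_add_atTop_nat n)).sub_const _
  calc eLpNorm (f - F n) p μ ≤ liminf (fun m => eLpNorm (F (m + n) - F n) p μ) atTop :=
        Lp.eLpNorm_lim_le_liminf_eLpNorm (fun m => (hF _).sub (hF n)) _ hlim'
    _ ≤ ∑' k, b (k + n) :=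
        liminf_le_of_frequently_le' <| Frequently.of_forall fun m =>
          (hpartial m).trans (ENNReal.sum_le_tsum _)

theorem tendsto_integral_of_tendsto_ae_of_tsum_eLpNorm_sub_ne_top [NormedSpace ℝ E]
    {F : ℕ → α → E} {f : α → E} (hF : ∀ n, Integrable (F n) μ)
    (hlim : ∀ᵐ x ∂μ, Tendsto (fun n => F n x) atTop (𝓝 (f x)))
    (hsum : ∑' n, eLpNorm (F (n + 1) - F n) 1 μ ≠ ∞) :
    Tendsto (fun n => ∫ x, F n x ∂μ) atTop (𝓝 (∫ x, f x ∂μ)) := by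
  refine tendsto_integral_of_L1' f
    (aestronglyMeasurable_of_tendsto_ae _ (fun n => (hF n).1) hlim) (.of_forall hF) ?_
  refine tendsto_of_tendsto_of_tendsto_of_le_of_le tendsto_const_nhds
    (ENNReal.tendsto_sum_nat_add _ hsum) (fun _ => zero_le) fun n => ?_
  rw [eLpNorm_sub_comm]
  exact eLpNorm_sub_le_tsum_of_tendsto_ae le_rfl (fun n => (hF n).1) hlim (fun _ => le_rfl) n

end L1

theorem card_filter_pow_lt_le {r : ℝ} (hr : 1 < r) (x : ℝ) (n : ℕ) :
    (((Finset.range n).filter fun k => r ^ k < x).card : ℝ)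
      ≤ max (Real.log x) 0 / Real.log r + 1 := by
  have hlogr : 0 < Real.log r := Real.log_pos hr
  have hsub : (Finset.range n).filter (fun k => r ^ k < x)
      ⊆ Finset.range ⌈max (Real.log x) 0 / Real.log r⌉₊ := by
    intro k hk
    rw [Finset.mem_filter] at hk
    have hlog : k * Real.log r < Real.log x := by
      rw [← Real.log_pow]
      exact Real.log_lt_log (by positivity) hk.2
    rw [Finset.mem_range, ← Nat.cast_lt (α := ℝ)]
    calc (k : ℝ) < max (Real.log x) 0 / Real.log r := by
          rw [lt_div_iff₀ hlogr]; exact hlog.trans_le (le_max_left _ _)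
      _ ≤ _ := Nat.le_ceil _
  calc (((Finset.range n).filter fun k => r ^ k < x).card : ℝ)
      ≤ ⌈max (Real.log x) 0 / Real.log r⌉₊ := by
        exact_mod_cast (Finset.card_le_card hsub).trans_eq (Finset.card_range _)
    _ ≤ _ := (Nat.ceil_lt_add_one (by positivity)).le

section LlogL

variable {Ω : Type*} [MeasurableSpace Ω] {P : Measure Ω}

theorem summable_setIntegral_pow_lt {ξ : Ω → ℝ} (hξ : Measurable ξ) (hξ0 : 0 ≤ᵐ[P] ξ)
    (hξi : Integrable ξ P) (hlog : Integrable (fun ω => ξ ω * max (Real.log (ξ ω)) 0) P)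
    {r : ℝ} (hr : 1 < r) :
    Summable fun k => ∫ ω in {ω | r ^ k < ξ ω}, ξ ω ∂P := by
  have hset : ∀ k, MeasurableSet {ω | r ^ k < ξ ω} := fun k => measurableSet_lt measurable_const hξ
  refine summable_of_sum_range_le
    (c := ∫ ω, (ξ ω * max (Real.log (ξ ω)) 0 / Real.log r + ξ ω) ∂P)
    (fun k => setIntegral_nonneg_ae (hset k) ?_) fun n => ?_
  · filter_upwards [hξ0] with ω hω _ using hω
  calc ∑ k ∈ Finset.range n, ∫ ω in {ω | r ^ k < ξ ω}, ξ ω ∂P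
      = ∫ ω, ((Finset.range n).filter fun k => r ^ k < ξ ω).card * ξ ω ∂P := by
        simp_rw [← integral_indicator (hset _)]
        rw [← integral_finsetSum _ fun k _ => hξi.indicator (hset k)]
        congr 1
        ext ω
        simp [Set.indicator_apply, Finset.sum_ite]
    _ ≤ ∫ ω, (ξ ω * max (Real.log (ξ ω)) 0 / Real.log r + ξ ω) ∂P := by
        refine integral_mono_of_nonneg ?_ ((hlog.div_const _).add hξi) ?_
        · filter_upwards [hξ0] with ω hω using mul_nonneg (Nat.cast_nonneg _) hω
        · filter_upwards [hξ0] with ω hω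
          convert mul_le_mul_of_nonneg_right (card_filter_pow_lt_le hr (ξ ω) n) hω using 1
          ring

end LlogL

section RandomSum

variable {Ω : Type*} [MeasurableSpace Ω]

theorem measurable_randomSum {M : Type*} [AddCommMonoid M] [MeasurableSpace M]
    [MeasurableAdd₂ M] {N : Ω → ℕ} {Y : ℕ → Ω → M} (hN : Measurable N)
    (hY : ∀ i, Measurable (Y i)) :
    Measurable fun ω => ∑ i ∈ Finset.range (N ω), Y i ω :=
  (measurable_from_prod_countable_right (f := fun p : ℕ × (ℕ → M) => ∑ i ∈ Finset.range p.1, p.2 i)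
    fun k => Finset.measurable_sum (Finset.range k) fun i _ => measurable_pi_apply i).comp
    (hN.prodMk (measurable_pi_lambda _ hY))

variable {P : Measure Ω}

theorem lintegral_comp_eq_lintegral_lintegral_of_indepFun [IsFiniteMeasure P] {α β : Type*}
    [MeasurableSpace α] [MeasurableSpace β] {N : Ω → α} {Y : Ω → β} (hN : Measurable N)
    (hY : Measurable Y) (hNY : IndepFun N Y P) {g : α → β → ℝ≥0∞}
    (hg : Measurable (Function.uncurry g)) :
    ∫⁻ ω, g (N ω) (Y ω) ∂P = ∫⁻ ω, ∫⁻ ω', g (N ω) (Y ω') ∂P ∂P := by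
  calc ∫⁻ ω, g (N ω) (Y ω) ∂P
      = ∫⁻ z, Function.uncurry g z ∂(P.map fun ω => (N ω, Y ω)) :=
        (lintegral_map hg (hN.prodMk hY)).symm
    _ = ∫⁻ x, ∫⁻ y, g x y ∂(P.map Y) ∂(P.map N) := by
        rw [hNY.map_prod_eq_prod_map_map hN.aemeasurable hY.aemeasurable,
          lintegral_prod _ hg.aemeasurable]
        rfl
    _ = ∫⁻ ω, ∫⁻ ω', g (N ω) (Y ω') ∂P ∂P := by
        rw [lintegral_map (f := fun x => ∫⁻ y, g x y ∂(P.map Y)) hg.lintegral_prod_right' hN]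
        exact lintegral_congr fun ω => lintegral_map (hg.comp measurable_prodMk_left) hY

theorem lintegral_randomSum_of_indepFun [IsFiniteMeasure P] {β : Type*} [MeasurableSpace β]
    {N : Ω → ℕ} {Y : ℕ → Ω → β} {ξ : Ω → β} (hN : Measurable N) (hY : ∀ i, Measurable (Y i))
    (hNY : IndepFun N (fun ω i => Y i ω) P) (hYξ : ∀ i, IdentDistrib (Y i) ξ P P)
    {f : β → ℝ≥0∞} (hf : Measurable f) :
    ∫⁻ ω, ∑ i ∈ Finset.range (N ω), f (Y i ω) ∂P
      = (∫⁻ ω, (N ω : ℝ≥0∞) ∂P) * ∫⁻ ω, f (ξ ω) ∂P := by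
  rw [lintegral_comp_eq_lintegral_lintegral_of_indepFun
    (g := fun k y => ∑ i ∈ Finset.range k, f (y i)) hN (measurable_pi_lambda _ hY) hNY
    (measurable_from_prod_countable_right fun k => by
      simp only [Function.uncurry_apply_pair]; fun_prop),
    ← lintegral_mul_const _ (by fun_prop)]
  refine lintegral_congr fun ω => ?_
  dsimp only
  rw [lintegral_finsetSum (f := fun i ω => f (Y i ω)) _ fun i _ => hf.comp (hY i)]
  have hfY : ∀ i, ∫⁻ ω, f (Y i ω) ∂P = ∫⁻ ω, f (ξ ω) ∂P := fun i =>
    ((hYξ i).comp hf).lintegral_eq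
  simp [hfY]

theorem lintegral_enorm_sum_range_sub_sq [IsFiniteMeasure P] {Y : ℕ → Ω → ℝ} {ξ : Ω → ℝ}
    (hξ : MemLp ξ 2 P) (hind : Pairwise fun i j => IndepFun (Y i) (Y j) P)
    (hYξ : ∀ i, IdentDistrib (Y i) ξ P P) (k : ℕ) :
    ∫⁻ ω, ‖∑ i ∈ Finset.range k, Y i ω - k * P[ξ]‖ₑ ^ 2 ∂P
      = k * ENNReal.ofReal (variance ξ P) := by
  have hY : ∀ i, MemLp (Y i) 2 P := fun i => (hYξ i).symm.memLp_snd hξ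
  have hmean : ∫ ω, (∑ i ∈ Finset.range k, Y i) ω ∂P = k * P[ξ] := by
    simp only [Finset.sum_apply]
    rw [integral_finsetSum _ fun i _ => (hY i).integrable one_le_two]
    simp [fun i => (hYξ i).integral_eq]
  have hvar : variance (∑ i ∈ Finset.range k, Y i) P = k * variance ξ P := by
    rw [IndepFun.variance_sum (fun i _ => hY i) fun i _ j _ hij => hind hij]
    simp [fun i => (hYξ i).variance_eq]
  rw [← ENNReal.ofReal_natCast, ← ENNReal.ofReal_mul (Nat.cast_nonneg k), ← hvar,
    ofReal_variance (memLp_finsetSum' _ fun i _ => hY i), evariance, hmean]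
  simp [Finset.sum_apply]

theorem eLpNorm_one_randomSum_sub_le_of_memLp [IsProbabilityMeasure P] {N : Ω → ℕ}
    {Y : ℕ → Ω → ℝ} {ξ : Ω → ℝ} (hN : Measurable N) (hY : ∀ i, Measurable (Y i))
    (hξ : MemLp ξ 2 P) (hind : Pairwise fun i j => IndepFun (Y i) (Y j) P)
    (hYξ : ∀ i, IdentDistrib (Y i) ξ P P) (hNY : IndepFun N (fun ω i => Y i ω) P) :
    eLpNorm (fun ω => ∑ i ∈ Finset.range (N ω), Y i ω - N ω * P[ξ]) 1 P
      ≤ ((∫⁻ ω, (N ω : ℝ≥0∞) ∂P) * ENNReal.ofReal (variance ξ P)) ^ (1 / 2 : ℝ) := by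
  have hsq : ∫⁻ ω, ‖∑ i ∈ Finset.range (N ω), Y i ω - N ω * P[ξ]‖ₑ ^ 2 ∂P
      = (∫⁻ ω, (N ω : ℝ≥0∞) ∂P) * ENNReal.ofReal (variance ξ P) := by
    rw [lintegral_comp_eq_lintegral_lintegral_of_indepFun
      (g := fun k y => ‖∑ i ∈ Finset.range k, y i - k * P[ξ]‖ₑ ^ 2) hN
      (measurable_pi_lambda _ hY) hNY
      (measurable_from_prod_countable_right fun k => by
        simp only [Function.uncurry_apply_pair]; fun_prop),
      ← lintegral_mul_const _ (by fun_prop)]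
    exact lintegral_congr fun ω => lintegral_enorm_sum_range_sub_sq hξ hind hYξ (N ω)
  refine (eLpNorm_le_eLpNorm_of_exponent_le one_le_two
    ((measurable_randomSum hN hY).sub (by fun_prop)).aestronglyMeasurable).trans_eq ?_
  rw [eLpNorm_eq_lintegral_rpow_enorm_toReal two_ne_zero ENNReal.ofNat_ne_top, ← hsq]
  simp

theorem eLpNorm_one_randomSum_sub_le_of_nonneg [IsProbabilityMeasure P] {N : Ω → ℕ}
    {Y : ℕ → Ω → ℝ} {ξ : Ω → ℝ} (hN : Measurable N) (hY : ∀ i, Measurable (Y i))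
    (hY0 : ∀ i ω, 0 ≤ Y i ω) (hξ0 : 0 ≤ᵐ[P] ξ) (hξi : Integrable ξ P)
    (hYξ : ∀ i, IdentDistrib (Y i) ξ P P) (hNY : IndepFun N (fun ω i => Y i ω) P) :
    eLpNorm (fun ω => ∑ i ∈ Finset.range (N ω), Y i ω - N ω * P[ξ]) 1 P
      ≤ 2 * (∫⁻ ω, (N ω : ℝ≥0∞) ∂P) * ENNReal.ofReal P[ξ] := by
  have hm : 0 ≤ P[ξ] := integral_nonneg_of_ae hξ0
  calc eLpNorm (fun ω => ∑ i ∈ Finset.range (N ω), Y i ω - N ω * P[ξ]) 1 P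
      ≤ ∫⁻ ω, ∑ i ∈ Finset.range (N ω), (ENNReal.ofReal (Y i ω) + ENNReal.ofReal P[ξ]) ∂P := by
        rw [eLpNorm_one_eq_lintegral_enorm]
        refine lintegral_mono fun ω => enorm_sub_le.trans_eq ?_
        rw [Finset.sum_add_distrib, ← ENNReal.ofReal_sum_of_nonneg fun i _ => hY0 i ω,
          Real.enorm_of_nonneg (Finset.sum_nonneg fun i _ => hY0 i ω), enorm_mul,
          Real.enorm_of_nonneg hm]
        simp
    _ = 2 * (∫⁻ ω, (N ω : ℝ≥0∞) ∂P) * ENNReal.ofReal P[ξ] := by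
        rw [lintegral_randomSum_of_indepFun hN hY hNY hYξ
            (f := fun x => ENNReal.ofReal x + ENNReal.ofReal P[ξ]) (by fun_prop),
          lintegral_add_right _ measurable_const, lintegral_const, measure_univ,
          ← ofReal_integral_eq_lintegral_ofReal hξi hξ0]
        ring

theorem variance_indicator_Iic_le [IsProbabilityMeasure P] {ξ : Ω → ℝ} (hξ : AEMeasurable ξ P)
    (hξ0 : 0 ≤ᵐ[P] ξ) (hξi : Integrable ξ P) {c : ℝ} (hc : 0 ≤ c) :
    variance (fun ω => (Set.Iic c).indicator id (ξ ω)) P ≤ c * P[ξ] := by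
  have hφξ : AEMeasurable (fun ω => (Set.Iic c).indicator id (ξ ω)) P :=
    (measurable_id.indicator measurableSet_Iic).comp_aemeasurable hξ
  have hle : ∀ᵐ ω ∂P, (Set.Iic c).indicator id (ξ ω) ∈ Set.Icc 0 (min c (ξ ω)) := by
    filter_upwards [hξ0] with ω hω
    by_cases h : ξ ω ≤ c
    · simpa [h] using hω
    · simpa [h, hc] using hω
  set m := ∫ ω, (Set.Iic c).indicator id (ξ ω) ∂P
  have hmξ : m ≤ P[ξ] :=
    integral_mono_ae (hξi.mono hφξ.aestronglyMeasurable <| by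
      filter_upwards with ω using norm_indicator_le_norm_self (f := id) (a := ξ ω)) hξi
      (hle.mono fun ω h => h.2.trans (min_le_right _ _))
  calc variance (fun ω => (Set.Iic c).indicator id (ξ ω)) P ≤ (c - m) * (m - 0) :=
        variance_le_sub_mul_sub (hle.mono fun ω h => ⟨h.1, h.2.trans (min_le_left _ _)⟩) hφξ
    _ ≤ c * P[ξ] := by nlinarith [mul_le_mul_of_nonneg_left hmξ hc, sq_nonneg m]

theorem eLpNorm_one_randomSum_sub_le [IsProbabilityMeasure P] {N : Ω → ℕ} {Y : ℕ → Ω → ℝ}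
    {ξ : Ω → ℝ} (hN : Measurable N) (hY : ∀ i, Measurable (Y i)) (hξ : Measurable ξ)
    (hξ0 : 0 ≤ᵐ[P] ξ) (hξi : Integrable ξ P) (hind : Pairwise fun i j => IndepFun (Y i) (Y j) P)
    (hYξ : ∀ i, IdentDistrib (Y i) ξ P P) (hNY : IndepFun N (fun ω i => Y i ω) P)
    {c : ℝ} (hc : 0 ≤ c) :
    eLpNorm (fun ω => ∑ i ∈ Finset.range (N ω), Y i ω - N ω * P[ξ]) 1 P ≤
      2 * (∫⁻ ω, (N ω : ℝ≥0∞) ∂P) * ENNReal.ofReal (∫ ω in {ω | c < ξ ω}, ξ ω ∂P) +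
        ((∫⁻ ω, (N ω : ℝ≥0∞) ∂P) * ENNReal.ofReal (c * P[ξ])) ^ (1 / 2 : ℝ) := by
  set φ : ℝ → ℝ := (Set.Iic c).indicator id
  set ψ : ℝ → ℝ := (Set.Ioi c).indicator id
  have hφ : Measurable φ := measurable_id.indicator measurableSet_Iic
  have hψ : Measurable ψ := measurable_id.indicator measurableSet_Ioi
  have hψ0 : ∀ x, 0 ≤ ψ x := Set.indicator_nonneg fun x hx => hc.trans hx.le
  have hφψ : ∀ x, φ x + ψ x = x := fun x => by simp [φ, ψ, ← Set.compl_Iic]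
  have hψi : Integrable (fun ω => ψ (ξ ω)) P :=
    hξi.mono (hψ.comp hξ).aestronglyMeasurable <| .of_forall fun ω =>
      norm_indicator_le_norm_self (f := id) (a := ξ ω)
  have hψξ : ∫ ω, ψ (ξ ω) ∂P = ∫ ω in {ω | c < ξ ω}, ξ ω ∂P := by
    rw [← integral_indicator (measurableSet_lt measurable_const hξ)]
    rfl
  have hφξ : MemLp (fun ω => φ (ξ ω)) 2 P :=
    MemLp.of_bound (hφ.comp hξ).aestronglyMeasurable c <| by
      filter_upwards [hξ0] with ω hω
      by_cases h : ξ ω ≤ c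
      · simp [φ, h, abs_of_nonneg hω]
      · simp [φ, h, hc]
  have hsplit : (fun ω => ∑ i ∈ Finset.range (N ω), Y i ω - N ω * P[ξ])
      = (fun ω => ∑ i ∈ Finset.range (N ω), ψ (Y i ω) - N ω * ∫ ω, ψ (ξ ω) ∂P)
        + fun ω => ∑ i ∈ Finset.range (N ω), φ (Y i ω) - N ω * ∫ ω, φ (ξ ω) ∂P := by
    have hmean : P[ξ] = ∫ ω, ψ (ξ ω) ∂P + ∫ ω, φ (ξ ω) ∂P := by
      rw [← integral_add hψi (hφξ.integrable one_le_two)]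
      simp only [add_comm (ψ _), hφψ]
    ext ω
    have hY_split : ∑ i ∈ Finset.range (N ω), Y i ω
        = ∑ i ∈ Finset.range (N ω), ψ (Y i ω) + ∑ i ∈ Finset.range (N ω), φ (Y i ω) := by
      rw [← Finset.sum_add_distrib]
      simp only [add_comm (ψ _), hφψ]
    simp only [Pi.add_apply, hmean, hY_split]
    ring
  have hψS : Measurable fun ω => ∑ i ∈ Finset.range (N ω), ψ (Y i ω) - N ω * ∫ ω, ψ (ξ ω) ∂P :=
    (measurable_randomSum hN fun i => hψ.comp (hY i)).sub (by fun_prop)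
  have hφS : Measurable fun ω => ∑ i ∈ Finset.range (N ω), φ (Y i ω) - N ω * ∫ ω, φ (ξ ω) ∂P :=
    (measurable_randomSum hN fun i => hφ.comp (hY i)).sub (by fun_prop)
  rw [hsplit]
  refine (eLpNorm_add_le hψS.aestronglyMeasurable hφS.aestronglyMeasurable le_rfl).trans
    (add_le_add ?_ ?_)
  · rw [← hψξ]
    exact eLpNorm_one_randomSum_sub_le_of_nonneg hN (fun i => hψ.comp (hY i))
      (fun i ω => hψ0 _) (.of_forall fun ω => hψ0 _) hψi (fun i => (hYξ i).comp hψ)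
      (hNY.comp measurable_id (measurable_pi_lambda _ fun i => hψ.comp (measurable_pi_apply i)))
  · refine (eLpNorm_one_randomSum_sub_le_of_memLp hN (fun i => hφ.comp (hY i)) hφξ
      (fun i j hij => (hind hij).comp hφ hφ) (fun i => (hYξ i).comp hφ)
      (hNY.comp measurable_id
        (measurable_pi_lambda _ fun i => hφ.comp (measurable_pi_apply i)))).trans ?_
    gcongr
    exact variance_indicator_Iic_le hξ.aemeasurable hξ0 hξi hc

end RandomSum

theorem Real.sqrt_pow {x : ℝ} (hx : 0 ≤ x) (n : ℕ) : √(x ^ n) = √x ^ n := by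
  induction n with
  | zero => simp
  | succ n ih => rw [pow_succ, pow_succ, Real.sqrt_mul (pow_nonneg hx n), ih]

section GaltonWatson

variable {Ω : Type*}

structure IsGaltonWatson [MeasurableSpace Ω] (P : Measure Ω) (X : ℕ → ℕ → Ω → ℕ)
    (Z : ℕ → Ω → ℕ) : Prop where
  measurable : ∀ n i, Measurable (X n i)
  indep : iIndepFun (fun p : ℕ × ℕ => X p.1 p.2) P
  identDistrib : ∀ n i, IdentDistrib (X n i) (X 0 0) P P
  zero : ∀ ω, Z 0 ω = 1
  succ : ∀ n ω, Z (n + 1) ω = ∑ i ∈ Finset.range (Z n ω), X n i ω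

abbrev pastGenerations (X : ℕ → ℕ → Ω → ℕ) (n : ℕ) : MeasurableSpace Ω :=
  ⨆ p ∈ {q : ℕ × ℕ | q.1 < n}, MeasurableSpace.comap (X p.1 p.2) inferInstance

theorem measurable_pastGenerations {X : ℕ → ℕ → Ω → ℕ} {Z : ℕ → Ω → ℕ}
    (hZ0 : ∀ ω, Z 0 ω = 1) (hZ : ∀ n ω, Z (n + 1) ω = ∑ i ∈ Finset.range (Z n ω), X n i ω)
    (n : ℕ) : Measurable[pastGenerations X n] (Z n) := by
  induction n with
  | zero =>
    rw [funext hZ0]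
    exact measurable_const
  | succ n ih =>
    have hX : ∀ i, Measurable[pastGenerations X (n + 1)] (X n i) := fun i =>
      Measurable.of_comap_le <| le_iSup₂ (f := fun p (_ : p ∈ {q : ℕ × ℕ | q.1 < n + 1}) =>
        MeasurableSpace.comap (X p.1 p.2) inferInstance) (n, i) n.lt_succ_self
    have hmono : pastGenerations X n ≤ pastGenerations X (n + 1) :=
      biSup_mono fun p hp => Nat.lt_succ_of_lt hp
    rw [funext (hZ n)]
    exact @measurable_randomSum Ω (pastGenerations X (n + 1)) ℕ _ _ _ _ _
      (ih.mono hmono le_rfl) hX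

namespace IsGaltonWatson

variable [MeasurableSpace Ω] {P : Measure Ω} {X : ℕ → ℕ → Ω → ℕ} {Z : ℕ → Ω → ℕ}

theorem measurable_generation (h : IsGaltonWatson P X Z) (n : ℕ) : Measurable (Z n) :=
  (measurable_pastGenerations h.zero h.succ n).mono
    (iSup₂_le fun p _ => (h.measurable p.1 p.2).comap_le) le_rfl

theorem indepFun_row (h : IsGaltonWatson P X Z) (n : ℕ) :
    IndepFun (Z n) (fun ω i => X n i ω) P := by
  have hI := indep_iSup_of_disjoint (fun p => (h.measurable p.1 p.2).comap_le)
    ((iIndepFun_iff_iIndep _ _ _).1 h.indep)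
    (S := {q : ℕ × ℕ | q.1 < n}) (T := {q | q.1 = n})
    (Set.disjoint_left.2 fun p hp hq => hp.ne hq)
  refine indep_of_indep_of_le_right (indep_of_indep_of_le_left hI
    (measurable_pastGenerations h.zero h.succ n).comap_le) (Measurable.comap_le ?_)
  refine @measurable_pi_lambda Ω ℕ (fun _ => ℕ)
    (⨆ p ∈ {q : ℕ × ℕ | q.1 = n}, MeasurableSpace.comap (X p.1 p.2) inferInstance) _ _
    fun i => Measurable.of_comap_le ?_
  exact le_iSup₂ (f := fun p (_ : p ∈ {q : ℕ × ℕ | q.1 = n}) =>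
    MeasurableSpace.comap (X p.1 p.2) inferInstance) (n, i) rfl

theorem lintegral_generation (h : IsGaltonWatson P X Z) [IsProbabilityMeasure P]
    (hint : Integrable (fun ω => (X 0 0 ω : ℝ)) P) (n : ℕ) :
    ∫⁻ ω, (Z n ω : ℝ≥0∞) ∂P = ENNReal.ofReal (∫ ω, (X 0 0 ω : ℝ) ∂P) ^ n := by
  induction n with
  | zero => simp [h.zero]
  | succ n ih =>
    simp_rw [h.succ n, Nat.cast_sum]
    rw [lintegral_randomSum_of_indepFun (h.measurable_generation n) (h.measurable n)
      (h.indepFun_row n) (h.identDistrib n) measurable_from_top, ih, pow_succ,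
      ofReal_integral_eq_lintegral_ofReal hint (.of_forall fun ω => Nat.cast_nonneg _)]
    simp

theorem integrable_generation (h : IsGaltonWatson P X Z) [IsProbabilityMeasure P]
    (hint : Integrable (fun ω => (X 0 0 ω : ℝ)) P) (n : ℕ) :
    Integrable (fun ω => (Z n ω : ℝ)) P := by
  have hfin : ∫⁻ ω, (Z n ω : ℝ≥0∞) ∂P ≠ ∞ := by simp [h.lintegral_generation hint n]
  simpa using integrable_toReal_of_lintegral_ne_top
    (measurable_from_top.comp (h.measurable_generation n)).aemeasurable hfin

theorem integral_generation (h : IsGaltonWatson P X Z) [IsProbabilityMeasure P]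
    (hint : Integrable (fun ω => (X 0 0 ω : ℝ)) P) (n : ℕ) :
    ∫ ω, (Z n ω : ℝ) ∂P = (∫ ω, (X 0 0 ω : ℝ) ∂P) ^ n := by
  have := integral_toReal (μ := P) (f := fun ω => (Z n ω : ℝ≥0∞))
    (measurable_from_top.comp (h.measurable_generation n)).aemeasurable
    (.of_forall fun ω => by simp)
  simp only [ENNReal.toReal_natCast] at this
  rw [this, h.lintegral_generation hint n, ENNReal.toReal_pow, ENNReal.toReal_ofReal
    (integral_nonneg fun ω => Nat.cast_nonneg _)]

theorem eLpNorm_succ_sub_le (h : IsGaltonWatson P X Z) [IsProbabilityMeasure P]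
    (hint : Integrable (fun ω => (X 0 0 ω : ℝ)) P) {μ : ℝ} (hμ : 0 < μ)
    (hmean : ∫ ω, (X 0 0 ω : ℝ) ∂P = μ) {r : ℝ} (hr : 0 ≤ r) (n : ℕ) :
    eLpNorm (fun ω => (Z (n + 1) ω : ℝ) / μ ^ (n + 1) - Z n ω / μ ^ n) 1 P ≤
      ENNReal.ofReal (2 / μ * ∫ ω in {ω | r ^ n < (X 0 0 ω : ℝ)}, (X 0 0 ω : ℝ) ∂P
        + √(r / μ) ^ n / √μ) := by
  have hXm : ∀ i, Measurable fun ω => (X n i ω : ℝ) := fun i =>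
    measurable_from_top.comp (h.measurable n i)
  have hrs := eLpNorm_one_randomSum_sub_le (ξ := fun ω => (X 0 0 ω : ℝ))
    (h.measurable_generation n) hXm
    (measurable_from_top.comp (h.measurable 0 0)) (.of_forall fun ω => Nat.cast_nonneg _) hint
    (fun i j hij => (h.indep.indepFun (i := (n, i)) (j := (n, j)) (by simpa using hij)).comp
      measurable_from_top measurable_from_top)
    (fun i => (h.identDistrib n i).comp measurable_from_top)
    ((h.indepFun_row n).comp measurable_id
      (measurable_pi_lambda _ fun i => measurable_from_top.comp (measurable_pi_apply i)))
    (pow_nonneg hr n)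
  rw [h.lintegral_generation hint n, hmean] at hrs
  set e := ∫ ω in {ω | r ^ n < (X 0 0 ω : ℝ)}, (X 0 0 ω : ℝ) ∂P
  have he : 0 ≤ e := setIntegral_nonneg_ae
    (measurableSet_lt measurable_const (measurable_from_top.comp (h.measurable 0 0)))
    (.of_forall fun ω _ => Nat.cast_nonneg _)
  have hrescale : (fun ω => (Z (n + 1) ω : ℝ) / μ ^ (n + 1) - Z n ω / μ ^ n)
      = (μ ^ (n + 1))⁻¹ • fun ω => ∑ i ∈ Finset.range (Z n ω), (X n i ω : ℝ) - Z n ω * μ := by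
    ext ω
    simp only [h.succ n, Nat.cast_sum, Pi.smul_apply, smul_eq_mul]
    field_simp
    ring
  rw [hrescale, eLpNorm_const_smul]
  calc ‖(μ ^ (n + 1))⁻¹‖ₑ
        * eLpNorm (fun ω => ∑ i ∈ Finset.range (Z n ω), (X n i ω : ℝ) - Z n ω * μ) 1 P
      ≤ ENNReal.ofReal (μ ^ (n + 1))⁻¹ * (2 * ENNReal.ofReal μ ^ n * ENNReal.ofReal e
          + (ENNReal.ofReal μ ^ n * ENNReal.ofReal (r ^ n * μ)) ^ (1 / 2 : ℝ)) := by
        rw [Real.enorm_of_nonneg (by positivity)]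
        gcongr
    _ = ENNReal.ofReal ((μ ^ (n + 1))⁻¹ * (2 * μ ^ n * e + √(μ ^ n * (r ^ n * μ)))) := by
        rw [← ENNReal.ofReal_pow hμ.le, ← ENNReal.ofReal_mul (by positivity),
          ENNReal.ofReal_rpow_of_nonneg (by positivity) (by norm_num), ← Real.sqrt_eq_rpow,
          ← ENNReal.ofReal_ofNat 2, ← ENNReal.ofReal_mul (by norm_num),
          ← ENNReal.ofReal_mul (by positivity),
          ← ENNReal.ofReal_add (by positivity) (by positivity),
          ← ENNReal.ofReal_mul (by positivity)]
    _ = _ := by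
        congr 1
        rw [Real.sqrt_mul (by positivity), Real.sqrt_mul (by positivity), Real.sqrt_pow hμ.le,
          Real.sqrt_pow hr, Real.sqrt_div' _ hμ.le, div_pow]
        have hsμ : 0 < √μ := Real.sqrt_pos.2 hμ
        have hμs : μ = √μ ^ 2 := (Real.sq_sqrt hμ.le).symm
        generalize √μ = s at hsμ hμs ⊢
        subst hμs
        field_simp
        ring

theorem tsum_eLpNorm_succ_sub_ne_top (h : IsGaltonWatson P X Z) [IsProbabilityMeasure P]
    (hint : Integrable (fun ω => (X 0 0 ω : ℝ)) P) {μ : ℝ} (hμ : 1 < μ)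
    (hmean : ∫ ω, (X 0 0 ω : ℝ) ∂P = μ)
    (hLlogL : Integrable (fun ω => (X 0 0 ω : ℝ) * max (Real.log (X 0 0 ω)) 0) P) :
    ∑' n, eLpNorm (fun ω => (Z (n + 1) ω : ℝ) / μ ^ (n + 1) - Z n ω / μ ^ n) 1 P ≠ ∞ := by
  have hμ0 : 0 < μ := one_pos.trans hμ
  -- any truncation base `r` with `1 < r < μ` would do
  have hr : 1 < (1 + μ) / 2 := by linarith
  have hq : √((1 + μ) / 2 / μ) < 1 :=
    (Real.sqrt_lt' one_pos).2 (by rw [one_pow, div_lt_one hμ0]; linarith)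
  have hX : Measurable fun ω => (X 0 0 ω : ℝ) := measurable_from_top.comp (h.measurable 0 0)
  set b : ℕ → ℝ := fun n => 2 / μ * ∫ ω in {ω | ((1 + μ) / 2) ^ n < (X 0 0 ω : ℝ)}, (X 0 0 ω : ℝ) ∂P
    + √((1 + μ) / 2 / μ) ^ n / √μ
  have hb0 : ∀ n, 0 ≤ b n := fun n => add_nonneg
    (mul_nonneg (by positivity) (setIntegral_nonneg_ae (measurableSet_lt measurable_const hX)
      (.of_forall fun ω _ => Nat.cast_nonneg _)))
    (by positivity)
  have hb : Summable b :=
    ((summable_setIntegral_pow_lt hX (.of_forall fun ω => Nat.cast_nonneg _) hint hLlogL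
      hr).mul_left _).add ((summable_geometric_of_lt_one (Real.sqrt_nonneg _) hq).div_const _)
  exact ne_top_of_le_ne_top (ENNReal.ofReal_tsum_of_nonneg hb0 hb ▸ ENNReal.ofReal_ne_top)
    (ENNReal.tsum_le_tsum fun n => h.eLpNorm_succ_sub_le hint hμ0 hmean (by linarith) n)

end IsGaltonWatson

end GaltonWatson

/-- **Kesten–Stigum theorem (sufficiency direction).** For a supercritical
Galton–Watson process `Z` with `Z₀ = 1`, mean offspring `μ ∈ (1, ∞)`, and
`E(Z₁ log⁺ Z₁) < ∞`, the almost-sure limit `W` of the martingale `Zₙ / μⁿ`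
satisfies `E(W) = 1`. -/
theorem kesten_stigum
    {Ω : Type*} [MeasurableSpace Ω] (P : Measure Ω) [IsProbabilityMeasure P]
    (X : ℕ → ℕ → Ω → ℕ) (μ : ℝ) (hμ : 1 < μ)
    (hmeas : ∀ n i, Measurable (X n i))
    (hindep : iIndepFun (m := fun _ => inferInstance) (fun p : ℕ × ℕ => X p.1 p.2) P)
    (hident : ∀ n i, IdentDistrib (X n i) (X 0 0) P P)
    (hint : Integrable (fun ω => (X 0 0 ω : ℝ)) P)
    (hmean : ∫ ω, (X 0 0 ω : ℝ) ∂P = μ)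
    (hLlogL : Integrable (fun ω => (X 0 0 ω : ℝ) * max (Real.log (X 0 0 ω)) 0) P)
    (Z : ℕ → Ω → ℕ)
    (hZ0 : ∀ ω, Z 0 ω = 1)
    (hZrec : ∀ n ω, Z (n + 1) ω = ∑ i ∈ Finset.range (Z n ω), X n i ω)
    (W : Ω → ℝ)
    (hW : ∀ᵐ ω ∂P, Tendsto (fun n => (Z n ω : ℝ) / μ ^ n) atTop (𝓝 (W ω))) :
    ∫ ω, W ω ∂P = 1 := by
  have hGW : IsGaltonWatson P X Z := ⟨hmeas, hindep, hident, hZ0, hZrec⟩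
  have hlim := tendsto_integral_of_tendsto_ae_of_tsum_eLpNorm_sub_ne_top
    (F := fun n ω => (Z n ω : ℝ) / μ ^ n) (fun n => (hGW.integrable_generation hint n).div_const _)
    hW (hGW.tsum_eLpNorm_succ_sub_ne_top hint hμ hmean hLlogL)
  have hone : ∀ n, ∫ ω, (Z n ω : ℝ) / μ ^ n ∂P = 1 := fun n => by
    rw [integral_div, hGW.integral_generation hint n, hmean, div_self (by positivity)]
  simp only [hone] at hlim
  exact tendsto_nhds_unique hlim tendsto_const_nhds
end

section
/- (Kolmogorov's estimate) Let (Zₙ) be a critical Galton–Watson process with Z₀ = 1, E(Z₁) = 1, and σ² = Var(Z₁) ∈ (0, ∞). Then n · P(Zₙ > 0) → 2/σ² as n → ∞. -/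
open MeasureTheory ProbabilityTheory Filter Topology Finset ENNReal

set_option linter.unusedSectionVars false
set_option linter.unusedVariables false
set_option maxHeartbeats 1000000

section Aux

noncomputable def auxC (k : ℕ) (s : ℝ) : ℝ := ∑ j ∈ range k, ∑ i ∈ range j, s ^ i

lemma auxC_succ (k : ℕ) (s : ℝ) : auxC (k+1) s = auxC k s + ∑ i ∈ range k, s ^ i := by
  simp [auxC, Finset.sum_range_succ]

lemma auxC_id (k : ℕ) (s : ℝ) : s ^ k - 1 - (s - 1) * k = (1 - s)^2 * auxC k s := by
  induction k with
  | zero => simp [auxC]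
  | succ k ih =>
    have hg : (∑ i ∈ range k, s ^ i) * (s - 1) = s ^ k - 1 := geom_sum_mul s k
    rw [auxC_succ]
    push_cast
    linear_combination ih + (1 - s) * hg

lemma auxC_one (k : ℕ) : auxC k 1 = (((k:ℝ) - 1)^2 + ((k:ℝ) - 1)) / 2 := by
  induction k with
  | zero => norm_num [auxC]
  | succ k ih =>
    rw [auxC_succ, ih]
    push_cast
    simp
    ring

lemma auxC_nonneg (k : ℕ) {s : ℝ} (h0 : 0 ≤ s) : 0 ≤ auxC k s := by
  apply Finset.sum_nonneg; intro j _
  apply Finset.sum_nonneg; intro i _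
  positivity

lemma auxC_le_auxC_one (k : ℕ) {s : ℝ} (h0 : 0 ≤ s) (h1 : s ≤ 1) : auxC k s ≤ auxC k 1 := by
  apply Finset.sum_le_sum; intro j _
  apply Finset.sum_le_sum; intro i _
  calc s ^ i ≤ 1 := pow_le_one₀ h0 h1
  _ = 1 ^ i := (one_pow i).symm

lemma auxC_ge_one {k : ℕ} (hk : 2 ≤ k) {s : ℝ} (h0 : 0 ≤ s) : 1 ≤ auxC k s := by
  have h1 : (1:ℝ) ≤ ∑ i ∈ range 1, s ^ i := by simp
  calc (1:ℝ) ≤ ∑ i ∈ range 1, s ^ i := h1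
  _ ≤ auxC k s := by
      apply Finset.single_le_sum (f := fun j => ∑ i ∈ range j, s ^ i)
      · intro j _; apply Finset.sum_nonneg; intro i _; positivity
      · simp; omega

lemma auxC_continuous (k : ℕ) : Continuous (auxC k) := by
  unfold auxC
  exact continuous_finset_sum _ (fun j _ => continuous_finset_sum _ (fun i _ => continuous_pow i))

/-- The purely analytic part of Kolmogorov's estimate. -/
lemma gw_analysis (σ2 : ℝ) (hσ2 : 0 < σ2) (p : ℕ → ℝ) (hp0 : ∀ k, 0 ≤ p k)
    (hp : Summable p) (hps : ∑' k, p k = 1)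
    (hp1 : Summable fun k : ℕ => (k:ℝ) * p k) (hp1s : ∑' k : ℕ, (k:ℝ) * p k = 1)
    (hp2 : Summable fun k : ℕ => ((k:ℝ)-1)^2 * p k) (hp2s : ∑' k : ℕ, ((k:ℝ)-1)^2 * p k = σ2)
    (r : ℕ → ℝ) (hr0 : r 0 = 0) (hrec : ∀ n, r (n+1) = ∑' k, p k * (r n)^k) :
    Tendsto (fun n : ℕ => (n : ℝ) * (1 - r n)) atTop (𝓝 (2 / σ2)) := by
  -- summability of linear moment differences
  have hlin : Summable fun k : ℕ => ((k:ℝ)-1) * p k :=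
    (hp1.sub hp).congr (fun k => by ring)
  have hlins : ∑' k : ℕ, ((k:ℝ)-1) * p k = 0 := by
    have h := Summable.tsum_sub hp1 hp
    rw [hp1s, hps, sub_self] at h
    rw [← h]
    exact tsum_congr fun k => by ring
  -- summable bound for auxC sums
  have hB : Summable fun k => p k * auxC k 1 := by
    apply Summable.congr (((hp2.add hlin).div_const 2))
    intro k
    rw [auxC_one]
    ring
  have hBs : ∑' k, p k * auxC k 1 = σ2 / 2 := by
    have h1 : ∑' k : ℕ, (((k:ℝ)-1)^2 * p k + ((k:ℝ)-1) * p k) = σ2 := by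
      rw [Summable.tsum_add hp2 hlin, hp2s, hlins, add_zero]
    calc ∑' k, p k * auxC k 1 = ∑' k : ℕ, (((k:ℝ)-1)^2 * p k + ((k:ℝ)-1) * p k) / 2 :=
        tsum_congr (fun k => by rw [auxC_one]; ring)
    _ = σ2 / 2 := by rw [tsum_div_const, h1]
  set f : ℝ → ℝ := fun s => ∑' k, p k * s ^ k with hfdef
  have hfs : ∀ {s : ℝ}, 0 ≤ s → s ≤ 1 → Summable (fun k => p k * s ^ k) := by
    intro s h0 h1
    apply Summable.of_nonneg_of_le (fun k => mul_nonneg (hp0 k) (pow_nonneg h0 k))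
      (fun k => ?_) hp
    calc p k * s ^ k ≤ p k * 1 :=
          mul_le_mul_of_nonneg_left (pow_le_one₀ h0 h1) (hp0 k)
    _ = p k := mul_one _
  obtain ⟨k0, hk0two, hk0pos⟩ : ∃ k, 2 ≤ k ∧ 0 < p k := by
    by_contra hno
    push_neg at hno
    have hzero : ∀ k, 2 ≤ k → p k = 0 := fun k hk => le_antisymm (hno k hk) (hp0 k)
    have t1 : ∑' k : ℕ, ((k:ℝ)-1) * p k = ∑ k ∈ range 2, ((k:ℝ)-1) * p k := by
      apply tsum_eq_sum
      intro k hk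
      rw [hzero k (by simp at hk; omega), mul_zero]
    have t2 : ∑' k : ℕ, ((k:ℝ)-1)^2 * p k = ∑ k ∈ range 2, ((k:ℝ)-1)^2 * p k := by
      apply tsum_eq_sum
      intro k hk
      rw [hzero k (by simp at hk; omega), mul_zero]
    rw [hlins] at t1
    rw [hp2s] at t2
    simp [Finset.sum_range_succ] at t1 t2
    nlinarith [hσ2, t1, t2]
  have hf_lt_one : ∀ {s : ℝ}, 0 ≤ s → s < 1 → f s < 1 := by
    intro s h0 h1
    rw [show (1:ℝ) = ∑' k, p k from hps.symm]
    refine Summable.tsum_lt_tsum_of_nonneg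
      (fun k => mul_nonneg (hp0 k) (pow_nonneg h0 k)) (fun k => ?_) (i := k0) ?_ hp
    · calc p k * s ^ k ≤ p k * 1 :=
            mul_le_mul_of_nonneg_left (pow_le_one₀ h0 h1.le) (hp0 k)
      _ = p k := mul_one _
    · have hlt : s ^ k0 < 1 := pow_lt_one₀ h0 h1 (by omega)
      calc p k0 * s ^ k0 < p k0 * 1 := by
            exact mul_lt_mul_of_pos_left hlt hk0pos
      _ = p k0 := mul_one _
  set T : ℝ → ℝ := fun s => ∑' k, p k * auxC k s with hTdef
  have hTs : ∀ {s : ℝ}, 0 ≤ s → s ≤ 1 → Summable (fun k => p k * auxC k s) := by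
    intro s h0 h1
    exact Summable.of_nonneg_of_le (fun k => mul_nonneg (hp0 k) (auxC_nonneg k h0))
      (fun k => mul_le_mul_of_nonneg_left (auxC_le_auxC_one k h0 h1) (hp0 k)) hB
  have hT_lb : ∀ {s : ℝ}, 0 ≤ s → s ≤ 1 → p k0 ≤ T s := by
    intro s h0 h1
    calc p k0 = p k0 * 1 := (mul_one _).symm
    _ ≤ p k0 * auxC k0 s :=
        mul_le_mul_of_nonneg_left (auxC_ge_one hk0two h0) (le_of_lt hk0pos)
    _ ≤ T s := Summable.le_tsum (hTs h0 h1) k0 (fun j _ => mul_nonneg (hp0 j) (auxC_nonneg j h0))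
  have hkey : ∀ {s : ℝ}, 0 ≤ s → s ≤ 1 → f s - s = (1 - s)^2 * T s := by
    intro s h0 h1
    have S1 : Summable fun k => p k * s ^ k - p k := (hfs h0 h1).sub hp
    have hsum1 : ∑' k, ((p k * s ^ k - p k) - (s-1)*((k:ℝ) * p k)) = f s - 1 - (s-1) := by
      rw [Summable.tsum_sub S1 (hp1.mul_left (s-1)), Summable.tsum_sub (hfs h0 h1) hp, hps,
        tsum_mul_left, hp1s, mul_one]
    have hsum2 : ∑' k, ((p k * s ^ k - p k) - (s-1)*((k:ℝ) * p k)) = (1-s)^2 * T s := by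
      rw [show (fun k => (p k * s^k - p k) - (s-1)*((k:ℝ)*p k))
          = fun k => (1-s)^2 * (p k * auxC k s) from
        funext (fun k => by linear_combination p k * auxC_id k s)]
      rw [tsum_mul_left]
    rw [← hsum2, hsum1]
    ring
  have hrbound : ∀ n, 0 ≤ r n ∧ r n < 1 := by
    intro n; induction n with
    | zero => rw [hr0]; exact ⟨le_refl 0, one_pos⟩
    | succ n ih =>
      rw [hrec n]
      exact ⟨tsum_nonneg (fun k => mul_nonneg (hp0 k) (pow_nonneg ih.1 k)),
        hf_lt_one ih.1 ih.2⟩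
  have hstep : ∀ n, r n ≤ r (n+1) := by
    intro n
    have h0 := (hrbound n).1
    have h1 := (hrbound n).2.le
    have hk := hkey h0 h1
    have hTnn : 0 ≤ T (r n) := le_trans (le_of_lt hk0pos) (hT_lb h0 h1)
    have hfr : r (n+1) = f (r n) := hrec n
    nlinarith [mul_nonneg (sq_nonneg (1 - r n)) hTnn]
  have hbdd : BddAbove (Set.range r) := ⟨1, by rintro x ⟨n, rfl⟩; exact (hrbound n).2.le⟩
  have hrL : Tendsto r atTop (𝓝 (⨆ n, r n)) :=
    tendsto_atTop_ciSup (monotone_nat_of_le_succ hstep) hbdd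
  set L : ℝ := ⨆ n, r n with hLdef
  have hL0 : 0 ≤ L := le_ciSup hbdd 0 |>.trans' (by rw [hr0])
  have hL1 : L ≤ 1 := ciSup_le fun n => (hrbound n).2.le
  have hf_cont : ∀ (u : ℕ → ℝ) (L' : ℝ), (∀ n, 0 ≤ u n ∧ u n ≤ 1) → Tendsto u atTop (𝓝 L') →
      Tendsto (fun n => ∑' k, p k * u n ^ k) atTop (𝓝 (∑' k, p k * L' ^ k)) := by
    intro u L' hu hulim
    apply tendsto_tsum_of_dominated_convergence hp
    · intro k
      exact tendsto_const_nhds.mul (hulim.pow k)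
    · filter_upwards with n k
      rw [Real.norm_eq_abs, abs_of_nonneg (mul_nonneg (hp0 k) (pow_nonneg (hu n).1 k))]
      calc p k * u n ^ k ≤ p k * 1 :=
            mul_le_mul_of_nonneg_left (pow_le_one₀ (hu n).1 (hu n).2) (hp0 k)
      _ = p k := mul_one _
  have hfix : f L = L := by
    have h2 : Tendsto (fun n => r (n+1)) atTop (𝓝 L) := hrL.comp (tendsto_add_atTop_nat 1)
    have h3 : Tendsto (fun n => f (r n)) atTop (𝓝 (f L)) :=
      hf_cont r L (fun n => ⟨(hrbound n).1, (hrbound n).2.le⟩) hrL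
    have h4 : (fun n => r (n+1)) = fun n => f (r n) := funext fun n => hrec n
    rw [h4] at h2
    exact tendsto_nhds_unique h3 h2
  have hLeq : L = 1 := by
    by_contra hne
    have hLlt : L < 1 := lt_of_le_of_ne hL1 hne
    have hk := hkey hL0 hL1
    have hTpos : 0 < T L := lt_of_lt_of_le hk0pos (hT_lb hL0 hL1)
    have hsq : 0 < (1 - L)^2 := pow_pos (by linarith) 2
    nlinarith [mul_pos hsq hTpos]
  set q : ℕ → ℝ := fun n => 1 - r n with hqdef
  have hq0 : ∀ n, 0 < q n := fun n => by
    simp only [hqdef]; linarith [(hrbound n).2]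
  have hqlim : Tendsto q atTop (𝓝 0) := by
    have h5 : Tendsto r atTop (𝓝 1) := hLeq ▸ hrL
    have := (tendsto_const_nhds (x := (1:ℝ)) (f := atTop)).sub h5
    simpa using this
  have hTlim : Tendsto (fun n => T (r n)) atTop (𝓝 (σ2/2)) := by
    have h6 : Tendsto (fun n => ∑' k, p k * auxC k (r n)) atTop (𝓝 (∑' k, p k * auxC k 1)) := by
      apply tendsto_tsum_of_dominated_convergence hB
      · intro k
        apply tendsto_const_nhds.mul
        have h5 : Tendsto r atTop (𝓝 1) := hLeq ▸ hrL
        exact ((auxC_continuous k).tendsto 1).comp h5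
      · filter_upwards with n k
        rw [Real.norm_eq_abs,
          abs_of_nonneg (mul_nonneg (hp0 k) (auxC_nonneg k (hrbound n).1))]
        exact mul_le_mul_of_nonneg_left
          (auxC_le_auxC_one k (hrbound n).1 (hrbound n).2.le) (hp0 k)
    rw [hBs] at h6
    exact h6
  have hqrec : ∀ n, q (n+1) = q n - q n^2 * T (r n) := by
    intro n
    have hk := hkey (hrbound n).1 (hrbound n).2.le
    have hfr : r (n+1) = f (r n) := hrec n
    simp only [hqdef]
    linear_combination (-1 : ℝ) * hfr - hk
  have hfree : ∀ n, 0 < 1 - q n * T (r n) := by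
    intro n
    have h1 := hq0 (n+1)
    have h2 := hq0 n
    have e : q n * (1 - q n * T (r n)) = q (n+1) := by rw [hqrec n]; ring
    nlinarith
  have hd : ∀ n, (q (n+1))⁻¹ - (q n)⁻¹ = T (r n) / (1 - q n * T (r n)) := by
    intro n
    have h2 := hq0 n
    have h3 := hfree n
    have e : q (n+1) = q n * (1 - q n * T (r n)) := by rw [hqrec n]; ring
    rw [e]
    field_simp
    ring
  have hdlim : Tendsto (fun n => T (r n) / (1 - q n * T (r n))) atTop (𝓝 (σ2/2)) := by
    have hden : Tendsto (fun n => 1 - q n * T (r n)) atTop (𝓝 1) := by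
      have h7 : Tendsto (fun n => q n * T (r n)) atTop (𝓝 (0 * (σ2/2))) :=
        hqlim.mul hTlim
      rw [zero_mul] at h7
      have := (tendsto_const_nhds (x := (1:ℝ)) (f := atTop)).sub h7
      simpa using this
    have := hTlim.div hden one_ne_zero
    rw [div_one] at this
    exact this
  have hces : Tendsto (fun n : ℕ => (n:ℝ)⁻¹ * ∑ i ∈ range n, ((q (i+1))⁻¹ - (q i)⁻¹))
      atTop (𝓝 (σ2/2)) :=
    (hdlim.congr (fun n => (hd n).symm)).cesaro
  have htel : ∀ n, ∑ i ∈ range n, ((q (i+1))⁻¹ - (q i)⁻¹) = (q n)⁻¹ - 1 := by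
    intro n
    rw [Finset.sum_range_sub (f := fun i => (q i)⁻¹)]
    simp [hqdef, hr0]
  have hmain : Tendsto (fun n : ℕ => (n:ℝ)⁻¹ * (q n)⁻¹) atTop (𝓝 (σ2/2)) := by
    have h8 : Tendsto (fun n : ℕ => (n:ℝ)⁻¹ * ((q n)⁻¹ - 1) + (n:ℝ)⁻¹)
        atTop (𝓝 (σ2/2 + 0)) := by
      apply Tendsto.add
      · exact (by simpa only [htel] using hces : Tendsto _ atTop (𝓝 (σ2/2)))
      · exact tendsto_inv_atTop_nhds_zero_nat
    rw [add_zero] at h8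
    exact h8.congr (fun n => by ring)
  have hpos : (0:ℝ) < σ2/2 := by positivity
  have hinv := hmain.inv₀ (ne_of_gt hpos)
  have hcon : ∀ᶠ n : ℕ in atTop, ((n:ℝ)⁻¹ * (q n)⁻¹)⁻¹ = (n:ℝ) * q n := by
    filter_upwards [eventually_ge_atTop 1] with n hn
    rw [mul_inv, inv_inv, inv_inv]
  have h9 : Tendsto (fun n : ℕ => (n:ℝ) * q n) atTop (𝓝 ((σ2/2)⁻¹)) := by
    apply hinv.congr' hcon
  have h10 : (σ2/2)⁻¹ = 2/σ2 := by
    field_simp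
  rw [h10] at h9
  exact h9.congr (fun n => by simp [hqdef])

section Prob
variable {Ω : Type*} [MeasurableSpace Ω] (P : Measure Ω) [IsProbabilityMeasure P]
variable (X : ℕ → ℕ → Ω → ℕ)

/-- pgf as tsum -/
lemma pgf_tsum (Y : Ω → ℕ) (hY : Measurable Y) (s : ℝ≥0∞) :
    ∫⁻ ω, s ^ Y ω ∂P = ∑' k, P {ω | Y ω = k} * s ^ k := by
  have h1 : ∫⁻ ω, s ^ Y ω ∂P = ∫⁻ k, s ^ k ∂(P.map Y) := by
    rw [lintegral_map (measurable_from_top) hY]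
  rw [h1, lintegral_countable']
  refine tsum_congr fun k => ?_
  rw [Measure.map_apply hY (measurableSet_singleton k), mul_comm]
  rfl

lemma pgf_zero (Y : Ω → ℕ) (hY : Measurable Y) :
    ∫⁻ ω, (0:ℝ≥0∞) ^ Y ω ∂P = P {ω | Y ω = 0} := by
  rw [pgf_tsum P Y hY 0, tsum_eq_single 0 (fun k hk => by simp [zero_pow hk])]
  simp

lemma pgf_le_one (Y : Ω → ℕ) (hY : Measurable Y) {s : ℝ≥0∞} (hs : s ≤ 1) :
    ∫⁻ ω, s ^ Y ω ∂P ≤ 1 := by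
  calc ∫⁻ ω, s ^ Y ω ∂P ≤ ∫⁻ _, 1 ∂P := lintegral_mono fun ω => pow_le_one' hs _
  _ = 1 := by simp

lemma pgf_mul (Y W : Ω → ℕ) (hY : Measurable Y) (hW : Measurable W)
    (h : IndepFun Y W P) (s : ℝ≥0∞) :
    ∫⁻ ω, s ^ (Y ω + W ω) ∂P = (∫⁻ ω, s ^ Y ω ∂P) * ∫⁻ ω, s ^ W ω ∂P := by
  have : ∀ ω, s ^ (Y ω + W ω) = s ^ Y ω * s ^ W ω := fun ω => pow_add s _ _
  simp_rw [this]
  exact lintegral_mul_eq_lintegral_mul_lintegral_of_indepFun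
    (measurable_from_top.comp hY) (measurable_from_top.comp hW)
    (h.comp measurable_from_top measurable_from_top)

set_option linter.unusedSectionVars false
set_option linter.unusedVariables false

/-- the σ-algebra generated by a set of the variables -/
noncomputable def mF (A : Set (ℕ × ℕ)) : MeasurableSpace Ω :=
  ⨆ p ∈ A, MeasurableSpace.comap (X p.1 p.2) inferInstance

lemma mF_le (hmeas : ∀ n i, Measurable (X n i)) (A : Set (ℕ × ℕ)) : mF X A ≤ ‹MeasurableSpace Ω› := by
  apply iSup₂_le
  intro p _
  exact (hmeas p.1 p.2).comap_le

lemma mF_mono {A B : Set (ℕ × ℕ)} (h : A ⊆ B) : mF X A ≤ mF X B := by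
  apply iSup₂_le
  intro p hp
  exact le_iSup₂ (f := fun (p : ℕ × ℕ) (_ : p ∈ B) =>
    MeasurableSpace.comap (X p.1 p.2) inferInstance) p (h hp)

lemma mF_meas_X {A : Set (ℕ × ℕ)} {n i : ℕ} (h : (n, i) ∈ A) :
    Measurable[mF X A] (X n i) := by
  have : MeasurableSpace.comap (X n i) inferInstance ≤ mF X A :=
    le_iSup₂ (f := fun (p : ℕ × ℕ) (_ : p ∈ A) =>
      MeasurableSpace.comap (X p.1 p.2) inferInstance) (n, i) h
  exact (Measurable.of_comap_le le_rfl).mono this le_rfl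

lemma indepFun_of_mF (hmeas : ∀ n i, Measurable (X n i))
    (hindep : iIndepFun (fun p : ℕ × ℕ => X p.1 p.2) P) {A B : Set (ℕ × ℕ)} (hAB : Disjoint A B) {Y W : Ω → ℕ}
    (hY : Measurable[mF X A] Y) (hW : Measurable[mF X B] W) :
    IndepFun Y W P := by
  have h : Indep (mF X A) (mF X B) P := by
    have := indep_iSup_of_disjoint (m := fun p : ℕ × ℕ =>
      MeasurableSpace.comap (X p.1 p.2) inferInstance)
      (fun p => (hmeas p.1 p.2).comap_le) hindep.iIndep hAB
    exact this
  rw [IndepFun_iff_Indep]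
  exact indep_of_indep_of_le_left (indep_of_indep_of_le_right h
    (measurable_iff_comap_le.1 hW)) (measurable_iff_comap_le.1 hY)

/-- partial sums of row n -/
lemma mF_meas_sum {A : Set (ℕ × ℕ)} {n k : ℕ} (h : ∀ i < k, (n, i) ∈ A) :
    Measurable[mF X A] (fun ω => ∑ i ∈ range k, X n i ω) := by
  apply Finset.measurable_sum
  intro i hi
  exact mF_meas_X X (h i (Finset.mem_range.1 hi))

lemma indepFun_sum_last (hmeas : ∀ n i, Measurable (X n i))
    (hindep : iIndepFun (fun p : ℕ × ℕ => X p.1 p.2) P)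
    (n k : ℕ) :
    IndepFun (fun ω => ∑ i ∈ range k, X n i ω) (X n k) P := by
  apply indepFun_of_mF P X hmeas hindep
    (A := {p | p.1 = n ∧ p.2 < k}) (B := {(n, k)})
  · rw [Set.disjoint_left]
    rintro ⟨a, b⟩ ⟨rfl, hb⟩ hmem
    rw [Set.mem_singleton_iff] at hmem
    rw [Prod.ext_iff] at hmem
    omega
  · exact mF_meas_sum X fun i hi => ⟨rfl, hi⟩
  · exact mF_meas_X X rfl

/-- Lemma A: pgf of a row partial sum -/
lemma pgf_sum (hmeas : ∀ n i, Measurable (X n i))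
    (hindep : iIndepFun (fun p : ℕ × ℕ => X p.1 p.2) P)
    (hident : ∀ n i, IdentDistrib (X n i) (X 0 0) P P)
    (n k : ℕ) (s : ℝ≥0∞) :
    ∫⁻ ω, s ^ (∑ i ∈ range k, X n i ω) ∂P = (∫⁻ ω, s ^ X 0 0 ω ∂P) ^ k := by
  induction k with
  | zero => simp
  | succ k ih =>
    have hXni : ∫⁻ ω, s ^ X n k ω ∂P = ∫⁻ ω, s ^ X 0 0 ω ∂P := by
      rw [pgf_tsum P (X n k) (hmeas n k) s, pgf_tsum P (X 0 0) (hmeas 0 0) s]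
      refine tsum_congr fun j => ?_
      congr 1
      exact (hident n k).measure_mem_eq (measurableSet_singleton j)
    simp_rw [Finset.sum_range_succ]
    rw [pgf_mul P (fun ω => ∑ i ∈ range k, X n i ω) (X n k)
      (Finset.measurable_sum _ fun i _ => hmeas n i) (hmeas n k)
      (indepFun_sum_last P X hmeas hindep n k) s, ih, hXni, pow_succ]

lemma Z_meas_mF (Z : ℕ → Ω → ℕ) (hZ0 : ∀ ω, Z 0 ω = 1)
    (hZrec : ∀ n ω, Z (n + 1) ω = ∑ i ∈ Finset.range (Z n ω), X n i ω) (n : ℕ) :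
    Measurable[mF X {p | p.1 < n}] (Z n) := by
  induction n with
  | zero =>
    have : Z 0 = fun _ => 1 := funext hZ0
    rw [this]
    exact @measurable_const _ _ _ (mF X _) _
  | succ n ih =>
    apply @measurable_to_countable' ℕ Ω _ _ (mF X {p | p.1 < n + 1})
    intro j
    have hset : (Z (n+1)) ⁻¹' {j} =
        ⋃ k, ({ω | Z n ω = k} ∩ {ω | (∑ i ∈ range k, X n i ω) = j}) := by
      ext ω
      simp only [Set.mem_preimage, Set.mem_singleton_iff, Set.mem_iUnion, Set.mem_inter_iff,
        Set.mem_setOf_eq]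
      constructor
      · intro h; exact ⟨Z n ω, rfl, by rw [← hZrec n ω]; exact h⟩
      · rintro ⟨k, hk, hs⟩; rw [hZrec n ω, hk]; exact hs
    rw [hset]
    apply MeasurableSet.iUnion
    intro k
    apply MeasurableSet.inter
    · have h1 : Measurable[mF X {p | p.1 < n + 1}] (Z n) :=
        ih.mono (mF_mono X (fun p hp => lt_trans hp (Nat.lt_succ_self n))) le_rfl
      exact h1 (measurableSet_singleton k)
    · have h2 : Measurable[mF X {p | p.1 < n + 1}] (fun ω => ∑ i ∈ range k, X n i ω) :=
        mF_meas_sum X (fun i _ => Nat.lt_succ_self n)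
      exact h2 (measurableSet_singleton j)

lemma Z_meas (hmeas : ∀ n i, Measurable (X n i)) (Z : ℕ → Ω → ℕ) (hZ0 : ∀ ω, Z 0 ω = 1)
    (hZrec : ∀ n ω, Z (n + 1) ω = ∑ i ∈ Finset.range (Z n ω), X n i ω) (n : ℕ) :
    Measurable (Z n) :=
  (Z_meas_mF X Z hZ0 hZrec n).mono (mF_le X hmeas _) le_rfl

lemma indepFun_Z_sum (hmeas : ∀ n i, Measurable (X n i))
    (hindep : iIndepFun (fun p : ℕ × ℕ => X p.1 p.2) P)
    (Z : ℕ → Ω → ℕ) (hZ0 : ∀ ω, Z 0 ω = 1)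
    (hZrec : ∀ n ω, Z (n + 1) ω = ∑ i ∈ Finset.range (Z n ω), X n i ω) (n k : ℕ) :
    IndepFun (Z n) (fun ω => ∑ i ∈ range k, X n i ω) P := by
  apply indepFun_of_mF P X hmeas hindep (A := {p | p.1 < n}) (B := {p | p.1 = n})
  · rw [Set.disjoint_left]
    rintro ⟨a, b⟩ ha hb
    simp only [Set.mem_setOf_eq] at ha hb
    omega
  · exact Z_meas_mF X Z hZ0 hZrec n
  · exact mF_meas_sum X fun i _ => rfl

lemma pgf_Z_rec (hmeas : ∀ n i, Measurable (X n i))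
    (hindep : iIndepFun (fun p : ℕ × ℕ => X p.1 p.2) P)
    (hident : ∀ n i, IdentDistrib (X n i) (X 0 0) P P)
    (Z : ℕ → Ω → ℕ) (hZ0 : ∀ ω, Z 0 ω = 1)
    (hZrec : ∀ n ω, Z (n + 1) ω = ∑ i ∈ Finset.range (Z n ω), X n i ω) (n : ℕ) (s : ℝ≥0∞) :
    ∫⁻ ω, s ^ Z (n+1) ω ∂P = ∫⁻ ω, (∫⁻ ω', s ^ X 0 0 ω' ∂P) ^ Z n ω ∂P := by
  have hZn : Measurable (Z n) := Z_meas X hmeas Z hZ0 hZrec n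
  have hA : ∀ k : ℕ, MeasurableSet {ω | Z n ω = k} := fun k =>
    hZn (measurableSet_singleton k)
  have hdisj : Pairwise (Function.onFun Disjoint (fun k => {ω | Z n ω = k})) := by
    intro a b hab
    rw [Function.onFun, Set.disjoint_left]
    intro ω ha hb
    exact hab (ha.symm.trans hb)
  have hunion : (⋃ k, {ω | Z n ω = k}) = Set.univ := by
    ext ω; simp
  -- decompose both sides over the partition
  have decompose : ∀ (f : Ω → ℝ≥0∞), Measurable f →
      ∫⁻ ω, f ω ∂P = ∑' k, ∫⁻ ω in {ω | Z n ω = k}, f ω ∂P := by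
    intro f hf
    rw [← setLIntegral_univ, ← hunion, lintegral_iUnion hA hdisj]
  have hS : ∀ k, Measurable (fun ω => ∑ i ∈ range k, X n i ω) := fun k =>
    Finset.measurable_sum _ fun i _ => hmeas n i
  have hsplit : ∀ k : ℕ, ∫⁻ ω in {ω | Z n ω = k}, s ^ Z (n+1) ω ∂P
      = P {ω | Z n ω = k} * (∫⁻ ω', s ^ X 0 0 ω' ∂P) ^ k := by
    intro k
    have hcongr : ∫⁻ ω in {ω | Z n ω = k}, s ^ Z (n+1) ω ∂P
        = ∫⁻ ω in {ω | Z n ω = k}, s ^ (∑ i ∈ range k, X n i ω) ∂P := by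
      apply setLIntegral_congr_fun (hA k)
      intro ω (hω : Z n ω = k)
      dsimp only
      rw [hZrec n ω, hω]
    rw [hcongr]
    -- independence
    have hind : IndepFun (Z n) (fun ω => ∑ i ∈ range k, X n i ω) P :=
      indepFun_Z_sum P X hmeas hindep Z hZ0 hZrec n k
    have hindc : IndepFun (fun ω => if Z n ω = k then (1:ℝ≥0∞) else 0)
        (fun ω => s ^ (∑ i ∈ range k, X n i ω)) P := by
      have := hind.comp (φ := fun j : ℕ => if j = k then (1:ℝ≥0∞) else 0)
        (ψ := fun j : ℕ => s ^ j) measurable_from_top measurable_from_top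
      exact this
    have hi : ∫⁻ ω in {ω | Z n ω = k}, s ^ (∑ i ∈ range k, X n i ω) ∂P
        = ∫⁻ ω, (if Z n ω = k then (1:ℝ≥0∞) else 0) * s ^ (∑ i ∈ range k, X n i ω) ∂P := by
      rw [← lintegral_indicator (hA k)]
      congr 1
      ext ω
      rw [Set.indicator_apply]
      simp only [Set.mem_setOf_eq]
      by_cases h : Z n ω = k <;> simp [h]
    have hmul := lintegral_mul_eq_lintegral_mul_lintegral_of_indepFun''
      (f := fun ω => if Z n ω = k then (1:ℝ≥0∞) else 0)
      (g := fun ω => s ^ (∑ i ∈ range k, X n i ω))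
      ((Measurable.ite (by exact hA k) measurable_const measurable_const).aemeasurable)
      ((measurable_from_top.comp (hS k)).aemeasurable) hindc
    rw [hi, hmul]
    congr 1
    · calc ∫⁻ ω, (fun ω => if Z n ω = k then (1:ℝ≥0∞) else 0) ω ∂P
          = ∫⁻ ω, Set.indicator {ω | Z n ω = k} (fun _ => (1:ℝ≥0∞)) ω ∂P := by
            apply lintegral_congr; intro ω; rw [Set.indicator_apply]; rfl
      _ = ∫⁻ _ in {ω | Z n ω = k}, 1 ∂P := lintegral_indicator (hA k) _
      _ = P {ω | Z n ω = k} := setLIntegral_one _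
    · exact pgf_sum P X hmeas hindep hident n k s
  have m1 : Measurable (fun ω => s ^ Z (n+1) ω) :=
    measurable_from_top.comp (Z_meas X hmeas Z hZ0 hZrec (n+1))
  have m2 : Measurable (fun ω => (∫⁻ ω', s ^ X 0 0 ω' ∂P) ^ Z n ω) :=
    measurable_from_top.comp hZn
  rw [decompose _ m1, decompose _ m2]
  refine tsum_congr fun k => ?_
  rw [hsplit k]
  have : ∫⁻ ω in {ω | Z n ω = k}, (∫⁻ ω', s ^ X 0 0 ω' ∂P) ^ Z n ω ∂P
      = ∫⁻ _ in {ω | Z n ω = k}, (∫⁻ ω', s ^ X 0 0 ω' ∂P) ^ k ∂P := by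
    apply setLIntegral_congr_fun (hA k)
    intro ω (hω : Z n ω = k)
    dsimp only
    rw [hω]
  rw [this, setLIntegral_const, mul_comm]

lemma comp_tsum (Y : Ω → ℕ) (hY : Measurable Y) (g : ℕ → ℝ≥0∞) :
    ∫⁻ ω, g (Y ω) ∂P = ∑' k, g k * P {ω | Y ω = k} := by
  have h1 : ∫⁻ ω, g (Y ω) ∂P = ∫⁻ k, g k ∂(P.map Y) := by
    rw [lintegral_map (measurable_from_top) hY]
  rw [h1, lintegral_countable']
  refine tsum_congr fun k => ?_
  rw [Measure.map_apply hY (measurableSet_singleton k)]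
  rfl

lemma tsum_prob_eq_one (Y : Ω → ℕ) (hY : Measurable Y) :
    ∑' k, P {ω | Y ω = k} = 1 := by
  have := comp_tsum P Y hY (fun _ => 1)
  simp only [one_mul] at this
  rw [← this]
  simp

/-- convert an `ℝ≥0∞` moment identity into a real summable one -/
lemma tsum_toReal_of_eq {c : ℕ → ℝ≥0∞} (hc : ∀ k, c k ≠ ⊤) {q : ℕ → ℝ≥0∞} (hq : ∀ k, q k ≤ 1)
    {r : ℝ} (hr : 0 ≤ r) (h : ∑' k, c k * q k = ENNReal.ofReal r) :
    Summable (fun k => (c k).toReal * (q k).toReal)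
    ∧ ∑' k, (c k).toReal * (q k).toReal = r := by
  have hfin : ∀ k, c k * q k ≠ ⊤ := fun k =>
    ENNReal.mul_ne_top (hc k) (lt_of_le_of_lt (hq k) (by norm_num)).ne
  have hsum : (∑' k, c k * q k) ≠ ⊤ := by rw [h]; exact ENNReal.ofReal_ne_top
  have hS : Summable (fun k => ((c k * q k).toReal)) := ENNReal.summable_toReal hsum
  have heq : ∀ k, (c k * q k).toReal = (c k).toReal * (q k).toReal := fun k =>
    ENNReal.toReal_mul
  constructor
  · exact hS.congr heq
  · rw [← tsum_congr heq, ← ENNReal.tsum_toReal_eq hfin, h, ENNReal.toReal_ofReal hr]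

end Prob

end Aux

/-- **Kolmogorov's estimate for critical branching processes.** For a critical
Galton–Watson process `Z` with `Z₀ = 1`, `E(Z₁) = 1`, and offspring variance
`σ² ∈ (0, ∞)`, one has `n · P(Zₙ > 0) → 2/σ²` as `n → ∞`. -/
theorem kolmogorov_estimate
    {Ω : Type*} [MeasurableSpace Ω] (P : Measure Ω) [IsProbabilityMeasure P]
    (X : ℕ → ℕ → Ω → ℕ) (σ2 : ℝ) (hσ2 : 0 < σ2)
    (hmeas : ∀ n i, Measurable (X n i))
    (hindep : iIndepFun (fun p : ℕ × ℕ => X p.1 p.2) P)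
    (hident : ∀ n i, IdentDistrib (X n i) (X 0 0) P P)
    (hint : Integrable (fun ω => (X 0 0 ω : ℝ)) P)
    (hmean : ∫ ω, (X 0 0 ω : ℝ) ∂P = 1)
    (hsqint : Integrable (fun ω => ((X 0 0 ω : ℝ) - 1) ^ 2) P)
    (hvar : ∫ ω, ((X 0 0 ω : ℝ) - 1) ^ 2 ∂P = σ2)
    (Z : ℕ → Ω → ℕ)
    (hZ0 : ∀ ω, Z 0 ω = 1)
    (hZrec : ∀ n ω, Z (n + 1) ω = ∑ i ∈ Finset.range (Z n ω), X n i ω) :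
    Tendsto (fun n : ℕ => (n : ℝ) * (P {ω | 0 < Z n ω}).toReal) atTop
      (𝓝 (2 / σ2)) := by
  have hX : Measurable (X 0 0) := hmeas 0 0
  set p : ℕ → ℝ := fun k => (P {ω | X 0 0 ω = k}).toReal with hpdef
  have hp0 : ∀ k, 0 ≤ p k := fun k => ENNReal.toReal_nonneg
  have hqle : ∀ k : ℕ, P {ω | X 0 0 ω = k} ≤ 1 := fun k => prob_le_one
  -- total mass one
  have h1E : ∑' k, (fun _ : ℕ => (1:ℝ≥0∞)) k * P {ω | X 0 0 ω = k} = ENNReal.ofReal 1 := by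
    simp only [one_mul]
    rw [tsum_prob_eq_one P (X 0 0) hX, ENNReal.ofReal_one]
  have hp_aux := tsum_toReal_of_eq (fun _ => one_ne_top) hqle zero_le_one h1E
  have hp : Summable p := hp_aux.1.congr (fun k => by simp [hpdef])
  have hps : ∑' k, p k = 1 := by
    rw [← hp_aux.2]
    exact tsum_congr fun k => by simp [hpdef]
  -- first moment
  have hm1E : ∑' k, (fun k : ℕ => ENNReal.ofReal (k:ℝ)) k * P {ω | X 0 0 ω = k}
      = ENNReal.ofReal 1 := by
    have e := comp_tsum P (X 0 0) hX (fun k : ℕ => ENNReal.ofReal (k:ℝ))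
    rw [← e, ← ofReal_integral_eq_lintegral_ofReal hint
      (Filter.Eventually.of_forall fun ω => Nat.cast_nonneg _), hmean]
  have hp1_aux := tsum_toReal_of_eq (fun k => ENNReal.ofReal_ne_top) hqle zero_le_one hm1E
  have hp1 : Summable (fun k : ℕ => (k:ℝ) * p k) :=
    hp1_aux.1.congr (fun k => by rw [ENNReal.toReal_ofReal (Nat.cast_nonneg k)])
  have hp1s : ∑' k : ℕ, (k:ℝ) * p k = 1 := by
    refine Eq.trans ?_ hp1_aux.2
    exact tsum_congr fun k => by rw [ENNReal.toReal_ofReal (Nat.cast_nonneg k)]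
  -- second moment
  have hm2E : ∑' k, (fun k : ℕ => ENNReal.ofReal (((k:ℝ) - 1)^2)) k * P {ω | X 0 0 ω = k}
      = ENNReal.ofReal σ2 := by
    have e := comp_tsum P (X 0 0) hX (fun k : ℕ => ENNReal.ofReal (((k:ℝ) - 1)^2))
    rw [← e, ← ofReal_integral_eq_lintegral_ofReal hsqint
      (Filter.Eventually.of_forall fun ω => sq_nonneg _), hvar]
  have hp2_aux := tsum_toReal_of_eq (fun k => ENNReal.ofReal_ne_top) hqle hσ2.le hm2E
  have hp2 : Summable (fun k : ℕ => ((k:ℝ) - 1)^2 * p k) :=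
    hp2_aux.1.congr (fun k => by rw [ENNReal.toReal_ofReal (sq_nonneg _)])
  have hp2s : ∑' k : ℕ, ((k:ℝ) - 1)^2 * p k = σ2 := by
    refine Eq.trans ?_ hp2_aux.2
    exact tsum_congr fun k => by rw [ENNReal.toReal_ofReal (sq_nonneg _)]
  -- generating-function iteration
  have hZmeas : ∀ n, Measurable (Z n) := Z_meas X hmeas Z hZ0 hZrec
  have hiter : ∀ n, ∀ s : ℝ≥0∞, ∫⁻ ω, s ^ Z n ω ∂P
      = (fun t : ℝ≥0∞ => ∫⁻ ω, t ^ X 0 0 ω ∂P)^[n] s := by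
    intro n
    induction n with
    | zero =>
      intro s
      have hZ0' : ∀ ω, s ^ Z 0 ω = s := fun ω => by rw [hZ0 ω, pow_one]
      rw [lintegral_congr hZ0', lintegral_const, measure_univ, mul_one]
      rfl
    | succ n ih =>
      intro s
      rw [pgf_Z_rec P X hmeas hindep hident Z hZ0 hZrec n s,
        ih (∫⁻ ω', s ^ X 0 0 ω' ∂P)]
      exact (Function.iterate_succ_apply _ n s).symm
  have hrE : ∀ n, P {ω | Z n ω = 0}
      = (fun t : ℝ≥0∞ => ∫⁻ ω, t ^ X 0 0 ω ∂P)^[n] 0 := fun n => by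
    rw [← pgf_zero P (Z n) (hZmeas n), hiter n 0]
  have hrErec : ∀ n, P {ω | Z (n+1) ω = 0}
      = ∫⁻ ω, (P {ω' | Z n ω' = 0}) ^ X 0 0 ω ∂P := by
    intro n
    rw [hrE n, hrE (n+1), Function.iterate_succ_apply']
  -- real extinction probabilities
  set r : ℕ → ℝ := fun n => (P {ω | Z n ω = 0}).toReal with hrdef
  have hr0 : r 0 = 0 := by
    have hempty : {ω | Z 0 ω = 0} = (∅ : Set Ω) := by
      ext ω; simp [hZ0 ω]
    simp [hrdef, hempty]
  have hFreal : ∀ t : ℝ≥0∞, t ≤ 1 → (∫⁻ ω, t ^ X 0 0 ω ∂P).toReal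
      = ∑' k, p k * (t.toReal) ^ k := by
    intro t ht
    have htne : t ≠ ⊤ := (lt_of_le_of_lt ht one_lt_top).ne
    rw [pgf_tsum P (X 0 0) hX t, ENNReal.tsum_toReal_eq
      (fun k => ENNReal.mul_ne_top (measure_ne_top P _) (ENNReal.pow_ne_top htne))]
    exact tsum_congr fun k => by rw [ENNReal.toReal_mul, ENNReal.toReal_pow]
  have hrrec : ∀ n, r (n+1) = ∑' k, p k * (r n) ^ k := by
    intro n
    simp only [hrdef]
    rw [hrErec n, hFreal _ prob_le_one]
  -- conclude
  have hconv := gw_analysis σ2 hσ2 p hp0 hp hps hp1 hp1s hp2 hp2s r hr0 hrrec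
  have hq : ∀ n, (P {ω | 0 < Z n ω}).toReal = 1 - r n := by
    intro n
    have hset : {ω | 0 < Z n ω} = {ω | Z n ω = 0}ᶜ := by
      ext ω; simp [Nat.pos_iff_ne_zero]
    have hmeaset : MeasurableSet {ω | Z n ω = 0} := hZmeas n (measurableSet_singleton 0)
    rw [hset, measure_compl hmeaset (measure_ne_top P _), measure_univ,
      ENNReal.toReal_sub_of_le prob_le_one one_ne_top, ENNReal.toReal_one]
  exact hconv.congr (fun n => by rw [hq n])
end

section
/- (BK inequality) Let E be a finite set, Ω = {0,1}^E with a product probability measure P. For increasing events A, B ⊆ Ω, the disjoint occurrence A ∘ B = {ω : ∃ F ⊆ E with ω_F ∈ A and ω_{E∖F} ∈ B} satisfies P(A ∘ B) ≤ P(A) P(B). -/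
/-!
Couple two independent copies `(ω, η)` of the configuration. For `J ⊆ E`, the interpolating
event `D_J` (`interpolant A B J`) asks for a set `F` with `ω_F ∈ A` and with the `B`-witness
read from `η` on `J` and from `ω_{E∖F}` off `J`. Then `D_∅ = (A ∘ B) × Ω`, and `D_E = A × B`
because `A` is increasing. Exchanging the `e`-coordinates of `ω` and `η` is an involution `σ`
preserving `P ⊗ P`; for `e ∉ J` one checks `D_J ⊆ D_{J+e} ∪ σ D_{J+e}` and
`D_J ∩ σ D_J ⊆ D_{J+e}`, so that `2 P(D_J) = P(D_J ∪ σ D_J) + P(D_J ∩ σ D_J) ≤ 2 P(D_{J+e})`.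
Adding the coordinates one at a time gives `P(A ∘ B) = P(D_∅) ≤ P(D_E) = P(A) P(B)`.
-/

open MeasureTheory Function

theorem MeasureTheory.MeasurePreserving.measure_le_of_subset_union_preimage
    {X : Type*} [MeasurableSpace X] {ν : Measure X} {σ : X → X}
    (hσ : MeasurePreserving σ ν ν) (hinv : Involutive σ) {S T : Set X}
    (hS : MeasurableSet S) (hT : MeasurableSet T)
    (hST : S ⊆ T ∪ σ ⁻¹' T) (hSS : S ∩ σ ⁻¹' S ⊆ T) : ν S ≤ ν T := by
  have hU : S ∪ σ ⁻¹' S ⊆ T ∪ σ ⁻¹' T := by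
    refine Set.union_subset hST ?_
    have := Set.preimage_mono (f := σ) hST
    rwa [Set.preimage_union, hinv.preimage T, Set.union_comm] at this
  have hI : S ∩ σ ⁻¹' S ⊆ T ∩ σ ⁻¹' T := by
    refine Set.subset_inter hSS ?_
    have := Set.preimage_mono (f := σ) hSS
    rwa [Set.preimage_inter, hinv.preimage S, Set.inter_comm] at this
  have key : 2 * ν S ≤ 2 * ν T := calc
    2 * ν S = ν S + ν (σ ⁻¹' S) := by rw [hσ.measure_preimage hS.nullMeasurableSet, two_mul]
    _ = ν (S ∪ σ ⁻¹' S) + ν (S ∩ σ ⁻¹' S) :=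
      (measure_union_add_inter S (hσ.measurable hS)).symm
    _ ≤ ν (T ∪ σ ⁻¹' T) + ν (T ∩ σ ⁻¹' T) := add_le_add (measure_mono hU) (measure_mono hI)
    _ = ν T + ν (σ ⁻¹' T) := measure_union_add_inter T (hσ.measurable hT)
    _ = 2 * ν T := by rw [hσ.measure_preimage hT.nullMeasurableSet, two_mul]
  exact (ENNReal.mul_le_mul_iff_right two_ne_zero ENNReal.ofNat_ne_top).mp key

namespace VanDenBergKesten

variable {E α : Type*} [DecidableEq E]

def swapAt (e : E) (p : (E → α) × (E → α)) : (E → α) × (E → α) :=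
  (update p.1 e (p.2 e), update p.2 e (p.1 e))

lemma swapAt_involutive (e : E) : Involutive (swapAt (α := α) e) := by
  intro p
  ext x <;> rcases eq_or_ne x e with rfl | hx <;> simp [swapAt, *]

lemma measurePreserving_swapAt [Fintype E] [MeasurableSpace α] (μ : E → Measure α)
    [∀ e, SigmaFinite (μ e)] (e : E) :
    MeasurePreserving (swapAt e) ((Measure.pi μ).prod (Measure.pi μ))
      ((Measure.pi μ).prod (Measure.pi μ)) := by
  -- Seen in `E → α × α`, `swapAt e` is `Prod.swap` in coordinate `e` and the identity elsewhere.
  let φ := MeasurableEquiv.arrowProdEquivProdArrow α α E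
  have hφ := measurePreserving_arrowProdEquivProdArrow α α E μ μ
  have hswap := measurePreserving_pi (fun x => (μ x).prod (μ x)) (fun x => (μ x).prod (μ x))
    (f := fun x => if x = e then Prod.swap else id) fun x => by
      split_ifs
      exacts [Measure.measurePreserving_swap, .id _]
  convert hφ.comp (hswap.comp hφ.symm) using 1
  ext p x <;> rcases eq_or_ne x e with rfl | hx <;>
    simp [swapAt, MeasurableEquiv.arrowProdEquivProdArrow, Equiv.arrowProdEquivProdArrow, *]

section Interpolation

variable [LinearOrder α] [OrderBot α] {A B : Set (E → α)} {J F : Finset E} {e : E}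
  {p : (E → α) × (E → α)}

/-- `F.piecewise ω ⊥` is `ω_F` and `F.piecewise ⊥ ω` is `ω_{E∖F}`. -/
def disjointOccurrence (A B : Set (E → α)) : Set (E → α) :=
  {ω | ∃ F : Finset E, F.piecewise ω ⊥ ∈ A ∧ F.piecewise ⊥ ω ∈ B}

def interpolant (A B : Set (E → α)) (J : Finset E) : Set ((E → α) × (E → α)) :=
  {p | ∃ F : Finset E, F.piecewise p.1 ⊥ ∈ A ∧ J.piecewise p.2 (F.piecewise ⊥ p.1) ∈ B}

lemma mem_interpolant_insert (hB : IsUpperSet B) (he : F.piecewise ⊥ p.1 e ≤ p.2 e)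
    (hpA : F.piecewise p.1 ⊥ ∈ A) (hpB : J.piecewise p.2 (F.piecewise ⊥ p.1) ∈ B) :
    p ∈ interpolant A B (insert e J) := by
  refine ⟨F, hpA, hB ?_ hpB⟩
  rw [Finset.piecewise_insert, le_update_iff]
  refine ⟨?_, fun _ _ => le_rfl⟩
  by_cases heJ : e ∈ J <;> simp [heJ, he]

lemma swapAt_mem_interpolant_insert (heJ : e ∉ J) (heF : e ∉ F)
    (hpA : F.piecewise p.1 ⊥ ∈ A) (hpB : J.piecewise p.2 (F.piecewise ⊥ p.1) ∈ B) :
    swapAt e p ∈ interpolant A B (insert e J) := by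
  refine ⟨F, ?_, ?_⟩
  · convert hpA using 1
    ext x
    rcases eq_or_ne x e with rfl | hx <;> simp [swapAt, Finset.piecewise, *]
  · convert hpB using 1
    ext x
    rcases eq_or_ne x e with rfl | hx <;> simp [swapAt, Finset.piecewise, *]

lemma interpolant_subset_union_preimage (hB : IsUpperSet B) (heJ : e ∉ J) :
    interpolant A B J ⊆
      interpolant A B (insert e J) ∪ swapAt e ⁻¹' interpolant A B (insert e J) := by
  rintro p ⟨F, hpA, hpB⟩
  by_cases heF : e ∈ F
  · exact .inl (mem_interpolant_insert hB (by simp [heF]) hpA hpB)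
  · exact .inr (swapAt_mem_interpolant_insert heJ heF hpA hpB)

lemma interpolant_inter_preimage_subset (hA : IsUpperSet A) (hB : IsUpperSet B) (heJ : e ∉ J) :
    interpolant A B J ∩ swapAt e ⁻¹' interpolant A B J ⊆ interpolant A B (insert e J) := by
  rintro p ⟨⟨F, hpA, hpB⟩, G, hqA, hqB⟩
  by_cases heF : e ∈ F
  · exact mem_interpolant_insert hB (by simp [heF]) hpA hpB
  by_cases heG : e ∈ G
  · -- `G` witnesses `swapAt e p ∈ D_J`; if `p.2 e ≤ p.1 e` it also witnesses `p ∈ D_J`.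
    rcases le_total (p.1 e) (p.2 e) with h12 | h21
    · exact mem_interpolant_insert hB (by simpa [heF]) hpA hpB
    refine mem_interpolant_insert (F := G) hB (by simp [heG]) (hA ?_ hqA) ?_
    · refine Finset.piecewise_le_piecewise (s := G) ?_ le_rfl
      rw [swapAt, update_le_iff]
      exact ⟨h21, fun _ _ => le_rfl⟩
    · convert hqB using 1
      ext x
      rcases eq_or_ne x e with rfl | hx <;> simp [swapAt, Finset.piecewise, *]
  · rw [← swapAt_involutive e p]
    exact swapAt_mem_interpolant_insert heJ heG hqA hqB

lemma interpolant_empty (A B : Set (E → α)) :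
    interpolant A B ∅ = disjointOccurrence A B ×ˢ Set.univ := by
  ext p
  simp [interpolant, disjointOccurrence]

lemma interpolant_univ [Fintype E] (hA : IsUpperSet A) :
    interpolant A B Finset.univ = A ×ˢ B := by
  ext p
  simp only [interpolant, Finset.piecewise_univ, Set.mem_prod]
  refine ⟨fun ⟨F, hpA, hpB⟩ => ⟨hA ?_ hpA, hpB⟩, fun ⟨hpA, hpB⟩ => ⟨Finset.univ, by simpa, hpB⟩⟩
  exact Finset.piecewise_le_of_le_of_le (s := F) le_rfl bot_le

end Interpolation

section Measure

variable [Fintype E] [MeasurableSpace α] [Countable α] [MeasurableSingletonClass α]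
  [LinearOrder α] [OrderBot α] (μ : E → Measure α) [∀ e, SigmaFinite (μ e)]
  {A B : Set (E → α)}

lemma measure_interpolant_empty_le (hA : IsUpperSet A) (hB : IsUpperSet B) (J : Finset E) :
    (Measure.pi μ).prod (Measure.pi μ) (interpolant A B ∅) ≤
      (Measure.pi μ).prod (Measure.pi μ) (interpolant A B J) := by
  induction J using Finset.induction_on with
  | empty => exact le_rfl
  | insert e J heJ ih =>
    refine ih.trans <| (measurePreserving_swapAt μ e).measure_le_of_subset_union_preimage
      (swapAt_involutive e) .of_discrete .of_discrete
      (interpolant_subset_union_preimage hB heJ) (interpolant_inter_preimage_subset hA hB heJ)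

theorem measure_disjointOccurrence_le [∀ e, IsProbabilityMeasure (μ e)]
    (hA : IsUpperSet A) (hB : IsUpperSet B) :
    Measure.pi μ (disjointOccurrence A B) ≤ Measure.pi μ A * Measure.pi μ B := by
  simpa [interpolant_empty, interpolant_univ hA, Measure.prod_prod] using
    measure_interpolant_empty_le μ hA hB Finset.univ

end Measure

end VanDenBergKesten

open VanDenBergKesten in
/-- **The van den Berg–Kesten (BK) inequality.** Let `E` be a finite set and
`P` a product probability measure on `Ω = {0,1}^E` (modelled as `E → Bool`).
For increasing events `A, B`, the disjoint occurrence
`A ∘ B = {ω : ∃ F ⊆ E, ω_F ∈ A and ω_{E∖F} ∈ B}` satisfies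
`P(A ∘ B) ≤ P(A) P(B)`. Here `ω_F` agrees with `ω` on `F` and is `0` off `F`. -/
theorem van_den_berg_kesten_inequality
    {E : Type*} [Fintype E] [DecidableEq E]
    (μ : E → Measure Bool) [∀ e, IsProbabilityMeasure (μ e)]
    (P : Measure (E → Bool)) (hP : P = Measure.pi μ)
    (A B : Set (E → Bool))
    (hA : ∀ ⦃ω ω' : E → Bool⦄, ω ≤ ω' → ω ∈ A → ω' ∈ A)
    (hB : ∀ ⦃ω ω' : E → Bool⦄, ω ≤ ω' → ω ∈ B → ω' ∈ B) :
    P {ω | ∃ F : Finset E,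
        (fun e => if e ∈ F then ω e else false) ∈ A ∧
        (fun e => if e ∉ F then ω e else false) ∈ B} ≤ P A * P B := by
  subst hP
  convert measure_disjointOccurrence_le μ hA hB using 3
  ext ω
  exact exists_congr fun F => and_congr Iff.rfl (by simp only [ite_not]; rfl)
end

section
/- (Harris/FKG inequality for product measure) Let E be a finite set and P a product probability measure on Ω = {0,1}^E. For any two increasing events A, B ⊆ Ω, P(A ∩ B) ≥ P(A) P(B). -/
/-!
In each coordinate `{a i, b i} = {a i ⊓ b i, a i ⊔ b i}`, so the point masses of a product
measure on a product of chains satisfy `μ {a} * μ {b} = μ {a ⊓ b} * μ {a ⊔ b}`. This is the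
lattice condition of the FKG inequality on the finite distributive lattice `E → Bool`, applied to
the indicators of the two upper sets.
-/

open MeasureTheory Finset

lemma IsUpperSet.monotone_indicator_one {α β : Type*} [Preorder α] [Zero β] [One β] [Preorder β]
    [ZeroLEOneClass β] {s : Set α} (hs : IsUpperSet s) : Monotone (s.indicator (1 : α → β)) := by
  intro a b hab
  by_cases ha : a ∈ s
  · simp [ha, hs hab ha]
  · simpa [ha] using
      Set.indicator_apply_nonneg (s := s) (f := (1 : α → β)) (a := b) fun _ => zero_le_one

namespace MeasureTheory

section FiniteLattice

variable {α : Type*} [Fintype α] [MeasurableSpace α] [MeasurableSingletonClass α]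

lemma sum_measureReal_singleton_mul_indicator (μ : Measure α) [IsFiniteMeasure μ] (s : Set α) :
    ∑ a, μ.real {a} * s.indicator 1 a = μ.real s := by
  classical
  simp [Set.indicator_apply, ← Finset.sum_filter]

theorem _root_.IsUpperSet.measure_mul_le_measure_univ_mul_inter [DistribLattice α] (μ : Measure α)
    [IsFiniteMeasure μ] (hμ : ∀ a b, μ {a} * μ {b} ≤ μ {a ⊓ b} * μ {a ⊔ b})
    {s t : Set α} (hs : IsUpperSet s) (ht : IsUpperSet t) :
    μ s * μ t ≤ μ Set.univ * μ (s ∩ t) := by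
  have hμ_real (a b : α) : μ.real {a} * μ.real {b} ≤ μ.real {a ⊓ b} * μ.real {a ⊔ b} := by
    simpa [measureReal_def, ← ENNReal.toReal_mul] using
      ENNReal.toReal_mono (by finiteness) (hμ a b)
  have fkg_indicators := fkg (μ := fun a => μ.real {a}) (f := s.indicator 1) (g := t.indicator 1)
    (fun _ => measureReal_nonneg) (Set.indicator_nonneg fun _ _ => zero_le_one)
    (Set.indicator_nonneg fun _ _ => zero_le_one) hs.monotone_indicator_one
    ht.monotone_indicator_one hμ_real
  simp only [← Pi.mul_apply (s.indicator 1), ← Set.inter_indicator_one,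
    sum_measureReal_singleton_mul_indicator, sum_measureReal_singleton, coe_univ] at fkg_indicators
  simp only [measureReal_def, ← ENNReal.toReal_mul] at fkg_indicators
  rwa [ENNReal.toReal_le_toReal (by finiteness) (by finiteness)] at fkg_indicators

end FiniteLattice

lemma Measure.pi_singleton_mul_pi_singleton {ι : Type*} [Fintype ι] {α : ι → Type*}
    [∀ i, LinearOrder (α i)] [∀ i, MeasurableSpace (α i)] (μ : ∀ i, Measure (α i))
    [∀ i, SigmaFinite (μ i)] (a b : ∀ i, α i) :
    Measure.pi μ {a} * Measure.pi μ {b} = Measure.pi μ {a ⊓ b} * Measure.pi μ {a ⊔ b} := by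
  simp only [Measure.pi_singleton, ← prod_mul_distrib]
  refine prod_congr rfl fun i _ => ?_
  rcases le_total (a i) (b i) with h | h
  · simp [h]
  · simp [h, mul_comm]

end MeasureTheory

/-- **The Harris/FKG inequality for product measures.** Let `E` be a finite set
and `P` a product probability measure on `Ω = {0,1}^E` (modelled as
`E → Bool`). For any two increasing events `A, B`, one has
`P(A ∩ B) ≥ P(A) P(B)`. -/
theorem harris_fkg_inequality
    {E : Type*} [Fintype E]
    (μ : E → Measure Bool) [∀ e, IsProbabilityMeasure (μ e)]
    (P : Measure (E → Bool)) (hP : P = Measure.pi μ)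
    (A B : Set (E → Bool))
    (hA : ∀ ⦃ω ω' : E → Bool⦄, ω ≤ ω' → ω ∈ A → ω' ∈ A)
    (hB : ∀ ⦃ω ω' : E → Bool⦄, ω ≤ ω' → ω ∈ B → ω' ∈ B) :
    P A * P B ≤ P (A ∩ B) := by
  classical
  subst hP
  simpa using IsUpperSet.measure_mul_le_measure_univ_mul_inter (Measure.pi μ)
    (fun a b => (Measure.pi_singleton_mul_pi_singleton μ a b).le) hA hB
end

section
/- In bond percolation on ℤ^d (d ≥ 2) with parameter p, the number N of infinite open clusters is almost surely constant, and this constant is 0, 1, or ∞. -/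
open MeasureTheory ProbabilityTheory Filter Topology

/-- Vertices of the hypercubic lattice `ℤ^d`. -/
abbrev Vert (d : ℕ) := Fin d → ℤ

/-- Edges of `ℤ^d`: an edge is specified by its lower endpoint together with a
coordinate direction. -/
abbrev Edge (d : ℕ) := Vert d × Fin d

/-- A percolation configuration: each edge is open (`true`) or closed (`false`). -/
abbrev Config (d : ℕ) := Edge d → Bool

/-- The `i`-th unit vector of `ℤ^d`. -/
def unitVec (d : ℕ) (i : Fin d) : Vert d := fun j => if j = i then 1 else 0

/-- `x` and `y` are joined by an open edge in the configuration `ω`. -/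
def openStep (d : ℕ) (ω : Config d) (x y : Vert d) : Prop :=
  ∃ i : Fin d, (ω (x, i) = true ∧ y = x + unitVec d i) ∨
    (ω (y, i) = true ∧ x = y + unitVec d i)

/-- The open cluster of the vertex `x` in the configuration `ω`: all vertices
reachable from `x` along open edges. -/
def cluster (d : ℕ) (ω : Config d) (x : Vert d) : Set (Vert d) :=
  {y | Relation.ReflTransGen (openStep d ω) x y}

/-- The Bernoulli measure with parameter `p` on `Bool`. -/
noncomputable def bern (p : ℝ) : Measure Bool :=
  ENNReal.ofReal p • Measure.dirac true + ENNReal.ofReal (1 - p) • Measure.dirac false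

/-! ### Graph basics -/

section Graph

variable {d : ℕ}

def conn (d : ℕ) (ω : Config d) (x y : Vert d) : Prop :=
  Relation.ReflTransGen (openStep d ω) x y

lemma openStep_symm {ω : Config d} {x y : Vert d} (h : openStep d ω x y) :
    openStep d ω y x := by
  obtain ⟨i, h | h⟩ := h
  · exact ⟨i, Or.inr h⟩
  · exact ⟨i, Or.inl h⟩

lemma conn_symm {ω : Config d} {x y : Vert d} (h : conn d ω x y) : conn d ω y x :=
  by
    haveI : Std.Symm (openStep d ω) := ⟨fun _ _ h => openStep_symm h⟩
    exact (Std.Symm.symm _ _ h : Relation.ReflTransGen (openStep d ω) y x)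

lemma mem_cluster {ω : Config d} {x y : Vert d} : y ∈ cluster d ω x ↔ conn d ω x y := Iff.rfl

lemma cluster_eq_of_conn {ω : Config d} {x y : Vert d} (h : conn d ω x y) :
    cluster d ω x = cluster d ω y := by
  ext z
  exact ⟨fun hz => (conn_symm h).trans hz, fun hz => h.trans hz⟩

lemma cluster_eq_iff {ω : Config d} {x y : Vert d} :
    cluster d ω x = cluster d ω y ↔ conn d ω x y := by
  refine ⟨fun h => ?_, cluster_eq_of_conn⟩
  have : y ∈ cluster d ω y := Relation.ReflTransGen.refl
  rw [← h] at this; exact this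

lemma conn_mono {ω ω' : Config d} (h : ∀ e, ω e = true → ω' e = true)
    {x y : Vert d} (hc : conn d ω x y) : conn d ω' x y := by
  refine Relation.ReflTransGen.mono ?_ _ _ hc
  rintro a b ⟨i, ⟨hω, hb⟩ | ⟨hω, hb⟩⟩
  · exact ⟨i, Or.inl ⟨h _ hω, hb⟩⟩
  · exact ⟨i, Or.inr ⟨h _ hω, hb⟩⟩

/-- The set of infinite clusters. -/
def NI (d : ℕ) (ω : Config d) : Set (Set (Vert d)) :=
  {S : Set (Vert d) | (∃ x, S = cluster d ω x) ∧ S.Infinite}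

end Graph

/-! ### Boxes and forced configurations -/

section Box

variable {d : ℕ}

def inBox (n : ℕ) (x : Vert d) : Prop := ∀ j, |x j| ≤ (n : ℤ)

noncomputable def boxEdges (d n : ℕ) : Finset (Edge d) :=
  ((Fintype.piFinset fun _ : Fin d => Finset.Icc (-(n : ℤ)) (n : ℤ)) ×ˢ Finset.univ).filter
    (fun e => ∀ j, |(e.1 + unitVec d e.2) j| ≤ (n : ℤ))

lemma mem_boxEdges {n : ℕ} {e : Edge d} :
    e ∈ boxEdges d n ↔ inBox n e.1 ∧ inBox n (e.1 + unitVec d e.2) := by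
  simp [boxEdges, Fintype.mem_piFinset, Finset.mem_Icc, abs_le, inBox]

def forceOpen (F : Finset (Edge d)) (ω : Config d) : Config d :=
  fun e => if e ∈ F then true else ω e

lemma forceOpen_mono {F : Finset (Edge d)} {ω : Config d} :
    ∀ e, ω e = true → forceOpen F ω e = true := by
  intro e he
  unfold forceOpen
  split <;> simp [he]

lemma forceOpen_of_mem {F : Finset (Edge d)} {ω : Config d} {e : Edge d} (he : e ∈ F) :
    forceOpen F ω e = true := if_pos he

lemma forceOpen_of_not_mem {F : Finset (Edge d)} {ω : Config d} {e : Edge d} (he : e ∉ F) :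
    forceOpen F ω e = ω e := if_neg he

lemma add_unitVec_apply (x : Vert d) (i j : Fin d) :
    (x + unitVec d i) j = x j + if j = i then 1 else 0 := by
  show x j + unitVec d i j = _
  simp [unitVec]

/-- Connectivity inside a fully open box. -/
lemma conn_of_inBox {n : ℕ} {ω' : Config d} (hω' : ∀ e ∈ boxEdges d n, ω' e = true) :
    ∀ (k : ℕ) (x y : Vert d), inBox n x → inBox n y →
      (∑ j, (x j - y j).natAbs) ≤ k → conn d ω' x y := by
  intro k
  induction k with
  | zero =>
    intro x y hx hy h
    have hxy : x = y := by
      funext j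
      have h0 : (x j - y j).natAbs = 0 := by
        have := Finset.sum_eq_zero_iff.mp (Nat.le_zero.mp h) j (Finset.mem_univ j)
        exact this
      omega
    exact hxy ▸ Relation.ReflTransGen.refl
  | succ k ih =>
    intro x y hx hy h
    by_cases hxy : x = y
    · exact hxy ▸ Relation.ReflTransGen.refl
    have hj : ∃ j, x j ≠ y j := by
      by_contra hc; push_neg at hc; exact hxy (funext hc)
    obtain ⟨j, hj⟩ := hj
    have hsum : (∑ j', (x j' - y j').natAbs) =
        (x j - y j).natAbs + ∑ j' ∈ Finset.univ.erase j, (x j' - y j').natAbs :=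
      (Finset.add_sum_erase _ _ (Finset.mem_univ j)).symm
    rcases lt_or_gt_of_ne hj with hlt | hgt
    · -- move x up in direction j
      set x' : Vert d := x + unitVec d j with hx'def
      have hx'app : ∀ j', x' j' = x j' + if j' = j then 1 else 0 := fun j' =>
        add_unitVec_apply x j j'
      have hx' : inBox n x' := by
        intro j'
        rw [hx'app]
        rcases eq_or_ne j' j with rfl | hne
        · have := hy j'; have := hx j'; simp only [if_pos rfl]
          have : x j' < y j' := hlt
          have := abs_le.mp (hy j'); have := abs_le.mp (hx j')
          rw [abs_le]; omega
        · simp only [if_neg hne, add_zero]; exact hx j'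
      have he : ((x, j) : Edge d) ∈ boxEdges d n := mem_boxEdges.mpr ⟨hx, hx'⟩
      have hstep : openStep d ω' x x' := ⟨j, Or.inl ⟨hω' _ he, rfl⟩⟩
      have hsum' : (∑ j', (x' j' - y j').natAbs) =
          (x' j - y j).natAbs + ∑ j' ∈ Finset.univ.erase j, (x' j' - y j').natAbs :=
        (Finset.add_sum_erase _ _ (Finset.mem_univ j)).symm
      have hrest : ∑ j' ∈ Finset.univ.erase j, (x' j' - y j').natAbs =
          ∑ j' ∈ Finset.univ.erase j, (x j' - y j').natAbs := by
        refine Finset.sum_congr rfl fun j' hj' => ?_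
        rw [hx'app, if_neg (Finset.mem_erase.mp hj').1, add_zero]
      have hterm : (x' j - y j).natAbs + 1 = (x j - y j).natAbs := by
        rw [hx'app, if_pos rfl]; omega
      have hdist : (∑ j', (x' j' - y j').natAbs) ≤ k := by
        rw [hsum', hrest]; rw [hsum] at h; omega
      exact (Relation.ReflTransGen.single hstep).trans (ih x' y hx' hy hdist)
    · -- move x down in direction j
      set x' : Vert d := x - unitVec d j with hx'def
      have hxx' : x = x' + unitVec d j := by rw [hx'def]; ring
      have hx'app : ∀ j', x' j' = x j' - if j' = j then 1 else 0 := by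
        intro j'
        have := add_unitVec_apply x' j j'
        rw [← hxx'] at this; omega
      have hx' : inBox n x' := by
        intro j'
        rw [hx'app]
        rcases eq_or_ne j' j with rfl | hne
        · simp only [if_pos rfl]
          have h1 := abs_le.mp (hy j'); have h2 := abs_le.mp (hx j')
          have : y j' < x j' := hgt
          rw [abs_le]; omega
        · simp only [if_neg hne, sub_zero]; exact hx j'
      have he : ((x', j) : Edge d) ∈ boxEdges d n := mem_boxEdges.mpr ⟨hx', hxx' ▸ hx⟩
      have hstep : openStep d ω' x x' := ⟨j, Or.inr ⟨hω' _ he, hxx'⟩⟩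
      have hsum' : (∑ j', (x' j' - y j').natAbs) =
          (x' j - y j).natAbs + ∑ j' ∈ Finset.univ.erase j, (x' j' - y j').natAbs :=
        (Finset.add_sum_erase _ _ (Finset.mem_univ j)).symm
      have hrest : ∑ j' ∈ Finset.univ.erase j, (x' j' - y j').natAbs =
          ∑ j' ∈ Finset.univ.erase j, (x j' - y j').natAbs := by
        refine Finset.sum_congr rfl fun j' hj' => ?_
        rw [hx'app, if_neg (Finset.mem_erase.mp hj').1, sub_zero]
      have hterm : (x' j - y j).natAbs + 1 = (x j - y j).natAbs := by
        rw [hx'app, if_pos rfl]; omega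
      have hdist : (∑ j', (x' j' - y j').natAbs) ≤ k := by
        rw [hsum', hrest]; rw [hsum] at h; omega
      exact (Relation.ReflTransGen.single hstep).trans (ih x' y hx' hy hdist)

lemma conn_box {n : ℕ} {ω' : Config d} (hω' : ∀ e ∈ boxEdges d n, ω' e = true)
    {x y : Vert d} (hx : inBox n x) (hy : inBox n y) : conn d ω' x y :=
  conn_of_inBox hω' _ x y hx hy le_rfl

/-- Splitting a path in the forced configuration. -/
lemma conn_force_split {F : Finset (Edge d)} {ω : Config d} {x y : Vert d}
    (h : conn d (forceOpen F ω) x y) :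
    conn d ω x y ∨ ∃ e ∈ F, conn d ω e.1 y ∨ conn d ω (e.1 + unitVec d e.2) y := by
  induction h with
  | refl => exact Or.inl Relation.ReflTransGen.refl
  | @tail b c hxb hbc ih =>
    by_cases hstep : openStep d ω b c
    · rcases ih with h1 | ⟨e, he, h1 | h1⟩
      · exact Or.inl (h1.tail hstep)
      · exact Or.inr ⟨e, he, Or.inl (h1.tail hstep)⟩
      · exact Or.inr ⟨e, he, Or.inr (h1.tail hstep)⟩
    · obtain ⟨i, ⟨hφ, hc⟩ | ⟨hφ, hb⟩⟩ := hbc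
      · have hmem : ((b, i) : Edge d) ∈ F := by
          by_contra hn
          rw [forceOpen_of_not_mem hn] at hφ
          exact hstep ⟨i, Or.inl ⟨hφ, hc⟩⟩
        exact Or.inr ⟨(b, i), hmem, Or.inr (hc ▸ Relation.ReflTransGen.refl)⟩
      · have hmem : ((c, i) : Edge d) ∈ F := by
          by_contra hn
          rw [forceOpen_of_not_mem hn] at hφ
          exact hstep ⟨i, Or.inr ⟨hφ, hb⟩⟩
        exact Or.inr ⟨(c, i), hmem, Or.inl Relation.ReflTransGen.refl⟩

/-- An infinite cluster of the forced configuration contains a point whose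
`ω`-cluster is infinite. -/
lemma exists_infinite_subcluster {F : Finset (Edge d)} {ω : Config d} {x : Vert d}
    (h : (cluster d (forceOpen F ω) x).Infinite) :
    ∃ w ∈ cluster d (forceOpen F ω) x, (cluster d ω w).Infinite := by
  set φ := forceOpen F ω with hφ
  set V : Set (Vert d) := insert x (⋃ e ∈ (↑F : Set (Edge d)), {e.1, e.1 + unitVec d e.2})
    with hV
  have hVfin : V.Finite :=
    (Set.Finite.biUnion F.finite_toSet fun e _ => (Set.finite_singleton _).insert _).insert _
  have hcover : cluster d φ x ⊆ ⋃ v ∈ V, (cluster d ω v ∩ cluster d φ x) := by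
    intro y hy
    rcases conn_force_split (hy : conn d φ x y) with h1 | ⟨e, he, h1 | h1⟩
    · exact Set.mem_biUnion (Set.mem_insert _ _) ⟨h1, hy⟩
    · refine Set.mem_biUnion ?_ ⟨h1, hy⟩
      exact Set.mem_insert_of_mem _ (Set.mem_biUnion he (Set.mem_insert _ _))
    · refine Set.mem_biUnion ?_ ⟨h1, hy⟩
      exact Set.mem_insert_of_mem _
        (Set.mem_biUnion he (Set.mem_insert_of_mem _ rfl))
  have hex : ∃ v ∈ V, (cluster d ω v ∩ cluster d φ x).Infinite := by
    by_contra hc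
    push_neg at hc
    have hfin : (⋃ v ∈ V, cluster d ω v ∩ cluster d φ x).Finite :=
      Set.Finite.biUnion hVfin fun v hv => hc v hv
    exact h (hfin.subset hcover)
  obtain ⟨v, _, hinf⟩ := hex
  obtain ⟨w, hw1, hw2⟩ := hinf.nonempty
  refine ⟨w, hw2, ?_⟩
  rw [← cluster_eq_of_conn (hw1 : conn d ω v w)]
  exact hinf.mono Set.inter_subset_left

/-- The merging lemma: if every infinite cluster meets the box and there is at
least one infinite cluster, then forcing the box open yields exactly one
infinite cluster. -/
lemma NI_forceOpen (n : ℕ) (ω : Config d) (hne : (NI d ω).Nonempty)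
    (hE : ∀ x, (cluster d ω x).Infinite → ∃ y, conn d ω x y ∧ inBox n y) :
    (NI d (forceOpen (boxEdges d n) ω)).encard = 1 := by
  set φ := forceOpen (boxEdges d n) ω with hφdef
  have hopen : ∀ e ∈ boxEdges d n, φ e = true := fun e he => forceOpen_of_mem he
  have hmono : ∀ {a b : Vert d}, conn d ω a b → conn d φ a b := fun h =>
    conn_mono forceOpen_mono h
  obtain ⟨S₀, ⟨⟨z₀, hz₀⟩, hS₀inf⟩⟩ := hne
  have hz₀inf : (cluster d ω z₀).Infinite := hz₀ ▸ hS₀inf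
  obtain ⟨y₀, hy₀conn, hy₀box⟩ := hE z₀ hz₀inf
  have hkey : NI d φ = {cluster d φ y₀} := by
    ext S
    constructor
    · rintro ⟨⟨x, rfl⟩, hSinf⟩
      obtain ⟨w, hwx, hwinf⟩ := exists_infinite_subcluster hSinf
      obtain ⟨y, hyconn, hybox⟩ := hE w hwinf
      have h1 : conn d φ x y := (hwx : conn d φ x w).trans (hmono hyconn)
      have h2 : conn d φ y y₀ := conn_box hopen hybox hy₀box
      exact Set.mem_singleton_iff.mpr (cluster_eq_of_conn (h1.trans h2))
    · rintro rfl
      refine ⟨⟨y₀, rfl⟩, ?_⟩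
      have : cluster d ω y₀ ⊆ cluster d φ y₀ := fun z hz => hmono hz
      refine Set.Infinite.mono this ?_
      rw [← cluster_eq_of_conn hy₀conn]
      exact hz₀inf
  rw [hkey, Set.encard_singleton]

end Box

/-! ### Measurability -/

section Meas

variable {d : ℕ}

lemma measSet_eval (e : Edge d) (b : Bool) : MeasurableSet {ω : Config d | ω e = b} := by
  have h : {ω : Config d | ω e = b} = (fun ω : Config d => ω e) ⁻¹' {b} := rfl
  rw [h]
  exact measurable_pi_apply e (measurableSet_singleton b)

lemma measSet_openStep (x y : Vert d) : MeasurableSet {ω : Config d | openStep d ω x y} := by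
  have : {ω : Config d | openStep d ω x y} =
      ⋃ i : Fin d, (({ω : Config d | ω (x, i) = true} ∩ {_ω : Config d | y = x + unitVec d i}) ∪
        ({ω : Config d | ω (y, i) = true} ∩ {_ω : Config d | x = y + unitVec d i})) := by
    ext ω; simp only [Set.mem_setOf_eq, Set.mem_iUnion, Set.mem_union, Set.mem_inter_iff,
      openStep]
  rw [this]
  exact MeasurableSet.iUnion fun i =>
    (((measSet_eval _ _).inter (MeasurableSet.const _)).union
      ((measSet_eval _ _).inter (MeasurableSet.const _)))

lemma measSet_chain : ∀ (l : List (Vert d)) (x : Vert d),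
    MeasurableSet {ω : Config d | List.Chain (openStep d ω) x l} := by
  intro l
  induction l with
  | nil =>
    intro x
    have h : {ω : Config d | List.Chain (openStep d ω) x List.nil} = Set.univ := by
      ext ω; simp [List.Chain]
    rw [h]; exact MeasurableSet.univ
  | cons a l ih =>
    intro x
    have : {ω : Config d | List.Chain (openStep d ω) x (a :: l)} =
        {ω : Config d | openStep d ω x a} ∩ {ω : Config d | List.Chain (openStep d ω) a l} := by
      ext ω; simp [List.Chain, List.isChain_cons_cons]
    rw [this]
    exact (measSet_openStep x a).inter (ih a)

lemma measSet_conn (x y : Vert d) : MeasurableSet {ω : Config d | conn d ω x y} := by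
  have : {ω : Config d | conn d ω x y} =
      ⋃ l : List (Vert d), {ω : Config d | List.Chain (openStep d ω) x l ∧
        (x :: l).getLast (List.cons_ne_nil _ _) = y} := by
    ext ω
    simp only [Set.mem_setOf_eq, Set.mem_iUnion]
    constructor
    · intro h
      exact List.exists_isChain_cons_of_relationReflTransGen h
    · rintro ⟨l, h1, h2⟩
      exact List.relationReflTransGen_of_exists_isChain_cons l h1 h2
  rw [this]
  exact MeasurableSet.iUnion fun l => (measSet_chain l x).inter (MeasurableSet.const _)

lemma cluster_infinite_iff {ω : Config d} {x : Vert d} :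
    (cluster d ω x).Infinite ↔ ∀ F : Finset (Vert d), ∃ y, conn d ω x y ∧ y ∉ F := by
  constructor
  · intro h F
    obtain ⟨y, hy⟩ := (h.diff F.finite_toSet).nonempty
    exact ⟨y, hy.1, hy.2⟩
  · intro h
    by_contra hfin
    rw [Set.not_infinite] at hfin
    obtain ⟨y, hy1, hy2⟩ := h hfin.toFinset
    exact hy2 (hfin.mem_toFinset.mpr hy1)

lemma measSet_cluster_infinite (x : Vert d) :
    MeasurableSet {ω : Config d | (cluster d ω x).Infinite} := by
  have : {ω : Config d | (cluster d ω x).Infinite} =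
      ⋂ F : Finset (Vert d), ⋃ y : Vert d,
        ({ω : Config d | conn d ω x y} ∩ {_ω : Config d | y ∉ F}) := by
    ext ω
    simp only [Set.mem_setOf_eq, Set.mem_iInter, Set.mem_iUnion, Set.mem_inter_iff]
    exact cluster_infinite_iff
  rw [this]
  exact MeasurableSet.iInter fun F => MeasurableSet.iUnion fun y =>
    (measSet_conn x y).inter (MeasurableSet.const _)

lemma NI_ge_iff {ω : Config d} {k : ℕ} :
    (k : ℕ∞) ≤ (NI d ω).encard ↔
      ∃ f : Fin k → Vert d, (∀ i, (cluster d ω (f i)).Infinite) ∧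
        ∀ i j, i ≠ j → ¬ conn d ω (f i) (f j) := by
  constructor
  · intro h
    obtain ⟨t, hsub, htcard⟩ := Set.exists_subset_encard_eq h
    have htfin : t.Finite := Set.finite_of_encard_eq_coe htcard
    have hcard : htfin.toFinset.card = k := by
      have := htcard
      rw [htfin.encard_eq_coe_toFinset_card] at this
      exact_mod_cast this
    let eqv := htfin.toFinset.equivFinOfCardEq hcard
    have hmem : ∀ i : Fin k, ((eqv.symm i : htfin.toFinset) : Set (Vert d)) ∈ t := fun i =>
      htfin.mem_toFinset.mp (eqv.symm i).2
    have hgi : ∀ i : Fin k, ∃ x, ((eqv.symm i : htfin.toFinset) : Set (Vert d)) = cluster d ω x ∧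
        (cluster d ω x).Infinite := by
      intro i
      obtain ⟨⟨x, hx⟩, hinf⟩ := hsub (hmem i)
      exact ⟨x, hx, hx ▸ hinf⟩
    choose f hf1 hf2 using hgi
    refine ⟨f, hf2, fun i j hne hconn => ?_⟩
    apply hne
    have : ((eqv.symm i : htfin.toFinset) : Set (Vert d)) =
        ((eqv.symm j : htfin.toFinset) : Set (Vert d)) := by
      rw [hf1 i, hf1 j]
      exact cluster_eq_of_conn hconn
    have := Subtype.ext this
    simpa using congrArg eqv this
  · rintro ⟨f, hinf, hdis⟩
    have hginj : Function.Injective (fun i => cluster d ω (f i)) := by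
      intro i j hij
      by_contra hne
      exact hdis i j hne (cluster_eq_iff.mp hij)
    have hrange : Set.range (fun i => cluster d ω (f i)) ⊆ NI d ω := by
      rintro S ⟨i, rfl⟩
      exact ⟨⟨f i, rfl⟩, hinf i⟩
    calc (k : ℕ∞) = (Set.range fun i => cluster d ω (f i)).encard := by
          rw [← Set.image_univ, hginj.encard_image, Set.encard_univ]
          simp
      _ ≤ (NI d ω).encard := Set.encard_le_encard hrange

lemma measSet_NI_ge (k : ℕ) :
    MeasurableSet {ω : Config d | (k : ℕ∞) ≤ (NI d ω).encard} := by
  have : {ω : Config d | (k : ℕ∞) ≤ (NI d ω).encard} =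
      ⋃ f : Fin k → Vert d,
        ((⋂ i, {ω : Config d | (cluster d ω (f i)).Infinite}) ∩
          (⋂ i, ⋂ j, {ω : Config d | i ≠ j → ¬ conn d ω (f i) (f j)})) := by
    ext ω
    simp only [Set.mem_setOf_eq, Set.mem_iUnion, Set.mem_inter_iff, Set.mem_iInter]
    exact NI_ge_iff
  rw [this]
  refine MeasurableSet.iUnion fun f => MeasurableSet.inter
    (MeasurableSet.iInter fun i => measSet_cluster_infinite (f i))
    (MeasurableSet.iInter fun i => MeasurableSet.iInter fun j => ?_)
  by_cases hij : i = j
  · have h : {ω : Config d | i ≠ j → ¬ conn d ω (f i) (f j)} = Set.univ := by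
      ext ω; simp [hij]
    rw [h]; exact MeasurableSet.univ
  · have : {ω : Config d | i ≠ j → ¬ conn d ω (f i) (f j)} =
        {ω : Config d | conn d ω (f i) (f j)}ᶜ := by
      ext ω; simp [hij]
    rw [this]
    exact (measSet_conn _ _).compl

lemma measSet_NI_eq (c : ℕ∞) :
    MeasurableSet {ω : Config d | (NI d ω).encard = c} := by
  cases c with
  | top =>
    have : {ω : Config d | (NI d ω).encard = ⊤} =
        ⋂ k : ℕ, {ω : Config d | (k : ℕ∞) ≤ (NI d ω).encard} := by
      ext ω
      simp only [Set.mem_setOf_eq, Set.mem_iInter]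
      constructor
      · intro h k; rw [h]; exact le_top
      · intro h
        by_contra hne
        obtain ⟨m, hm⟩ : ∃ m : ℕ, (NI d ω).encard = m := by
          cases hcase : (NI d ω).encard with
          | top => exact absurd hcase hne
          | coe m => exact ⟨m, rfl⟩
        have := h (m + 1)
        rw [hm] at this
        exact_mod_cast (by omega : ¬ (m + 1 ≤ m)) (by exact_mod_cast this)
    rw [this]
    exact MeasurableSet.iInter fun k => measSet_NI_ge k
  | coe k =>
    have : {ω : Config d | (NI d ω).encard = (k : ℕ∞)} =
        {ω : Config d | (k : ℕ∞) ≤ (NI d ω).encard} ∩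
          {ω : Config d | ((k + 1 : ℕ) : ℕ∞) ≤ (NI d ω).encard}ᶜ := by
      ext ω
      simp only [Set.mem_setOf_eq, Set.mem_inter_iff, Set.mem_compl_iff]
      constructor
      · intro h
        rw [h]
        refine ⟨le_rfl, ?_⟩
        intro hc
        exact_mod_cast (by omega : ¬ (k + 1 ≤ k)) (by exact_mod_cast hc)
      · rintro ⟨h1, h2⟩
        cases hcase : (NI d ω).encard with
        | top => rw [hcase] at h2; exact absurd le_top h2
        | coe m =>
          rw [hcase] at h1 h2
          have h1' : k ≤ m := by exact_mod_cast h1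
          have h2' : ¬ (k + 1 ≤ m) := fun hc => h2 (by exact_mod_cast hc)
          have : m = k := by omega
          exact_mod_cast this
    rw [this]
    exact (measSet_NI_ge k).inter (measSet_NI_ge (k + 1)).compl

lemma measSet_E (n : ℕ) :
    MeasurableSet {ω : Config d | ∀ x, (cluster d ω x).Infinite →
      ∃ y, conn d ω x y ∧ inBox n y} := by
  have : {ω : Config d | ∀ x, (cluster d ω x).Infinite → ∃ y, conn d ω x y ∧ inBox n y} =
      ⋂ x : Vert d, ({ω : Config d | (cluster d ω x).Infinite}ᶜ ∪
        ⋃ y : Vert d, ({ω : Config d | conn d ω x y} ∩ {_ω : Config d | inBox n y})) := by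
    ext ω
    simp only [Set.mem_setOf_eq, Set.mem_iInter, Set.mem_union, Set.mem_compl_iff,
      Set.mem_iUnion, Set.mem_inter_iff]
    constructor
    · intro h x
      by_cases hinf : (cluster d ω x).Infinite
      · exact Or.inr (by simpa using h x hinf)
      · exact Or.inl hinf
    · intro h x hinf
      rcases h x with h1 | h1
      · exact absurd hinf h1
      · simpa using h1
  rw [this]
  exact MeasurableSet.iInter fun x => MeasurableSet.union (measSet_cluster_infinite x).compl
    (MeasurableSet.iUnion fun y => (measSet_conn x y).inter (MeasurableSet.const _))

end Meas

/-! ### Cylinders, the product structure of `P`, and the shift -/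

section Cyl

variable {d : ℕ}

/-- A measurable cylinder. -/
def cylSet (F : Finset (Edge d)) (t : Edge d → Set Bool) : Set (Config d) :=
  ⋂ e ∈ F, (fun ω : Config d => ω e) ⁻¹' t e

lemma measSet_cylSet {F : Finset (Edge d)} {t : Edge d → Set Bool} :
    MeasurableSet (cylSet F t) :=
  MeasurableSet.biInter F.countable_toSet fun e _ =>
    measurable_pi_apply e ((t e).to_countable.measurableSet)

def cylPi (d : ℕ) : Set (Set (Config d)) := {s | ∃ F t, s = cylSet F t}

lemma isPiSystem_cylPi : IsPiSystem (cylPi d) := by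
  rintro s1 ⟨F1, t1, rfl⟩ s2 ⟨F2, t2, rfl⟩ -
  refine ⟨F1 ∪ F2, fun e =>
    (if e ∈ F1 then t1 e else Set.univ) ∩ (if e ∈ F2 then t2 e else Set.univ), ?_⟩
  ext ω
  simp only [cylSet, Set.mem_inter_iff, Set.mem_iInter, Set.mem_preimage, Finset.mem_union]
  constructor
  · rintro ⟨h1, h2⟩ e he
    constructor <;> split
    · exact h1 _ ‹_›
    · exact Set.mem_univ _
    · exact h2 _ ‹_›
    · exact Set.mem_univ _
  · intro h
    constructor
    · intro e he
      have := (h e (Or.inl he)).1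
      rwa [if_pos he] at this
    · intro e he
      have := (h e (Or.inr he)).2
      rwa [if_pos he] at this

lemma generateFrom_cylPi :
    (inferInstance : MeasurableSpace (Config d)) = .generateFrom (cylPi d) := by
  apply le_antisymm
  · have heval : ∀ e : Edge d,
        Measurable[MeasurableSpace.generateFrom (cylPi d)] (fun ω : Config d => ω e) := by
      intro e s _
      refine MeasurableSpace.measurableSet_generateFrom ⟨{e}, fun _ => s, ?_⟩
      ext ω
      simp only [cylSet, Set.mem_iInter, Finset.mem_singleton, Set.mem_preimage]
      exact ⟨fun h e' he' => he' ▸ h, fun h => h e rfl⟩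
    exact iSup_le fun e => measurable_iff_comap_le.mp (heval e)
  · refine MeasurableSpace.generateFrom_le ?_
    rintro s ⟨F, t, rfl⟩
    exact measSet_cylSet

variable {p : ℝ} {P : Measure (Config d)} [IsProbabilityMeasure P]

lemma P_eval (hcoord : ∀ e : Edge d, P.map (fun ω => ω e) = bern p)
    (e : Edge d) (t : Set Bool) : P ((fun ω : Config d => ω e) ⁻¹' t) = bern p t := by
  rw [← Measure.map_apply (measurable_pi_apply e) (t.to_countable.measurableSet), hcoord e]

lemma P_cylSet
    (hcoord : ∀ e : Edge d, P.map (fun ω => ω e) = bern p)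
    (hindep : iIndepFun (fun (e : Edge d) (ω : Config d) => ω e) P)
    (F : Finset (Edge d)) (t : Edge d → Set Bool) :
    P (cylSet F t) = ∏ e ∈ F, bern p (t e) := by
  have h := hindep.measure_inter_preimage_eq_mul F
    (sets := t) (fun e _ => (t e).to_countable.measurableSet)
  rw [cylSet]
  rw [h]
  exact Finset.prod_congr rfl fun e _ => P_eval hcoord e (t e)

/-- Translation acting on configurations. -/
def shiftCfg (v : Vert d) (ω : Config d) : Config d := fun e => ω (e.1 + v, e.2)

lemma measurable_shiftCfg (v : Vert d) : Measurable (shiftCfg (d := d) v) :=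
  measurable_pi_iff.mpr fun _ => measurable_pi_apply _

lemma shiftCfg_comp (v w : Vert d) (ω : Config d) :
    shiftCfg v (shiftCfg w ω) = shiftCfg (v + w) ω := by
  funext e
  simp only [shiftCfg]
  congr 1
  ext : 1
  · simp [add_assoc]
  · rfl

/-- Translation acting on edges. -/
def eShift (d : ℕ) (v : Vert d) : Edge d ≃ Edge d :=
  (Equiv.addRight v).prodCongr (Equiv.refl _)

lemma eShift_apply (v : Vert d) (e : Edge d) : eShift d v e = (e.1 + v, e.2) := rfl

lemma shiftCfg_preimage_cylSet (v : Vert d) (F : Finset (Edge d)) (t : Edge d → Set Bool) :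
    (shiftCfg v) ⁻¹' (cylSet F t) =
      cylSet (F.image (eShift d v)) (fun e => t ((eShift d v).symm e)) := by
  ext ω
  simp only [cylSet, Set.mem_preimage, Set.mem_iInter, Finset.mem_image]
  constructor
  · rintro h e' ⟨e, he, rfl⟩
    rw [Equiv.symm_apply_apply]
    exact h e he
  · intro h e he
    have := h (eShift d v e) ⟨e, he, rfl⟩
    rwa [Equiv.symm_apply_apply] at this

lemma map_shiftCfg
    (hcoord : ∀ e : Edge d, P.map (fun ω => ω e) = bern p)
    (hindep : iIndepFun (fun (e : Edge d) (ω : Config d) => ω e) P)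
    (v : Vert d) : P.map (shiftCfg v) = P := by
  refine ext_of_generate_finite (cylPi d) generateFrom_cylPi isPiSystem_cylPi ?_ ?_
  · rintro s ⟨F, t, rfl⟩
    rw [Measure.map_apply (measurable_shiftCfg v) measSet_cylSet,
      shiftCfg_preimage_cylSet, P_cylSet hcoord hindep, P_cylSet hcoord hindep,
      Finset.prod_image]
    · refine Finset.prod_congr rfl fun e _ => ?_
      rw [Equiv.symm_apply_apply]
    · intro a _ b _ hab
      exact (eShift d v).injective hab
  · rw [Measure.map_apply (measurable_shiftCfg v) MeasurableSet.univ]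
    simp

lemma P_shift_preimage
    (hcoord : ∀ e : Edge d, P.map (fun ω => ω e) = bern p)
    (hindep : iIndepFun (fun (e : Edge d) (ω : Config d) => ω e) P)
    (v : Vert d) {A : Set (Config d)} (hA : MeasurableSet A) :
    P ((shiftCfg v) ⁻¹' A) = P A := by
  rw [← Measure.map_apply (measurable_shiftCfg v) hA, map_shiftCfg hcoord hindep]

end Cyl

/-! ### The finite-coordinate set algebra and the zero-one law -/

open scoped symmDiff

section Alg

variable {d : ℕ}

def restr (F : Finset (Edge d)) (ω : Config d) : {e // e ∈ F} → Bool := fun e => ω e.1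

def cylAlg (F : Finset (Edge d)) : Set (Set (Config d)) :=
  {s | ∃ t : Set ({e // e ∈ F} → Bool), s = restr F ⁻¹' t}

def algFin (d : ℕ) : Set (Set (Config d)) := {s | ∃ F, s ∈ cylAlg F}

lemma cylAlg_mono {F G : Finset (Edge d)} (h : F ⊆ G) : cylAlg F ⊆ cylAlg G := by
  rintro s ⟨t, rfl⟩
  exact ⟨(fun (g : {e // e ∈ G} → Bool) (e : {e // e ∈ F}) => g ⟨e.1, h e.2⟩) ⁻¹' t, rfl⟩

lemma isSetAlgebra_algFin : IsSetAlgebra (algFin d) where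
  empty_mem := ⟨∅, ∅, by simp⟩
  compl_mem := by
    rintro s ⟨F, t, rfl⟩
    exact ⟨F, tᶜ, rfl⟩
  union_mem := by
    rintro s1 s2 ⟨F1, t1, rfl⟩ ⟨F2, t2, rfl⟩
    obtain ⟨t1', h1⟩ := cylAlg_mono Finset.subset_union_left (⟨t1, rfl⟩ :
      restr F1 ⁻¹' t1 ∈ cylAlg F1)
    obtain ⟨t2', h2⟩ := cylAlg_mono Finset.subset_union_right (⟨t2, rfl⟩ :
      restr F2 ⁻¹' t2 ∈ cylAlg F2)
    exact ⟨F1 ∪ F2, t1' ∪ t2', by rw [h1, h2, Set.preimage_union]⟩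

lemma measurable_restr (F : Finset (Edge d)) : Measurable (restr F) :=
  measurable_pi_iff.mpr fun e => measurable_pi_apply e.1

lemma cylPi_subset_algFin : cylPi d ⊆ algFin d := by
  rintro s ⟨F, t, rfl⟩
  refine ⟨F, {g : {e // e ∈ F} → Bool | ∀ e : {e // e ∈ F}, g e ∈ t e.1}, ?_⟩
  ext ω
  simp only [cylSet, Set.mem_iInter, Set.mem_preimage, Set.mem_setOf_eq, restr]
  exact ⟨fun h e => h e.1 e.2, fun h e he => h ⟨e, he⟩⟩

lemma generateFrom_algFin :
    (inferInstance : MeasurableSpace (Config d)) = .generateFrom (algFin d) := by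
  apply le_antisymm
  · rw [generateFrom_cylPi]
    exact MeasurableSpace.generateFrom_mono cylPi_subset_algFin
  · refine MeasurableSpace.generateFrom_le ?_
    rintro s ⟨F, t, rfl⟩
    exact measurable_restr F (t.to_countable.measurableSet)

/-- The coordinate σ-algebras. -/
def mFam (e : Edge d) : MeasurableSpace (Config d) :=
  MeasurableSpace.comap (fun ω => ω e) inferInstance

lemma mFam_le (e : Edge d) : mFam e ≤ (inferInstance : MeasurableSpace (Config d)) :=
  (measurable_pi_apply e).comap_le

lemma measSet_biSup_of_cylAlg {F : Finset (Edge d)} {s : Set (Config d)}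
    (hs : s ∈ cylAlg F) {T : Set (Edge d)} (hFT : ↑F ⊆ T) :
    MeasurableSet[⨆ e ∈ T, mFam e] s := by
  obtain ⟨t, rfl⟩ := hs
  have h1 : ∀ g : {e // e ∈ F} → Bool, MeasurableSet[⨆ e ∈ T, mFam e] (restr F ⁻¹' {g}) := by
    intro g
    have heq : restr F ⁻¹' {g} = ⋂ e : {e // e ∈ F}, (fun ω : Config d => ω e.1) ⁻¹' {g e} := by
      ext ω
      simp only [Set.mem_preimage, Set.mem_singleton_iff, Set.mem_iInter, restr]
      exact ⟨fun h e => congrFun h e, fun h => funext h⟩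
    rw [heq]
    refine MeasurableSet.iInter fun e => ?_
    have hm : MeasurableSet[mFam e.1] ((fun ω : Config d => ω e.1) ⁻¹' {g e}) :=
      MeasurableSpace.measurableSet_comap.mpr
        ⟨{g e}, (Set.to_countable _).measurableSet, rfl⟩
    exact (le_iSup₂ (f := fun e (_ : e ∈ T) => mFam e) e.1 (hFT e.2)) _ hm
  have heq2 : restr F ⁻¹' t = ⋃ g ∈ t, restr F ⁻¹' {g} := by
    ext ω
    simp only [Set.mem_preimage, Set.mem_iUnion, Set.mem_singleton_iff]
    exact ⟨fun h => ⟨restr F ω, h, rfl⟩, fun ⟨g, hg, hgeq⟩ => hgeq ▸ hg⟩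
  rw [heq2]
  exact MeasurableSet.biUnion t.to_countable fun g _ => h1 g

variable {p : ℝ} {P : Measure (Config d)} [IsProbabilityMeasure P]

lemma P_indep_inter
    (hindep : iIndepFun (fun (e : Edge d) (ω : Config d) => ω e) P)
    {T : Set (Edge d)} {A B : Set (Config d)}
    (hA : MeasurableSet[⨆ e ∈ T, mFam e] A) (hB : MeasurableSet[⨆ e ∈ Tᶜ, mFam e] B) :
    P (A ∩ B) = P A * P B := by
  have h : iIndep (mFam (d := d)) P := (iIndepFun_iff_iIndep _ _ _).mp hindep
  exact (Indep_iff _ _ P).mp (indep_biSup_compl mFam_le h T) A B hA hB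

end Alg

/-! ### Zero-one law for shift invariant events -/

section ZeroOne

variable {d : ℕ} {p : ℝ} {P : Measure (Config d)} [IsProbabilityMeasure P]

lemma shiftCfg_zero : shiftCfg (0 : Vert d) = id := by
  funext ω e
  simp [shiftCfg]

lemma zero_one_of_shift_invariant
    (hcoord : ∀ e : Edge d, P.map (fun ω => ω e) = bern p)
    (hindep : iIndepFun (fun (e : Edge d) (ω : Config d) => ω e) P)
    (hd1 : 0 < d) {A : Set (Config d)} (hA : MeasurableSet A)
    (hInv : (shiftCfg (unitVec d ⟨0, hd1⟩)) ⁻¹' A = A) :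
    P A = 0 ∨ P A = 1 := by
  set i0 : Fin d := ⟨0, hd1⟩ with hi0
  set v : Vert d := unitVec d i0 with hv
  have hInvn : ∀ m : ℕ, (shiftCfg (m • v)) ⁻¹' A = A := by
    intro m
    induction m with
    | zero => rw [zero_smul, shiftCfg_zero]; rfl
    | succ m ih =>
      have hcomp : shiftCfg ((m + 1) • v) = shiftCfg (m • v) ∘ shiftCfg v := by
        funext ω
        rw [Function.comp_apply, shiftCfg_comp, succ_nsmul]
      rw [hcomp, Set.preimage_comp, ih, hInv]
  have hdense := Measure.MeasureDense.of_generateFrom_isSetAlgebra_finite (μ := P)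
    isSetAlgebra_algFin generateFrom_algFin
  set a := (P A).toReal with ha_def
  have key : ∀ ε : ℝ, 0 < ε → |a - a * a| ≤ 4 * ε := by
    intro ε hε
    obtain ⟨C, ⟨F, hCF⟩, hPC⟩ := hdense.approx A hA (measure_ne_top P A) ε hε
    have hCmeas : MeasurableSet C := by
      obtain ⟨t, rfl⟩ := hCF
      exact measurable_restr F (t.to_countable.measurableSet)
    set S := F.sup (fun e => (e.1 i0).natAbs) with hS
    set m : ℕ := 2 * S + 1 with hm
    set w : Vert d := m • v with hwdef
    have hw : w i0 = (m : ℤ) := by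
      rw [hwdef, Pi.smul_apply, hv]
      simp [unitVec]
    have hdisj : ∀ e ∈ F, eShift d w e ∉ F := by
      intro e he hmem
      have h1 : (e.1 i0).natAbs ≤ S := Finset.le_sup (f := fun e => (e.1 i0).natAbs) he
      have h2 : (((eShift d w e).1) i0).natAbs ≤ S :=
        Finset.le_sup (f := fun e => (e.1 i0).natAbs) hmem
      have h2' : ((e.1 + w) i0).natAbs ≤ S := h2
      have h3 : (e.1 + w) i0 = e.1 i0 + (m : ℤ) := by rw [Pi.add_apply, hw]
      rw [h3] at h2'
      omega
    set C' := (shiftCfg w) ⁻¹' C with hC'def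
    have hC'alg : C' ∈ cylAlg (F.image (eShift d w)) := by
      obtain ⟨t, rfl⟩ := hCF
      exact ⟨(fun (g : {e // e ∈ F.image (eShift d w)} → Bool) (e : {e // e ∈ F}) =>
        g ⟨eShift d w e.1, Finset.mem_image_of_mem _ e.2⟩) ⁻¹' t, rfl⟩
    have hCmF : MeasurableSet[⨆ e ∈ (↑F : Set (Edge d)), mFam e] C :=
      measSet_biSup_of_cylAlg hCF subset_rfl
    have hsub' : (↑(F.image (eShift d w)) : Set (Edge d)) ⊆ (↑F : Set (Edge d))ᶜ := by
      intro e' he'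
      rw [Finset.coe_image] at he'
      obtain ⟨e, he, rfl⟩ := he'
      exact hdisj e he
    have hC'mF : MeasurableSet[⨆ e ∈ ((↑F : Set (Edge d)))ᶜ, mFam e] C' :=
      measSet_biSup_of_cylAlg hC'alg hsub'
    have hmul : P (C ∩ C') = P C * P C' := P_indep_inter hindep hCmF hC'mF
    have hC'meas : MeasurableSet C' := (measurable_shiftCfg w) hCmeas
    have hPC' : P C' = P C := P_shift_preimage hcoord hindep w hCmeas
    have hAA : A ∩ ((shiftCfg w) ⁻¹' A) = A := by rw [hInvn m, Set.inter_self]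
    have hsymm_sub : (A ∩ ((shiftCfg w) ⁻¹' A)) ∆ (C ∩ C') ⊆
        (A ∆ C) ∪ (((shiftCfg w) ⁻¹' A) ∆ C') := by
      intro x hx
      simp only [Set.mem_symmDiff, Set.mem_union, Set.mem_inter_iff] at hx ⊢
      tauto
    have hshift_symm : ((shiftCfg w) ⁻¹' A) ∆ C' = (shiftCfg w) ⁻¹' (A ∆ C) := by
      rw [hC'def, Set.symmDiff_def, Set.symmDiff_def, Set.preimage_union,
        Set.preimage_diff, Set.preimage_diff]
    have hbound : P ((A ∩ ((shiftCfg w) ⁻¹' A)) ∆ (C ∩ C')) ≤ 2 * P (A ∆ C) := by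
      calc P ((A ∩ ((shiftCfg w) ⁻¹' A)) ∆ (C ∩ C'))
          ≤ P ((A ∆ C) ∪ (((shiftCfg w) ⁻¹' A) ∆ C')) := measure_mono hsymm_sub
        _ ≤ P (A ∆ C) + P (((shiftCfg w) ⁻¹' A) ∆ C') := measure_union_le _ _
        _ = P (A ∆ C) + P (A ∆ C) := by
            rw [hshift_symm, P_shift_preimage hcoord hindep w (hA.symmDiff hCmeas)]
        _ = 2 * P (A ∆ C) := by ring
    set c := (P C).toReal with hc_def
    have hPsymm_lt : (P (A ∆ C)).toReal < ε := by
      have h := hPC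
      rw [← ENNReal.ofReal_toReal (measure_ne_top P (A ∆ C))] at h
      exact (ENNReal.ofReal_lt_ofReal_iff_of_nonneg ENNReal.toReal_nonneg).mp h
    have h1 : |a - c| ≤ (P (A ∆ C)).toReal :=
      abs_measureReal_sub_le_measureReal_symmDiff hA.nullMeasurableSet
        hCmeas.nullMeasurableSet
    have h2 : |a - c * c| ≤ 2 * ε := by
      have hX : a = (P (A ∩ ((shiftCfg w) ⁻¹' A))).toReal := by rw [hAA]
      have hY : (P (C ∩ C')).toReal = c * c := by
        rw [hmul, hPC', ENNReal.toReal_mul]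
      have habs : |a - c * c| ≤ (P ((A ∩ ((shiftCfg w) ⁻¹' A)) ∆ (C ∩ C'))).toReal := by
        rw [hX, ← hY]
        exact abs_measureReal_sub_le_measureReal_symmDiff
          (hA.inter ((measurable_shiftCfg w) hA)).nullMeasurableSet
          (hCmeas.inter hC'meas).nullMeasurableSet
      refine habs.trans ?_
      have : (P ((A ∩ ((shiftCfg w) ⁻¹' A)) ∆ (C ∩ C'))).toReal ≤ (2 * P (A ∆ C)).toReal :=
        ENNReal.toReal_mono (by
          refine ENNReal.mul_ne_top (by norm_num) (measure_ne_top P _)) hbound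
      refine this.trans ?_
      rw [ENNReal.toReal_mul]
      norm_num
      linarith [hPsymm_lt]
    have hc1 : c ≤ 1 := by
      rw [hc_def]
      exact ENNReal.toReal_le_of_le_ofReal zero_le_one (by simpa using prob_le_one (μ := P) (s := C))
    have ha1 : a ≤ 1 := by
      rw [ha_def]
      exact ENNReal.toReal_le_of_le_ofReal zero_le_one (by simpa using prob_le_one (μ := P) (s := A))
    have hc0 : 0 ≤ c := ENNReal.toReal_nonneg
    have ha0 : 0 ≤ a := ENNReal.toReal_nonneg
    have h3 : |c * c - a * a| ≤ 2 * ε := by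
      have : c * c - a * a = (c + a) * (c - a) := by ring
      rw [this, abs_mul]
      have hca : |c - a| ≤ ε := by
        rw [abs_sub_comm]
        linarith [h1, hPsymm_lt]
      have hcpa : |c + a| ≤ 2 := by
        rw [abs_le]; constructor <;> linarith
      exact mul_le_mul hcpa hca (abs_nonneg _) (by norm_num)
    calc |a - a * a| ≤ |a - c * c| + |c * c - a * a| := abs_sub_le _ _ _
      _ ≤ 2 * ε + 2 * ε := add_le_add h2 h3
      _ = 4 * ε := by ring
  have heq : a = a * a := by
    by_contra h
    have hpos : 0 < |a - a * a| := abs_pos.mpr (sub_ne_zero.mpr h)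
    have := key (|a - a * a| / 8) (by positivity)
    linarith
  have hcases : a = 0 ∨ a = 1 := by
    have h0 : a * (1 - a) = 0 := by nlinarith [heq]
    rcases mul_eq_zero.mp h0 with h | h
    · exact Or.inl h
    · exact Or.inr (by linarith)
  rcases hcases with h | h
  · left
    rcases (ENNReal.toReal_eq_zero_iff (P A)).mp h with h' | h'
    · exact h'
    · exact absurd h' (measure_ne_top P A)
  · right
    have : P A = ENNReal.ofReal a := by
      rw [ha_def, ENNReal.ofReal_toReal (measure_ne_top P A)]
    rw [this, h]
    simp

end ZeroOne

/-! ### Shift invariance of the number of infinite clusters -/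

section ShiftNI

variable {d : ℕ}

lemma openStep_shift {v : Vert d} {ω : Config d} {x y : Vert d} :
    openStep d (shiftCfg v ω) x y ↔ openStep d ω (x + v) (y + v) := by
  unfold openStep shiftCfg
  constructor
  · rintro ⟨i, ⟨h1, h2⟩ | ⟨h1, h2⟩⟩
    · exact ⟨i, Or.inl ⟨h1, by rw [h2]; ring⟩⟩
    · exact ⟨i, Or.inr ⟨h1, by rw [h2]; ring⟩⟩
  · rintro ⟨i, ⟨h1, h2⟩ | ⟨h1, h2⟩⟩
    · refine ⟨i, Or.inl ⟨h1, ?_⟩⟩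
      have : y + v = x + v + unitVec d i := h2
      have h3 : y = x + v + unitVec d i - v := by rw [← this]; ring
      rw [h3]; ring
    · refine ⟨i, Or.inr ⟨h1, ?_⟩⟩
      have h3 : x = y + v + unitVec d i - v := by rw [← h2]; ring
      rw [h3]; ring

lemma conn_shift {v : Vert d} {ω : Config d} {x y : Vert d} :
    conn d (shiftCfg v ω) x y ↔ conn d ω (x + v) (y + v) := by
  constructor
  · intro h
    induction h with
    | refl => exact Relation.ReflTransGen.refl
    | tail _ hbc ih => exact ih.tail (openStep_shift.mp hbc)
  · intro h
    have haux : ∀ a b : Vert d, conn d ω a b → conn d (shiftCfg v ω) (a - v) (b - v) := by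
      intro a b hab
      induction hab with
      | refl => exact Relation.ReflTransGen.refl
      | tail _ hbc ih =>
        refine ih.tail (openStep_shift.mpr ?_)
        simpa using hbc
    have := haux (x + v) (y + v) h
    simpa using this

lemma cluster_shift {v : Vert d} {ω : Config d} {x : Vert d} :
    cluster d (shiftCfg v ω) x = (fun z => z - v) '' cluster d ω (x + v) := by
  ext y
  simp only [mem_cluster, Set.mem_image]
  constructor
  · intro h
    exact ⟨y + v, conn_shift.mp h, by ring⟩
  · rintro ⟨z, hz, rfl⟩
    refine conn_shift.mpr ?_
    simpa using hz

lemma NI_shift {v : Vert d} {ω : Config d} :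
    NI d (shiftCfg v ω) = (fun S => (fun z => z - v) '' S) '' NI d ω := by
  have hinj : Function.Injective (fun z : Vert d => z - v) := fun a b h => by
    have h' : a - v = b - v := h
    have : a - v + v = b - v + v := by rw [h']
    simpa using this
  ext S
  constructor
  · rintro ⟨⟨x, rfl⟩, hinf⟩
    refine ⟨cluster d ω (x + v), ⟨⟨x + v, rfl⟩, ?_⟩, cluster_shift.symm⟩
    have := cluster_shift (v := v) (ω := ω) (x := x) ▸ hinf
    exact Set.Infinite.of_image _ this
  · rintro ⟨C, ⟨⟨z, rfl⟩, hinf⟩, rfl⟩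
    refine ⟨⟨z - v, ?_⟩, hinf.image hinj.injOn⟩
    rw [cluster_shift]
    have : z - v + v = z := by ring
    rw [this]
  
lemma encard_NI_shift {v : Vert d} {ω : Config d} :
    (NI d (shiftCfg v ω)).encard = (NI d ω).encard := by
  rw [NI_shift]
  have hinj : Function.Injective (fun z : Vert d => z - v) := fun a b h => by
    have h' : a - v = b - v := h
    have : a - v + v = b - v + v := by rw [h']
    simpa using this
  exact Function.Injective.encard_image (Set.image_injective.mpr hinj) _

end ShiftNI

/-! ### Values of the Bernoulli measure -/

lemma bern_true (p : ℝ) : bern p {true} = ENNReal.ofReal p := by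
  rw [bern]
  simp [Measure.dirac_apply' _ (measurableSet_singleton _)]

/-! ### Main theorem -/


/-- **Number of infinite clusters.** In bond percolation on `ℤ^d` (`d ≥ 2`)
with parameter `p`, the number `N` of infinite open clusters is almost surely
constant, and this constant is `0`, `1`, or `∞`. -/
theorem number_of_infinite_clusters (d : ℕ) (hd : 2 ≤ d)
    (p : ℝ) (hp0 : 0 ≤ p) (hp1 : p ≤ 1)
    (P : Measure (Config d)) [IsProbabilityMeasure P]
    (hcoord : ∀ e : Edge d, P.map (fun ω => ω e) = bern p)
    (hindep : iIndepFun (fun (e : Edge d) (ω : Config d) => ω e) P) :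
    ∃ c : ℕ∞, (c = 0 ∨ c = 1 ∨ c = ⊤) ∧
      ∀ᵐ ω ∂P,
        Set.encard {S : Set (Vert d) | (∃ x, S = cluster d ω x) ∧ S.Infinite} = c := by
  classical
  have hd1 : 0 < d := by omega
  set Ac : ℕ∞ → Set (Config d) := fun c => {ω | (NI d ω).encard = c} with hAc
  have hAcm : ∀ c, MeasurableSet (Ac c) := fun c => measSet_NI_eq c
  have hinvAc : ∀ c, (shiftCfg (unitVec d ⟨0, hd1⟩)) ⁻¹' (Ac c) = Ac c := by
    intro c
    ext ω
    simp only [Set.mem_preimage, hAc, Set.mem_setOf_eq]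
    rw [encard_NI_shift]
  have hZO := fun c => zero_one_of_shift_invariant hcoord hindep hd1 (hAcm c) (hinvAc c)
  have hex : ∃ c, P (Ac c) = 1 := by
    by_contra hno
    push_neg at hno
    have hall : ∀ c, P (Ac c) = 0 := fun c => (hZO c).resolve_right (hno c)
    have hcover : (Set.univ : Set (Config d)) ⊆ ⋃ c : ℕ∞, Ac c := fun ω _ =>
      Set.mem_iUnion.mpr ⟨(NI d ω).encard, rfl⟩
    have h0 : P Set.univ = 0 :=
      le_antisymm ((measure_mono hcover).trans (le_of_eq (measure_iUnion_null hall)))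
        zero_le
    rw [measure_univ] at h0
    exact one_ne_zero h0
  obtain ⟨c, hc⟩ := hex
  have hae : ∀ᵐ ω ∂P, (NI d ω).encard = c := by
    rw [ae_iff]
    have hrw : {ω : Config d | ¬ (NI d ω).encard = c} = (Ac c)ᶜ := rfl
    rw [hrw]
    exact (prob_compl_eq_zero_iff (hAcm c)).mpr hc
  refine ⟨c, ?_, hae⟩
  by_contra hbad
  push_neg at hbad
  obtain ⟨hb0, hb1, hbT⟩ := hbad
  obtain ⟨k, rfl, hk2⟩ : ∃ k : ℕ, c = (k : ℕ∞) ∧ 2 ≤ k := by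
    cases c with
    | top => exact absurd rfl hbT
    | coe k =>
      refine ⟨k, rfl, ?_⟩
      by_contra hlt
      have hk : k = 0 ∨ k = 1 := by omega
      rcases hk with rfl | rfl
      · exact hb0 (by norm_num)
      · exact hb1 (by norm_num)
  -- rule out p = 0
  have hppos : 0 < p := by
    rcases eq_or_lt_of_le hp0 with heq | h
    swap
    · exact h
    exfalso
    have hnull : P (⋃ e : Edge d, {ω : Config d | ω e = true}) = 0 := by
      refine measure_iUnion_null fun e => ?_
      have h1 : {ω : Config d | ω e = true} = (fun ω : Config d => ω e) ⁻¹' {true} := rfl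
      rw [h1, P_eval hcoord e {true}, bern_true, ← heq]
      simp
    have hae0 : ∀ᵐ ω ∂P, (NI d ω).encard = 0 := by
      have hsub : {ω : Config d | ¬ (NI d ω).encard = 0} ⊆
          ⋃ e : Edge d, {ω : Config d | ω e = true} := by
        intro ω hω
        by_contra hnmem
        simp only [Set.mem_iUnion, Set.mem_setOf_eq, not_exists] at hnmem
        apply hω
        have hstep : ∀ x y : Vert d, ¬ openStep d ω x y := by
          rintro x y ⟨i, ⟨h1, _⟩ | ⟨h1, _⟩⟩
          exacts [hnmem _ h1, hnmem _ h1]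
        have hclus : ∀ x, cluster d ω x = {x} := by
          intro x
          ext y
          simp only [mem_cluster, Set.mem_singleton_iff]
          constructor
          · intro h
            induction h with
            | refl => rfl
            | tail _ hbc _ => exact absurd hbc (hstep _ _)
          · rintro rfl
            exact Relation.ReflTransGen.refl
        have hempty : NI d ω = ∅ := by
          ext S
          simp only [NI, Set.mem_setOf_eq, Set.mem_empty_iff_false, iff_false, not_and]
          rintro ⟨x, rfl⟩
          rw [hclus x]
          exact fun h => h (Set.finite_singleton x)
        rw [hempty, Set.encard_empty]
      exact ae_iff.mpr (measure_mono_null hsub hnull)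
    have h0 : P (Ac (0 : ℕ∞)) = 1 := by
      have := ae_iff.mp hae0
      have hrw : {ω : Config d | ¬ (NI d ω).encard = 0} = (Ac (0 : ℕ∞))ᶜ := rfl
      rw [hrw] at this
      exact (prob_compl_eq_zero_iff (hAcm 0)).mp this
    have hP0c : P (Ac (0 : ℕ∞))ᶜ = 0 := (prob_compl_eq_zero_iff (hAcm 0)).mpr h0
    have hsub2 : Ac ((k : ℕ) : ℕ∞) ⊆ (Ac (0 : ℕ∞))ᶜ := by
      intro ω hω h0ω
      have h1 : ((k : ℕ) : ℕ∞) = 0 := by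
        rw [← hω]
        exact h0ω
      have : k = 0 := by exact_mod_cast h1
      omega
    have : P (Ac ((k : ℕ) : ℕ∞)) = 0 := measure_mono_null hsub2 hP0c
    rw [hc] at this
    exact one_ne_zero this
  -- existence of a good box
  set En : ℕ → Set (Config d) := fun n =>
    {ω | ∀ x, (cluster d ω x).Infinite → ∃ y, conn d ω x y ∧ inBox n y} with hEn
  have hsubE : Ac ((k : ℕ) : ℕ∞) ⊆ ⋃ n : ℕ, (Ac ((k : ℕ) : ℕ∞) ∩ En n) := by
    intro ω hω
    have hfin : (NI d ω).Finite := Set.finite_of_encard_eq_coe hω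
    set b : Set (Vert d) → ℕ := fun S =>
      if h : S.Nonempty then Finset.univ.sup (fun j => (h.choose j).natAbs) else 0 with hb
    have hbspec : ∀ S : Set (Vert d), ∀ h : S.Nonempty, ∃ y ∈ S, inBox (b S) y := by
      intro S hS
      refine ⟨hS.choose, hS.choose_spec, ?_⟩
      intro j
      rw [hb]
      simp only [dif_pos hS]
      have h1 : (hS.choose j).natAbs ≤ Finset.univ.sup (fun j => (hS.choose j).natAbs) :=
        Finset.le_sup (f := fun j => (hS.choose j).natAbs) (Finset.mem_univ j)
      rw [Int.abs_eq_natAbs]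
      exact_mod_cast h1
    obtain ⟨n, hn⟩ := (hfin.image b).bddAbove
    refine Set.mem_iUnion.mpr ⟨n, hω, ?_⟩
    intro x hx
    have hmem : cluster d ω x ∈ NI d ω := ⟨⟨x, rfl⟩, hx⟩
    have hne : (cluster d ω x).Nonempty := ⟨x, Relation.ReflTransGen.refl⟩
    obtain ⟨y, hy1, hy2⟩ := hbspec _ hne
    refine ⟨y, hy1, ?_⟩
    intro j
    have hble : b (cluster d ω x) ≤ n := hn (Set.mem_image_of_mem b hmem)
    calc |y j| ≤ (b (cluster d ω x) : ℤ) := hy2 j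
      _ ≤ (n : ℤ) := by exact_mod_cast hble
  have hexn : ∃ n, P (Ac ((k : ℕ) : ℕ∞) ∩ En n) ≠ 0 := by
    by_contra hno
    push_neg at hno
    have : P (Ac ((k : ℕ) : ℕ∞)) = 0 :=
      measure_mono_null hsubE (measure_iUnion_null hno)
    rw [hc] at this
    exact one_ne_zero this
  obtain ⟨n, hn0⟩ := hexn
  set F := boxEdges d n with hFdef
  set φ := forceOpen F with hφdef
  have hforce : Ac ((k : ℕ) : ℕ∞) ∩ En n ⊆ φ ⁻¹' (Ac (1 : ℕ∞)) := by
    rintro ω ⟨hωk, hωE⟩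
    have hne : (NI d ω).Nonempty := by
      rw [Set.nonempty_iff_ne_empty]
      intro hemp
      have h1 := hωk
      rw [Set.mem_setOf_eq] at h1
      rw [hemp, Set.encard_empty] at h1
      have : k = 0 := by exact_mod_cast h1.symm
      omega
    exact NI_forceOpen n ω hne hωE
  -- finite energy
  set M := ⨆ e ∈ ((↑F : Set (Edge d)))ᶜ, mFam e with hM
  have hφm : @Measurable (Config d) (Config d) M MeasurableSpace.pi φ := by
    refine (@measurable_pi_iff (Config d) (Edge d) (fun _ => Bool) M _ φ).mpr fun e => ?_
    by_cases he : e ∈ F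
    · have hconst : (fun ω : Config d => φ ω e) = fun _ => true :=
        funext fun ω => if_pos he
      rw [hconst]
      exact @measurable_const Bool (Config d) _ M true
    · have hev : (fun ω : Config d => φ ω e) = fun ω : Config d => ω e :=
        funext fun ω => if_neg he
      rw [hev]
      have hle : mFam e ≤ M := le_iSup₂ (f := fun e (_ : e ∈ ((↑F : Set (Edge d)))ᶜ) => mFam e) e he
      exact fun s hs => hle _ (MeasurableSpace.measurableSet_comap.mpr
        ⟨s, (Set.to_countable _).measurableSet, rfl⟩)
  have hφpre : MeasurableSet[M] (φ ⁻¹' (Ac (1 : ℕ∞))) := hφm (hAcm 1)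
  set AO : Set (Config d) := cylSet F (fun _ => {true}) with hAO
  have hAOmF : MeasurableSet[⨆ e ∈ (↑F : Set (Edge d)), mFam e] AO := by
    refine measSet_biSup_of_cylAlg ?_ subset_rfl
    refine ⟨{g : {e // e ∈ F} → Bool | ∀ e : {e // e ∈ F}, g e = true}, ?_⟩
    ext ω
    simp only [hAO, cylSet, Set.mem_iInter, Set.mem_preimage, Set.mem_setOf_eq, restr,
      Set.mem_singleton_iff]
    exact ⟨fun h e => h e.1 e.2, fun h e he => h ⟨e, he⟩⟩
  have hmul : P (φ ⁻¹' (Ac (1 : ℕ∞)) ∩ AO) = P (φ ⁻¹' (Ac (1 : ℕ∞))) * P AO := by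
    have hAO' : MeasurableSet[⨆ e ∈ ((↑F : Set (Edge d)))ᶜᶜ, mFam e] AO := by
      rw [compl_compl]
      exact hAOmF
    exact P_indep_inter hindep hφpre hAO'
  have hPAO : P AO = (ENNReal.ofReal p) ^ F.card := by
    rw [hAO, P_cylSet hcoord hindep, Finset.prod_congr rfl fun e _ => bern_true p,
      Finset.prod_const]
  have hPAO0 : P AO ≠ 0 := by
    rw [hPAO]
    refine pow_ne_zero _ ?_
    exact fun h => absurd (ENNReal.ofReal_eq_zero.mp h) (not_le.mpr hppos)
  have hsame : Ac (1 : ℕ∞) ∩ AO = φ ⁻¹' (Ac (1 : ℕ∞)) ∩ AO := by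
    ext ω
    simp only [Set.mem_inter_iff, Set.mem_preimage]
    have : ω ∈ AO → φ ω = ω := by
      intro hωAO
      funext e
      by_cases he : e ∈ F
      · have hωe : ω e = true := by
          have h1 := Set.mem_iInter.mp hωAO e
          have h2 := Set.mem_iInter.mp h1 he
          simpa using h2
        show (if e ∈ F then true else ω e) = ω e
        rw [if_pos he, hωe]
      · show (if e ∈ F then true else ω e) = ω e
        rw [if_neg he]
    constructor
    · rintro ⟨h1, h2⟩
      exact ⟨by rw [this h2]; exact h1, h2⟩
    · rintro ⟨h1, h2⟩
      refine ⟨?_, h2⟩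
      rw [← this h2]
      exact h1
  have hlower : P (Ac (1 : ℕ∞)) ≠ 0 := by
    intro hzero
    have h1 : P (Ac (1 : ℕ∞) ∩ AO) = 0 :=
      measure_mono_null Set.inter_subset_left hzero
    rw [hsame, hmul] at h1
    rcases mul_eq_zero.mp h1 with h2 | h2
    · have h3 : P (Ac ((k : ℕ) : ℕ∞) ∩ En n) = 0 :=
        measure_mono_null hforce h2
      exact hn0 h3
    · exact hPAO0 h2
  -- but P (Ac 1) = 0 since P (Ac k) = 1 and k ≠ 1
  have hP1 : P (Ac (1 : ℕ∞)) = 0 := by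
    have hPkc : P (Ac ((k : ℕ) : ℕ∞))ᶜ = 0 :=
      (prob_compl_eq_zero_iff (hAcm _)).mpr hc
    refine measure_mono_null ?_ hPkc
    intro ω hω1 hωk
    have h1 : (1 : ℕ∞) = ((k : ℕ) : ℕ∞) := by
      rw [← hω1]
      exact hωk
    have : k = 1 := by exact_mod_cast h1.symm
    omega
  exact hlower hP1
end

section
/- (Weyl equidistribution) Let x be an irrational real number and 0 ≤ a ≤ b ≤ 1. Let Sₙ(x) = #{k ∈ {1, …, n} : {kx} ∈ [a, b]}, where {z} denotes the fractional part of z. Then Sₙ(x)/n → b − a as n → ∞. -/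
/-!
By Weyl's criterion, the empirical measures `n⁻¹ ∑_{k ≤ n} δ_{kx}` on `ℝ/ℤ` converge weakly to
Lebesgue measure as soon as their Fourier coefficients do, because trigonometric polynomials
separate points of the circle. For `m ≠ 0` the `m`-th coefficient is a geometric sum in
`z = exp(2πimx) ≠ 1`, bounded by `2 / |z - 1|`, so after division by `n` it tends to `0`.
The arc `[a, b]` is a closed ball of the circle whose boundary is Lebesgue-null, so by the
portmanteau theorem its empirical measure `Sₙ(x)/n` tends to its length `b - a`.
-/

open Filter Topology MeasureTheory Finset Metric
open scoped ENNReal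

lemma tendsto_inv_smul_sum_Icc_pow {𝕜 : Type*} [RCLike 𝕜] {z : 𝕜} (hz : ‖z‖ ≤ 1) (hz₁ : z ≠ 1) :
    Tendsto (fun n : ℕ ↦ (n : ℝ)⁻¹ • ∑ k ∈ Icc 1 n, z ^ k) atTop (𝓝 0) := by
  have h_bound (n : ℕ) : ‖∑ k ∈ Icc 1 n, z ^ k‖ ≤ 2 / ‖z - 1‖ := by
    rw [← Ico_add_one_right_eq_Icc, geom_sum_Ico hz₁ (by omega), norm_div, pow_one]
    gcongr
    calc ‖z ^ (n + 1) - z‖ ≤ ‖z‖ ^ (n + 1) + ‖z‖ := by grw [norm_sub_le, norm_pow]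
      _ ≤ 2 := by nlinarith [pow_le_one₀ (norm_nonneg z) hz (n := n + 1)]
  refine squeeze_zero_norm (fun n ↦ ?_) (tendsto_const_div_atTop_nhds_zero_nat (2 / ‖z - 1‖))
  rw [norm_smul, norm_inv, Real.norm_natCast, inv_mul_eq_div]
  gcongr
  exact h_bound n

section EmpiricalMeasure

variable {X : Type*} [MeasurableSpace X]

noncomputable def empiricalMeasure (u : ℕ → X) (n : ℕ+) : ProbabilityMeasure X :=
  ⟨(n : ℝ≥0∞)⁻¹ • ∑ k ∈ Icc 1 (n : ℕ), Measure.dirac (u k),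
    ⟨by simp [ENNReal.inv_mul_cancel]⟩⟩

open Classical in
lemma empiricalMeasure_apply [MeasurableSingletonClass X] (u : ℕ → X) (n : ℕ+) (s : Set X) :
    (empiricalMeasure u n s : ℝ) = #{k ∈ Icc 1 (n : ℕ) | u k ∈ s} / n := by
  simp [empiricalMeasure, Measure.dirac_apply, Set.indicator_apply, sum_boole, div_eq_inv_mul]

lemma integral_empiricalMeasure [MeasurableSingletonClass X] {E : Type*} [NormedAddCommGroup E]
    [NormedSpace ℝ E] [CompleteSpace E] (u : ℕ → X) (n : ℕ+) (f : X → E) :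
    ∫ y, f y ∂(empiricalMeasure u n : Measure X) = (n : ℝ)⁻¹ • ∑ k ∈ Icc 1 (n : ℕ), f (u k) := by
  rw [empiricalMeasure, ProbabilityMeasure.coe_mk, integral_smul_measure,
    integral_finsetSum_measure fun k _ ↦ integrable_dirac enorm_lt_top]
  simp

end EmpiricalMeasure

namespace AddCircle

variable {T : ℝ}

lemma fourier_nsmul (m : ℤ) (k : ℕ) (y : AddCircle T) : fourier m (k • y) = fourier m y ^ k := by
  rw [fourier_apply, fourier_apply, smul_comm, toCircle_nsmul, Circle.coe_pow]

lemma tendsto_of_tendsto_integral_fourier [Fact (0 < T)] {ι : Type*} {l : Filter ι}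
    {μs : ι → ProbabilityMeasure (AddCircle T)} {μ : ProbabilityMeasure (AddCircle T)}
    (h : ∀ m : ℤ, Tendsto (fun i ↦ ∫ y, fourier m y ∂(μs i : Measure (AddCircle T))) l
      (𝓝 (∫ y, fourier m y ∂(μ : Measure (AddCircle T))))) :
    Tendsto μs l (𝓝 μ) := by
  have integrable (f : C(AddCircle T, ℂ)) (ν : Measure (AddCircle T)) [IsFiniteMeasure ν] :
      Integrable f ν :=
    f.continuous.integrable_of_hasCompactSupport (.of_compactSpace f)
  have h_span (f : C(AddCircle T, ℂ)) (hf : f ∈ Submodule.span ℂ (Set.range fourier)) :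
      Tendsto (fun i ↦ ∫ y, f y ∂(μs i : Measure (AddCircle T))) l
        (𝓝 (∫ y, f y ∂(μ : Measure (AddCircle T)))) := by
    induction hf using Submodule.span_induction with
    | mem f hf => obtain ⟨m, rfl⟩ := hf; exact h m
    | zero => simpa using tendsto_const_nhds
    | add f₁ f₂ _ _ h₁ h₂ =>
      simpa only [ContinuousMap.add_apply, integral_add (integrable f₁ _) (integrable f₂ _)]
        using h₁.add h₂
    | smul c f _ hf =>
      simpa only [ContinuousMap.smul_apply, integral_smul] using hf.const_smul c
  refine ProbabilityMeasure.tendsto_of_tight_of_separatesPoints ℂ .of_compactSpace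
    (A := fourierSubalgebra.comap (BoundedContinuousFunction.toContinuousMapStarₐ ℂ)) ?_
    fun g hg ↦ h_span g.toContinuousMap (fourierSubalgebra_coe ▸ hg)
  intro x y hxy
  obtain ⟨_, ⟨f, hf, rfl⟩, hne⟩ := fourierSubalgebra_separatesPoints hxy
  exact ⟨_, ⟨_, ⟨BoundedContinuousFunction.mkOfCompact f, hf, rfl⟩, rfl⟩, hne⟩

lemma volume_frontier_closedBall [Fact (0 < T)] (x : AddCircle T) (r : ℝ) :
    volume (frontier (closedBall x r)) = 0 := by
  refine measure_mono_null frontier_closedBall_subset_sphere ?_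
  rw [← closedBall_sdiff_ball]
  exact (ae_eq_set.mp closedBall_ae_eq_ball).1

lemma coe_mem_closedBall_iff {y c r : ℝ} :
    (y : AddCircle T) ∈ closedBall (c : AddCircle T) r ↔ ∃ z : ℤ, |y - c - z • T| ≤ r := by
  rw [← Set.mem_preimage, coe_real_preimage_closedBall_eq_iUnion]
  simp [Real.dist_eq, sub_sub]

end AddCircle

namespace UnitAddCircle

instance : IsProbabilityMeasure (volume : Measure UnitAddCircle) := ⟨UnitAddCircle.measure_univ⟩

lemma fourier_coe_ne_one_of_irrational {x : ℝ} (hx : Irrational x) {m : ℤ} (hm : m ≠ 0) :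
    fourier m (x : UnitAddCircle) ≠ 1 := by
  intro h
  rw [fourier_apply, ← Circle.coe_one, Circle.coe_inj, ← AddCircle.toCircle_zero,
    (AddCircle.injective_toCircle one_ne_zero).eq_iff, ← AddCircle.coe_zsmul,
    AddCircle.coe_eq_zero_iff] at h
  obtain ⟨n, hn⟩ := h
  exact (hx.intCast_mul hm).ne_int n (by simpa using hn.symm)

theorem tendsto_empiricalMeasure_of_irrational {x : ℝ} (hx : Irrational x) :
    Tendsto (empiricalMeasure fun k : ℕ ↦ ((k * x : ℝ) : UnitAddCircle)) atTop
      (𝓝 ⟨volume, inferInstance⟩) := by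
  refine AddCircle.tendsto_of_tendsto_integral_fourier fun m ↦ ?_
  simp only [integral_empiricalMeasure, ← nsmul_eq_mul, AddCircle.coe_nsmul,
    AddCircle.fourier_nsmul, ProbabilityMeasure.coe_mk]
  rcases eq_or_ne m 0 with rfl | hm
  · simp
  · rw [integral_eq_zero_of_add_right_eq_neg (fourier_add_half_inv_index hm one_pos)]
    refine PNat.tendsto_comp_val_iff.mpr (tendsto_inv_smul_sum_Icc_pow ?_
      (fourier_coe_ne_one_of_irrational hx hm))
    rw [fourier_apply, Circle.norm_coe]

-- Fails at an integer `y` when `0 < a` and `b = 1`: then `↑y = ↑1` lies in the arc but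
-- `Int.fract y = 0` does not lie in `[a, b]`.
lemma coe_mem_closedBall_iff_fract_mem_Icc {y a b : ℝ} (hy : ∀ z : ℤ, y ≠ z)
    (ha : 0 ≤ a) (hb : b ≤ 1) :
    (y : UnitAddCircle) ∈ closedBall (((a + b) / 2 : ℝ) : UnitAddCircle) ((b - a) / 2) ↔
      Int.fract y ∈ Set.Icc a b := by
  simp only [AddCircle.coe_mem_closedBall_iff, zsmul_eq_mul, mul_one, abs_le, Set.mem_Icc]
  constructor
  · rintro ⟨z, hz₁, hz₂⟩
    have hne : y - z ≠ 1 := fun h ↦ hy (z + 1) (by push_cast; linarith)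
    rw [Int.fract_eq_iff.2 ⟨by linarith, lt_of_le_of_ne (by linarith) hne, z, by ring⟩]
    constructor <;> linarith
  · rintro ⟨h₁, h₂⟩
    refine ⟨⌊y⌋, ?_, ?_⟩ <;> linarith [Int.self_sub_floor y]

end UnitAddCircle

/-- **Weyl's equidistribution theorem.** Let `x` be irrational and
`0 ≤ a ≤ b ≤ 1`. Let `Sₙ(x)` be the number of `k ∈ {1, …, n}` with
`{kx} ∈ [a, b]`, where `{z}` is the fractional part. Then
`Sₙ(x)/n → b − a` as `n → ∞`. -/
theorem weyl_equidistribution (x : ℝ) (hx : Irrational x)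
    (a b : ℝ) (ha : 0 ≤ a) (hab : a ≤ b) (hb : b ≤ 1) :
    Tendsto
      (fun n : ℕ =>
        (((Finset.Icc 1 n).filter
            (fun k : ℕ => a ≤ Int.fract ((k : ℝ) * x) ∧ Int.fract ((k : ℝ) * x) ≤ b)).card : ℝ) / n)
      atTop (𝓝 (b - a)) := by
  set arc := closedBall (((a + b) / 2 : ℝ) : UnitAddCircle) ((b - a) / 2)
  have h_lim := ProbabilityMeasure.tendsto_measure_of_null_frontier_of_tendsto
    (UnitAddCircle.tendsto_empiricalMeasure_of_irrational hx) (E := arc)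
    (by simp [arc, AddCircle.volume_frontier_closedBall])
  have h_arc : (volume arc).toReal = b - a := by
    rw [AddCircle.volume_closedBall, mul_div_cancel₀ _ two_ne_zero, min_eq_right (by linarith),
      ENNReal.toReal_ofReal (by linarith)]
  have h_mem (k : ℕ) (hk : k ≠ 0) :
      ((k * x : ℝ) : UnitAddCircle) ∈ arc ↔
        a ≤ Int.fract ((k : ℝ) * x) ∧ Int.fract ((k : ℝ) * x) ≤ b :=
    UnitAddCircle.coe_mem_closedBall_iff_fract_mem_Icc (hx.natCast_mul hk).ne_int ha hb
  rw [← PNat.tendsto_comp_val_iff]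
  convert NNReal.tendsto_coe.mpr h_lim using 1
  · ext n
    classical
    rw [empiricalMeasure_apply, filter_congr fun k hk ↦ h_mem k (by grind)]
  · exact congrArg 𝓝 h_arc.symm
end

section
/- (Kesten's theorem on bounded remainder, sufficiency direction) Let x be irrational and suppose b − a = {jx} for some positive integer j, with 0 ≤ a < b ≤ 1 and b − a < 1. Then the discrepancy Sₙ(x) − n(b − a) is bounded in n, where Sₙ(x) = #{k ∈ {1,…,n} : {kx} ∈ [a, b)}. -/
/-!
For `0 ≤ a ≤ b ≤ 1` the centred indicator `𝟙[a ≤ {t} < b] - (b - a)` equals `{t - b} - {t - a}`.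
Since `b - a ≡ j x (mod 1)`, we have `{k x - b} = {(k - j) x - a}`, so with `g m = {m x - a}` the
discrepancy is `∑_{k ≤ n} (g (k - j) - g k)`. This sum telescopes with step `j` to a difference of
two sums of `j` values in `[0, 1)`, hence has absolute value at most `j`.
-/

section FloorRing

variable {R : Type*} [CommRing R] [LinearOrder R] [IsStrictOrderedRing R] [FloorRing R]

lemma Int.fract_sub_eq_ite {c : R} (hc₀ : 0 ≤ c) (hc₁ : c ≤ 1) (t : R) :
    Int.fract (t - c) = Int.fract t - c + if Int.fract t < c then 1 else 0 := by
  have h₀ := Int.fract_nonneg t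
  have h₁ := Int.fract_lt_one t
  rw [Int.fract_eq_iff]
  split_ifs with hlt
  · exact ⟨by linarith, by linarith, ⌊t⌋ - 1, by push_cast; rw [← Int.self_sub_fract]; abel⟩
  · have hge := not_lt.mp hlt
    exact ⟨by linarith, by linarith, ⌊t⌋, by rw [← Int.self_sub_fract]; abel⟩

lemma ite_fract_mem_Ico_sub_eq {a b : R} (ha : 0 ≤ a) (hab : a ≤ b) (hb : b ≤ 1) (t : R) :
    (if a ≤ Int.fract t ∧ Int.fract t < b then (1 : R) else 0) - (b - a)
      = Int.fract (t - b) - Int.fract (t - a) := by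
  rw [Int.fract_sub_eq_ite ha (hab.trans hb), Int.fract_sub_eq_ite (ha.trans hab) hb]
  split_ifs <;> grind

end FloorRing

lemma Finset.sum_Icc_one_eq_sum_range {M : Type*} [AddCommMonoid M] (f : ℕ → M) (n : ℕ) :
    ∑ k ∈ Finset.Icc 1 n, f k = ∑ i ∈ Finset.range n, f (i + 1) := by
  induction n with
  | zero => simp
  | succ n ih => rw [Finset.sum_Icc_succ_top (by omega), Finset.sum_range_succ, ih]

lemma Finset.sum_range_sub_add {G : Type*} [AddCommGroup G] (f : ℕ → G) (n j : ℕ) :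
    ∑ i ∈ Finset.range n, (f i - f (i + j)) = ∑ i ∈ Finset.range j, (f i - f (n + i)) := by
  -- split `∑_{i < n + j} f i` at `j` and at `n`
  have h := (Finset.sum_range_add f j n).symm.trans (add_comm j n ▸ Finset.sum_range_add f n j)
  simp only [Finset.sum_sub_distrib, add_comm _ j]
  rw [sub_eq_sub_iff_add_eq_add]
  exact h.symm

lemma abs_sum_range_sub_add_le {f : ℕ → ℝ} (hf₀ : ∀ i, 0 ≤ f i) (hf₁ : ∀ i, f i ≤ 1) (n j : ℕ) :
    |∑ i ∈ Finset.range n, (f i - f (i + j))| ≤ j := by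
  rw [Finset.sum_range_sub_add]
  calc |∑ i ∈ Finset.range j, (f i - f (n + i))|
      ≤ ∑ i ∈ Finset.range j, |f i - f (n + i)| := Finset.abs_sum_le_sum_abs _ _
    _ ≤ ∑ _i ∈ Finset.range j, (1 : ℝ) :=
        Finset.sum_le_sum fun i _ => abs_sub_le_of_nonneg_of_le (hf₀ _) (hf₁ _) (hf₀ _) (hf₁ _)
    _ = j := by simp

theorem kesten_bounded_remainder_general (x : ℝ)
    (a b : ℝ) (ha : 0 ≤ a) (hab : a < b) (hb : b ≤ 1)
    (j : ℕ) (hba : b - a = Int.fract ((j : ℝ) * x)) :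
    ∃ C : ℝ, ∀ n : ℕ,
      |(((Finset.Icc 1 n).filter
            (fun k : ℕ => a ≤ Int.fract ((k : ℝ) * x) ∧ Int.fract ((k : ℝ) * x) < b)).card : ℝ)
          - (n : ℝ) * (b - a)| ≤ C := by
  refine ⟨j, fun n => ?_⟩
  set g : ℕ → ℝ := fun i => Int.fract (((i : ℝ) + 1 - j) * x - a)
  have hterm (i : ℕ) : (if a ≤ Int.fract (((i + 1 : ℕ) : ℝ) * x) ∧
      Int.fract (((i + 1 : ℕ) : ℝ) * x) < b then (1 : ℝ) else 0) - (b - a) = g i - g (i + j) := by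
    rw [ite_fract_mem_Ico_sub_eq ha hab.le hb]
    congr 1
    · rw [Int.fract] at hba
      rw [show ((i + 1 : ℕ) : ℝ) * x - b = ((i : ℝ) + 1 - j) * x - a + ⌊(j : ℝ) * x⌋ by
        push_cast; linear_combination -hba]
      exact Int.fract_add_intCast _ _
    · simp only [g]; push_cast; ring_nf
  have hsum : (((Finset.Icc 1 n).filter
            (fun k : ℕ => a ≤ Int.fract ((k : ℝ) * x) ∧ Int.fract ((k : ℝ) * x) < b)).card : ℝ)
          - (n : ℝ) * (b - a) = ∑ i ∈ Finset.range n, (g i - g (i + j)) := by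
    rw [Finset.natCast_card_filter, Finset.sum_Icc_one_eq_sum_range,
      ← Finset.sum_congr rfl fun i _ => hterm i, Finset.sum_sub_distrib]
    simp [mul_sub]
  rw [hsum]
  exact abs_sum_range_sub_add_le (fun _ => Int.fract_nonneg _) (fun _ => (Int.fract_lt_one _).le) n j

/-- **Kesten's bounded remainder theorem (sufficiency direction).** Let `x` be
irrational, `0 ≤ a < b ≤ 1` with `b − a < 1`, and suppose `b − a = {jx}` for
some positive integer `j`. Then the discrepancy `Sₙ(x) − n(b − a)` is bounded
in `n`, where `Sₙ(x) = #{k ∈ {1,…,n} : {kx} ∈ [a, b)}`. -/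
theorem kesten_bounded_remainder (x : ℝ) (hx : Irrational x)
    (a b : ℝ) (ha : 0 ≤ a) (hab : a < b) (hb : b ≤ 1) (hlen : b - a < 1)
    (j : ℕ) (hj : 0 < j) (hba : b - a = Int.fract ((j : ℝ) * x)) :
    ∃ C : ℝ, ∀ n : ℕ,
      |(((Finset.Icc 1 n).filter
            (fun k : ℕ => a ≤ Int.fract ((k : ℝ) * x) ∧ Int.fract ((k : ℝ) * x) < b)).card : ℝ)
          - (n : ℝ) * (b - a)| ≤ C :=
  kesten_bounded_remainder_general x a b ha hab hb j hba
end
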